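/- arXiv:2008.04140 — 5 statements merged into one kernel-verified Lean document; each statement's English description precedes it below -/
import Mathlib

section
/- Assume the continuous gap conditions: λ_{m−1} < λ_m if m > 1, and λ_M < λ_{M+1}; assume the non-orthogonality condition, and set c̄_h := max{(λ_{Mh}/λ_1 − 1)², 1}. Then the cluster residual norm is bounded above by the density matrix errors: N_0² ≤ c̄_h ‖A^{1/2}(γ⁰ − γ_h)‖_{S2}² + (3(λ_M − λ_m)²/(4λ_m)) ‖γ⁰ − γ_h‖_{S2}⁴ + (3/λ_m) (1 + (1/4)‖γ⁰ − γ_h‖_{S2}⁴) · [ 2 (1 + (λ_M/(4λ_m))‖γ⁰ − γ_h‖_{S2}²)² ‖A^{1/2}(γ⁰ − γ_h)‖_{S2}⁴ + 2 λ_M² ‖γ⁰ − γ_h‖_{S2}⁴ ]. -/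
open scoped RealInnerProductSpace

private lemma abs_mul_le_half_sq (x y : ℝ) : |x * y| ≤ (x ^ 2 + y ^ 2) / 2 := by
  rw [abs_mul]
  nlinarith [sq_nonneg (|x| - |y|), sq_abs x, sq_abs y, abs_nonneg x, abs_nonneg y]

private lemma summable_mul_of_sq {f g : ℕ → ℝ} (hf : Summable fun k => f k ^ 2)
    (hg : Summable fun k => g k ^ 2) : Summable fun k => f k * g k := by
  refine Summable.of_abs (Summable.of_nonneg_of_le (fun k => abs_nonneg _)
    (fun k => abs_mul_le_half_sq _ _) ?_)
  exact (hf.add hg).div_const 2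

private lemma tsum_cs {f g : ℕ → ℝ} (hf : Summable fun k => f k ^ 2)
    (hg : Summable fun k => g k ^ 2) :
    (∑' k, f k * g k) ^ 2 ≤ (∑' k, f k ^ 2) * (∑' k, g k ^ 2) := by
  have hfg := summable_mul_of_sq hf hg
  have h1 : ∀ s : Finset ℕ, (∑ k ∈ s, f k * g k) ^ 2 ≤ (∑' k, f k ^ 2) * (∑' k, g k ^ 2) := by
    intro s
    calc (∑ k ∈ s, f k * g k) ^ 2 ≤ (∑ k ∈ s, f k ^ 2) * (∑ k ∈ s, g k ^ 2) :=
          Finset.sum_mul_sq_le_sq_mul_sq s f g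
    _ ≤ _ := by
        apply mul_le_mul (Summable.sum_le_tsum s (fun i _ => sq_nonneg _) hf)
          (Summable.sum_le_tsum s (fun i _ => sq_nonneg _) hg)
          (Finset.sum_nonneg fun i _ => sq_nonneg _) (tsum_nonneg fun i => sq_nonneg _)
  have h2 : Filter.Tendsto (fun s : Finset ℕ => (∑ k ∈ s, f k * g k) ^ 2)
      Filter.atTop (nhds ((∑' k, f k * g k) ^ 2)) :=
    ((continuous_pow 2).tendsto _).comp hfg.hasSum
  exact le_of_tendsto h2 (Filter.Eventually.of_forall h1)

private lemma finset_minkowski {ι : Type*} (s : Finset ι) (u v : ι → ℝ) :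
    ∑ i ∈ s, (u i + v i) ^ 2 ≤
      (Real.sqrt (∑ i ∈ s, u i ^ 2) + Real.sqrt (∑ i ∈ s, v i ^ 2)) ^ 2 := by
  have hu : (0:ℝ) ≤ ∑ i ∈ s, u i ^ 2 := Finset.sum_nonneg fun i _ => sq_nonneg _
  have hv : (0:ℝ) ≤ ∑ i ∈ s, v i ^ 2 := Finset.sum_nonneg fun i _ => sq_nonneg _
  have hcs : (∑ i ∈ s, u i * v i) ^ 2 ≤ (∑ i ∈ s, u i ^ 2) * (∑ i ∈ s, v i ^ 2) :=
    Finset.sum_mul_sq_le_sq_mul_sq s u v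
  have hcs' : ∑ i ∈ s, u i * v i ≤ Real.sqrt (∑ i ∈ s, u i ^ 2) * Real.sqrt (∑ i ∈ s, v i ^ 2) := by
    rcases le_or_gt (∑ i ∈ s, u i * v i) 0 with h | h
    · exact h.trans (mul_nonneg (Real.sqrt_nonneg _) (Real.sqrt_nonneg _))
    · rw [← Real.sqrt_mul hu]
      exact (Real.le_sqrt h.le (mul_nonneg hu hv)).2 hcs
  have e1 := Real.sq_sqrt hu
  have e2 := Real.sq_sqrt hv
  have hexp : ∑ i ∈ s, (u i + v i) ^ 2
      = (∑ i ∈ s, u i ^ 2) + 2 * (∑ i ∈ s, u i * v i) + ∑ i ∈ s, v i ^ 2 := by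
    rw [Finset.mul_sum, ← Finset.sum_add_distrib, ← Finset.sum_add_distrib]
    exact Finset.sum_congr rfl fun i _ => by ring
  nlinarith [hcs', e1, e2]

private lemma sqrt_le_of_le_sq {A B : ℝ} (hB : 0 ≤ B) (h : A ≤ B ^ 2) : Real.sqrt A ≤ B := by
  calc Real.sqrt A ≤ Real.sqrt (B ^ 2) := Real.sqrt_le_sqrt h
  _ = B := Real.sqrt_sq hB


set_option maxHeartbeats 4000000 in
/-- 0-based indexing, so the paper's first eigenvalue λ₁ is `lam 0`:
lower bound for the density matrix error (efficiency of the residual). -/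
theorem stmt_15
    {H : Type*} [NormedAddCommGroup H] [InnerProductSpace ℝ H] [CompleteSpace H]
    (b : HilbertBasis ℕ ℝ H)
    (lam : ℕ → ℝ) (hlam_pos : ∀ k, 0 < lam k) (hlam_mono : Monotone lam)
    (hlam_tendsto : Filter.Tendsto lam Filter.atTop Filter.atTop)
    (m M : ℕ) (hmM : m ≤ M)
    (hgap_low : 0 < m → lam (m - 1) < lam m)
    (hgap_up : lam M < lam (M + 1))
    (Vh : Submodule ℝ H) (hVh_fin : FiniteDimensional ℝ Vh)
    (hVh_dom : ∀ v ∈ Vh, Summable fun k => lam k * ⟪v, b k⟫ ^ 2)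
    (uh : ℕ → H) (lamh : ℕ → ℝ)
    (huh_mem : ∀ i ∈ Finset.Icc m M, uh i ∈ Vh)
    (huh_orth : ∀ i ∈ Finset.Icc m M, ∀ j ∈ Finset.Icc m M,
      ⟪uh i, uh j⟫ = if i = j then 1 else 0)
    (hlamh_mono : ∀ i ∈ Finset.Icc m M, ∀ j ∈ Finset.Icc m M, i ≤ j → lamh i ≤ lamh j)
    (heig_h : ∀ i ∈ Finset.Icc m M, ∀ v ∈ Vh,
      (∑' k, lam k * (⟪uh i, b k⟫ * ⟪v, b k⟫)) = lamh i * ⟪uh i, v⟫)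
    (g0 gh : H → H)
    (hg0 : ∀ w, g0 w = ∑ i ∈ Finset.Icc m M, ⟪w, b i⟫ • b i)
    (hgh : ∀ w, gh w = ∑ i ∈ Finset.Icc m M, ⟪w, uh i⟫ • uh i)
    (hnonorth : ∀ v ∈ Submodule.span ℝ ((fun i => (b i : H)) '' Set.Icc m M),
      v ≠ 0 → gh v ≠ 0)
    (cbar : ℝ) (hcbar : cbar = max ((lamh M / lam 0 - 1) ^ 2) 1)
    (ESq : ℝ)
    (hESq : ESq = ∑' k, ∑' j, lam j * ⟪g0 (b k) - gh (b k), b j⟫ ^ 2)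
    (L2sq : ℝ) (hL2sq : L2sq = ∑' k, ‖g0 (b k) - gh (b k)‖ ^ 2)
    (N0sq : ℝ)
    (hN0sq : N0sq = ∑' k, ∑ i ∈ Finset.Icc m M,
      (lam k)⁻¹ * ((lam k - lamh i) ^ 2 * ⟪uh i, b k⟫ ^ 2))
    :
    N0sq ≤ cbar * ESq + 3 * (lam M - lam m) ^ 2 / (4 * lam m) * L2sq ^ 2
      + 3 / lam m * (1 + 1 / 4 * L2sq ^ 2) *
          (2 * (1 + lam M / (4 * lam m) * L2sq) ^ 2 * ESq ^ 2
            + 2 * lam M ^ 2 * L2sq ^ 2) := by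
  classical
  set J := Finset.Icc m M with hJdef
  have hMJ : M ∈ J := by simp [hJdef, hmM]
  -- basic orthonormality of b
  have hbON : ∀ k l : ℕ, ⟪b k, b l⟫ = if k = l then (1:ℝ) else 0 := by
    have h := b.orthonormal
    rw [orthonormal_iff_ite] at h
    exact h
  -- Parseval
  have hPar : ∀ x y : H, HasSum (fun k => ⟪x, b k⟫ * ⟪y, b k⟫) ⟪x, y⟫ := by
    intro x y
    have h := b.hasSum_inner_mul_inner x y
    have h2 : (fun k => ⟪x, b k⟫ * ⟪y, b k⟫) = fun k => ⟪x, b k⟫ * ⟪b k, y⟫ := by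
      funext k; rw [real_inner_comm y]
    rw [h2]; exact h
  have hsum_cc : ∀ x : H, Summable fun k => ⟪x, b k⟫ ^ 2 := by
    intro x
    have := (hPar x x).summable
    have h2 : (fun k => ⟪x, b k⟫ ^ 2) = fun k => ⟪x, b k⟫ * ⟪x, b k⟫ := by
      funext k; rw [pow_two]
    rw [h2]; exact this
  have htsum_cc : ∀ x : H, ∑' k, ⟪x, b k⟫ ^ 2 = ‖x‖ ^ 2 := by
    intro x
    have h1 := (hPar x x).tsum_eq
    rw [real_inner_self_eq_norm_sq] at h1
    have h2 : (fun k => ⟪x, b k⟫ ^ 2) = fun k => ⟪x, b k⟫ * ⟪x, b k⟫ := by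
      funext k; rw [pow_two]
    rw [h2]; exact h1
  -- products of coefficients
  have hccT : ∀ i ∈ J, ∀ j ∈ J, ∑' k, ⟪uh i, b k⟫ * ⟪uh j, b k⟫ = if i = j then (1:ℝ) else 0 := by
    intro i hi j hj
    rw [(hPar (uh i) (uh j)).tsum_eq, huh_orth i hi j hj]
  have hccS : ∀ i j : ℕ, Summable fun k => ⟪uh i, b k⟫ * ⟪uh j, b k⟫ :=
    fun i j => (hPar (uh i) (uh j)).summable
  have hlcS : ∀ i ∈ J, Summable fun k => lam k * (⟪uh i, b k⟫ * ⟪uh i, b k⟫) := by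
    intro i hi
    have h := hVh_dom (uh i) (huh_mem i hi)
    have h2 : (fun k => lam k * (⟪uh i, b k⟫ * ⟪uh i, b k⟫))
        = fun k => lam k * ⟪uh i, b k⟫ ^ 2 := by
      funext k; rw [pow_two]
    rw [h2]; exact h
  have hlccS : ∀ i ∈ J, ∀ j ∈ J, Summable fun k => lam k * (⟪uh i, b k⟫ * ⟪uh j, b k⟫) := by
    intro i hi j hj
    have hb : ∀ k, |lam k * (⟪uh i, b k⟫ * ⟪uh j, b k⟫)| ≤
        (lam k * (⟪uh i, b k⟫ * ⟪uh i, b k⟫) + lam k * (⟪uh j, b k⟫ * ⟪uh j, b k⟫)) / 2 := by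
      intro k
      rw [abs_mul, abs_of_pos (hlam_pos k)]
      linarith only
        [mul_le_mul_of_nonneg_left (abs_mul_le_half_sq ⟪uh i, b k⟫ ⟪uh j, b k⟫) (hlam_pos k).le]
    exact Summable.of_abs (Summable.of_nonneg_of_le (fun k => abs_nonneg _) hb
      (((hlcS i hi).add (hlcS j hj)).div_const 2))
  have hlccT : ∀ i ∈ J, ∀ j ∈ J,
      ∑' k, lam k * (⟪uh i, b k⟫ * ⟪uh j, b k⟫) = lamh i * (if i = j then 1 else 0) := by
    intro i hi j hj
    rw [heig_h i hi (uh j) (huh_mem j hj), huh_orth i hi j hj]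
  have hlamh_val : ∀ i ∈ J, ∑' k, lam k * (⟪uh i, b k⟫ * ⟪uh i, b k⟫) = lamh i := by
    intro i hi
    rw [hlccT i hi i hi, if_pos rfl, mul_one]
  -- mask helper
  have hmask : ∀ f : ℕ → ℝ, Summable f →
      Summable (fun k => if k ∈ J then (0:ℝ) else f k) ∧
      ∑' k, (if k ∈ J then (0:ℝ) else f k) = (∑' k, f k) - ∑ k ∈ J, f k := by
    intro f hf
    have hgz : ∀ k ∉ J, (if k ∈ J then f k else 0) = 0 := fun k hk => if_neg hk
    have hg : Summable fun k => if k ∈ J then f k else 0 := summable_of_ne_finset_zero hgz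
    have heq : (fun k => if k ∈ J then (0:ℝ) else f k)
        = fun k => f k - (if k ∈ J then f k else 0) := by
      funext k; by_cases hk : k ∈ J <;> simp [hk]
    constructor
    · rw [heq]; exact hf.sub hg
    · rw [heq, Summable.tsum_sub hf hg, tsum_eq_sum hgz]
      congr 1
      exact Finset.sum_congr rfl fun k hk => if_pos hk
  -- orthonormal family and Bessel
  have hON : Orthonormal ℝ (fun i : {x // x ∈ J} => uh i) := by
    rw [orthonormal_iff_ite]
    intro i j
    rw [huh_orth i i.2 j j.2]
    by_cases h : (i : ℕ) = (j : ℕ)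
    · rw [if_pos h, if_pos (Subtype.ext h)]
    · rw [if_neg h, if_neg (fun hh => h (by rw [hh]))]
  have hBes : ∀ x : H, ∑ i ∈ J, ⟪uh i, x⟫ ^ 2 ≤ ‖x‖ ^ 2 := by
    intro x
    have h := hON.sum_inner_products_le x (s := Finset.univ)
    have h2 : ∑ i ∈ J, ‖⟪uh i, x⟫‖ ^ 2 ≤ ‖x‖ ^ 2 := by
      rw [← Finset.sum_coe_sort J (fun i => ‖⟪uh i, x⟫‖ ^ 2)]
      exact h
    calc ∑ i ∈ J, ⟪uh i, x⟫ ^ 2 = ∑ i ∈ J, ‖⟪uh i, x⟫‖ ^ 2 :=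
          Finset.sum_congr rfl fun i _ => by rw [Real.norm_eq_abs, sq_abs]
    _ ≤ ‖x‖ ^ 2 := h2
  -- collapse helper
  have hcollapse : ∀ (f : ℕ → ℝ) (i : ℕ), i ∈ J →
      ∑ l ∈ J, f l * (if i = l then (1:ℝ) else 0) = f i := by
    intro f i hi
    rw [Finset.sum_congr rfl fun l _ => by rw [mul_ite, mul_one, mul_zero]]
    rw [Finset.sum_ite_eq, if_pos hi]
  -- inner products with finite sums in uh
  have hinner_usum : ∀ (v : ℕ → ℝ) (i : ℕ), i ∈ J → ⟪uh i, ∑ j ∈ J, v j • uh j⟫ = v i := by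
    intro v i hi
    rw [inner_sum]
    rw [Finset.sum_congr rfl fun j hj => by
      rw [real_inner_smul_right, huh_orth i hi j hj]]
    exact hcollapse v i hi
  -- contraction lemmas
  have hCT : ∀ v : ℕ → ℝ, ∑ k ∈ J, (∑ i ∈ J, v i * ⟪uh i, b k⟫) ^ 2 ≤ ∑ i ∈ J, v i ^ 2 := by
    intro v
    have hco : ∀ k, ⟪∑ i ∈ J, v i • uh i, b k⟫ = ∑ i ∈ J, v i * ⟪uh i, b k⟫ := by
      intro k; rw [sum_inner]
      exact Finset.sum_congr rfl fun i _ => real_inner_smul_left _ _ _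
    calc ∑ k ∈ J, (∑ i ∈ J, v i * ⟪uh i, b k⟫) ^ 2
        = ∑ k ∈ J, ⟪∑ i ∈ J, v i • uh i, b k⟫ ^ 2 :=
          Finset.sum_congr rfl fun k _ => by rw [hco k]
      _ ≤ ∑' k, ⟪∑ i ∈ J, v i • uh i, b k⟫ ^ 2 :=
          Summable.sum_le_tsum J (fun k _ => sq_nonneg _) (hsum_cc _)
      _ = ‖∑ i ∈ J, v i • uh i‖ ^ 2 := htsum_cc _
      _ = ∑ i ∈ J, v i ^ 2 := by
          rw [← real_inner_self_eq_norm_sq, sum_inner]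
          refine Finset.sum_congr rfl fun i hi => ?_
          rw [real_inner_smul_left, hinner_usum v i hi, pow_two]
  have hCL : ∀ w : ℕ → ℝ, ∑ i ∈ J, (∑ k ∈ J, w k * ⟪uh i, b k⟫) ^ 2 ≤ ∑ k ∈ J, w k ^ 2 := by
    intro w
    have hco : ∀ i, ⟪uh i, ∑ k ∈ J, w k • b k⟫ = ∑ k ∈ J, w k * ⟪uh i, b k⟫ := by
      intro i; rw [inner_sum]
      exact Finset.sum_congr rfl fun k _ => real_inner_smul_right _ _ _
    have hnx : ‖∑ k ∈ J, w k • b k‖ ^ 2 = ∑ k ∈ J, w k ^ 2 := by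
      rw [← real_inner_self_eq_norm_sq, sum_inner]
      refine Finset.sum_congr rfl fun k hk => ?_
      rw [real_inner_smul_left, inner_sum]
      rw [Finset.sum_congr rfl fun l hl => by rw [real_inner_smul_right, hbON k l]]
      rw [hcollapse w k hk, pow_two]
    calc ∑ i ∈ J, (∑ k ∈ J, w k * ⟪uh i, b k⟫) ^ 2
        = ∑ i ∈ J, ⟪uh i, ∑ k ∈ J, w k • b k⟫ ^ 2 :=
          Finset.sum_congr rfl fun i _ => by rw [hco i]
      _ ≤ ‖∑ k ∈ J, w k • b k‖ ^ 2 := hBes _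
      _ = ∑ k ∈ J, w k ^ 2 := hnx
  -- description of g0, gh on basis vectors
  have hg0b : ∀ k, g0 (b k) = if k ∈ J then b k else 0 := by
    intro k
    rw [hg0]
    rw [Finset.sum_congr rfl fun l (_ : l ∈ J) => by rw [hbON k l]]
    simp [ite_smul, Finset.sum_ite_eq]
  have hghb : ∀ k, gh (b k) = ∑ i ∈ J, ⟪uh i, b k⟫ • uh i := by
    intro k; rw [hgh]
    exact Finset.sum_congr rfl fun i _ => by rw [real_inner_comm (uh i) (b k)]
  have hghbV : ∀ k, gh (b k) ∈ Vh := by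
    intro k; rw [hghb]
    exact Submodule.sum_mem _ fun i hi => Submodule.smul_mem _ _ (huh_mem i hi)
  have hghb_coord : ∀ k j, ⟪gh (b k), b j⟫ = ∑ i ∈ J, ⟪uh i, b k⟫ * ⟪uh i, b j⟫ := by
    intro k j; rw [hghb, sum_inner]
    exact Finset.sum_congr rfl fun i _ => by rw [real_inner_smul_left]
  have hg0b_coord : ∀ k j, ⟪g0 (b k), b j⟫
      = if k ∈ J then (if k = j then (1:ℝ) else 0) else 0 := by
    intro k j; rw [hg0b]
    by_cases hk : k ∈ J
    · rw [if_pos hk, if_pos hk, hbON]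
    · rw [if_neg hk, if_neg hk, inner_zero_left]
  have hDco : ∀ k j, ⟪g0 (b k) - gh (b k), b j⟫
      = (if k ∈ J then (if k = j then (1:ℝ) else 0) else 0)
        - ∑ i ∈ J, ⟪uh i, b k⟫ * ⟪uh i, b j⟫ := by
    intro k j; rw [inner_sub_left, hg0b_coord, hghb_coord]
  have hDsym : ∀ k j, ⟪g0 (b k) - gh (b k), b j⟫ = ⟪g0 (b j) - gh (b j), b k⟫ := by
    intro k j; rw [hDco, hDco]
    congr 1
    · by_cases h : k = j
      · subst h; rfl
      · simp [h, Ne.symm h]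
    · exact Finset.sum_congr rfl fun i _ => mul_comm _ _
  have hugh : ∀ i ∈ J, ∀ j, ⟪uh i, gh (b j)⟫ = ⟪uh i, b j⟫ := by
    intro i hi j
    rw [hghb, inner_sum]
    rw [Finset.sum_congr rfl fun l hl => by
      rw [real_inner_smul_right, huh_orth i hi l hl]]
    exact hcollapse (fun l => ⟪uh l, b j⟫) i hi
  have huD : ∀ i ∈ J, ∀ j, ⟪uh i, g0 (b j) - gh (b j)⟫
      = if j ∈ J then 0 else -⟪uh i, b j⟫ := by
    intro i hi j
    rw [inner_sub_right, hugh i hi j, hg0b]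
    by_cases hj : j ∈ J
    · rw [if_pos hj, if_pos hj]; ring
    · rw [if_neg hj, if_neg hj, inner_zero_right]; ring
  -- the matrices
  obtain ⟨S2, hS2⟩ : ∃ S2 : ℕ → ℕ → ℝ,
      S2 = fun i j => ∑ k ∈ J, ⟪uh i, b k⟫ * ⟪uh j, b k⟫ := ⟨_, rfl⟩
  obtain ⟨SA, hSA⟩ : ∃ SA : ℕ → ℕ → ℝ,
      SA = fun i j => ∑ k ∈ J, lam k * (⟪uh i, b k⟫ * ⟪uh j, b k⟫) := ⟨_, rfl⟩
  obtain ⟨Gm, hGm⟩ : ∃ Gm : ℕ → ℕ → ℝ,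
      Gm = fun i j => (if i = j then (1:ℝ) else 0) - S2 i j := ⟨_, rfl⟩
  obtain ⟨Rm, hRm⟩ : ∃ Rm : ℕ → ℕ → ℝ,
      Rm = fun i j => (if i = j then lamh i else 0) - SA i j := ⟨_, rfl⟩
  obtain ⟨Gt, hGt⟩ : ∃ Gt : ℕ → ℕ → ℝ,
      Gt = fun k l => (if k = l then (1:ℝ) else 0) - ∑ i ∈ J, ⟪uh i, b k⟫ * ⟪uh i, b l⟫ :=
    ⟨_, rfl⟩
  -- mask representation of Rm
  have hRrep : ∀ i ∈ J, ∀ j ∈ J, Rm i j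
      = ∑' k, (if k ∈ J then (0:ℝ) else lam k * (⟪uh i, b k⟫ * ⟪uh j, b k⟫)) := by
    intro i hi j hj
    rw [(hmask _ (hlccS i hi j hj)).2, hlccT i hi j hj]
    simp only [hRm, hSA]
    by_cases h : i = j <;> simp [h]
  have hRdiag : ∀ i ∈ J, 0 ≤ Rm i i := by
    intro i hi
    rw [hRrep i hi i hi]
    refine tsum_nonneg fun k => ?_
    by_cases hk : k ∈ J
    · simp [hk]
    · simp only [if_neg hk]
      exact mul_nonneg (hlam_pos k).le (mul_self_nonneg _)
  -- inner product representations of Gm and Gt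
  have hg0coord : ∀ (x : H) (k : ℕ), k ∈ J → ⟪b k, g0 x⟫ = ⟪x, b k⟫ := by
    intro x k hk
    rw [hg0, inner_sum]
    rw [Finset.sum_congr rfl fun l _ => by rw [real_inner_smul_right, hbON k l]]
    exact hcollapse (fun l => ⟪x, b l⟫) k hk
  have hGm_inner : ∀ i ∈ J, ∀ j ∈ J, Gm i j = ⟪uh i - g0 (uh i), uh j - g0 (uh j)⟫ := by
    intro i hi j hj
    have e1 : ⟪uh i, g0 (uh j)⟫ = S2 i j := by
      simp only [hS2]
      rw [hg0, inner_sum]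
      exact Finset.sum_congr rfl fun k _ => by rw [real_inner_smul_right, mul_comm]
    have e2 : ⟪g0 (uh i), uh j⟫ = S2 i j := by
      simp only [hS2]
      rw [hg0, sum_inner]
      exact Finset.sum_congr rfl fun k _ => by
        rw [real_inner_smul_left, real_inner_comm (uh j) (b k)]
    have e3 : ⟪g0 (uh i), g0 (uh j)⟫ = S2 i j := by
      simp only [hS2]
      rw [hg0 (uh i), sum_inner]
      refine Finset.sum_congr rfl fun k hk => ?_
      rw [real_inner_smul_left, hg0coord (uh j) k hk]
    rw [inner_sub_left, inner_sub_right, inner_sub_right, huh_orth i hi j hj, e1, e2, e3]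
    simp only [hGm]
    ring
  have hGt_inner : ∀ k l, Gt k l = ⟪b k - gh (b k), b l - gh (b l)⟫ := by
    intro k l
    have h1 : ⟪b k, gh (b l)⟫ = ∑ i ∈ J, ⟪uh i, b k⟫ * ⟪uh i, b l⟫ := by
      rw [hghb, inner_sum]
      exact Finset.sum_congr rfl fun i _ => by
        rw [real_inner_smul_right, real_inner_comm (uh i) (b k)]; ring
    have h3 : ⟪gh (b k), gh (b l)⟫ = ∑ i ∈ J, ⟪uh i, b k⟫ * ⟪uh i, b l⟫ := by
      rw [hghb k, sum_inner]
      refine Finset.sum_congr rfl fun i hi => ?_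
      rw [real_inner_smul_left, hugh i hi l]
    rw [inner_sub_left, inner_sub_right, inner_sub_right, hbON k l, h1, hghb_coord k l, h3]
    simp only [hGt]
    ring
  have hGdiag : ∀ i ∈ J, 0 ≤ Gm i i := fun i hi => by
    rw [hGm_inner i hi i hi]; exact real_inner_self_nonneg
  have hGtdiag : ∀ k, 0 ≤ Gt k k := fun k => by
    rw [hGt_inner k k]; exact real_inner_self_nonneg
  obtain ⟨gTr, hgTr⟩ : ∃ x : ℝ, x = ∑ i ∈ J, Gm i i := ⟨_, rfl⟩
  obtain ⟨Ftr, hFtr⟩ : ∃ x : ℝ, x = ∑ i ∈ J, Rm i i := ⟨_, rfl⟩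
  have hgTr0 : 0 ≤ gTr := hgTr ▸ Finset.sum_nonneg fun i hi => hGdiag i hi
  have hFtr0 : 0 ≤ Ftr := hFtr ▸ Finset.sum_nonneg fun i hi => hRdiag i hi
  have hTrGt : ∑ k ∈ J, Gt k k = gTr := by
    rw [hgTr]
    simp only [hGt, hGm, hS2, if_pos rfl]
    rw [Finset.sum_sub_distrib, Finset.sum_sub_distrib, Finset.sum_comm]
  -- Cauchy-Schwarz for the matrices
  have hGcs : ∀ i ∈ J, ∀ j ∈ J, Gm i j ^ 2 ≤ Gm i i * Gm j j := by
    intro i hi j hj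
    rw [hGm_inner i hi j hj, hGm_inner i hi i hi, hGm_inner j hj j hj, pow_two]
    exact real_inner_mul_inner_self_le _ _
  have hGtcs : ∀ k ∈ J, ∀ l ∈ J, Gt k l ^ 2 ≤ Gt k k * Gt l l := by
    intro k _ l _
    rw [hGt_inner k l, hGt_inner k k, hGt_inner l l, pow_two]
    exact real_inner_mul_inner_self_le _ _
  have hfeq : ∀ i' j' : ℕ, ∀ k : ℕ,
      (if k ∈ J then (0:ℝ) else Real.sqrt (lam k) * ⟪uh i', b k⟫)
        * (if k ∈ J then (0:ℝ) else Real.sqrt (lam k) * ⟪uh j', b k⟫)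
      = if k ∈ J then (0:ℝ) else lam k * (⟪uh i', b k⟫ * ⟪uh j', b k⟫) := by
    intro i' j' k
    by_cases hk : k ∈ J
    · simp [hk]
    · simp only [if_neg hk]
      rw [show Real.sqrt (lam k) * ⟪uh i', b k⟫ * (Real.sqrt (lam k) * ⟪uh j', b k⟫)
        = Real.sqrt (lam k) * Real.sqrt (lam k) * (⟪uh i', b k⟫ * ⟪uh j', b k⟫) by ring,
        Real.mul_self_sqrt (hlam_pos k).le]
  have hSf : ∀ i' ∈ J, Summable
      (fun k => (if k ∈ J then (0:ℝ) else Real.sqrt (lam k) * ⟪uh i', b k⟫) ^ 2) := by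
    intro i' hi'
    have h0 := (hmask _ (hlccS i' hi' i' hi')).1
    have heq : (fun k => (if k ∈ J then (0:ℝ) else Real.sqrt (lam k) * ⟪uh i', b k⟫) ^ 2)
        = fun k => if k ∈ J then (0:ℝ) else lam k * (⟪uh i', b k⟫ * ⟪uh i', b k⟫) := by
      funext k; rw [pow_two]; exact hfeq i' i' k
    rw [heq]; exact h0
  have hRcs : ∀ i ∈ J, ∀ j ∈ J, Rm i j ^ 2 ≤ Rm i i * Rm j j := by
    intro i hi j hj
    have key := tsum_cs (hSf i hi) (hSf j hj)
    have h1 : ∑' k, ((if k ∈ J then (0:ℝ) else Real.sqrt (lam k) * ⟪uh i, b k⟫)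
        * (if k ∈ J then (0:ℝ) else Real.sqrt (lam k) * ⟪uh j, b k⟫)) = Rm i j := by
      rw [tsum_congr (hfeq i j)]
      exact (hRrep i hi j hj).symm
    have h2 : ∀ i' ∈ J, ∑' k,
        ((if k ∈ J then (0:ℝ) else Real.sqrt (lam k) * ⟪uh i', b k⟫) ^ 2) = Rm i' i' := by
      intro i' hi'
      have heq : (fun k => (if k ∈ J then (0:ℝ) else Real.sqrt (lam k) * ⟪uh i', b k⟫) ^ 2)
          = fun k => if k ∈ J then (0:ℝ) else lam k * (⟪uh i', b k⟫ * ⟪uh i', b k⟫) := by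
        funext k; rw [pow_two]; exact hfeq i' i' k
      rw [heq]
      exact (hRrep i' hi' i' hi').symm
    rw [h1, h2 i hi, h2 j hj] at key
    exact key
  -- eigenvalue bounds
  have hl0 : 0 < lam 0 := hlam_pos 0
  have hlamh_ge : ∀ i ∈ J, lam 0 ≤ lamh i := by
    intro i hi
    have h1 : ∑' k, lam 0 * (⟪uh i, b k⟫ * ⟪uh i, b k⟫)
        ≤ ∑' k, lam k * (⟪uh i, b k⟫ * ⟪uh i, b k⟫) := by
      refine Summable.tsum_le_tsum (fun k => ?_) ((hccS i i).mul_left (lam 0)) (hlcS i hi)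
      exact mul_le_mul_of_nonneg_right (hlam_mono (Nat.zero_le k)) (mul_self_nonneg _)
    rw [hlamh_val i hi, tsum_mul_left, hccT i hi i hi, if_pos rfl, mul_one] at h1
    exact h1
  have hlamh_leM : ∀ i ∈ J, lamh i ≤ lamh M := fun i hi =>
    hlamh_mono i hi M hMJ (Finset.mem_Icc.mp hi).2
  have hlamh_pos : ∀ i ∈ J, 0 < lamh i := fun i hi => lt_of_lt_of_le hl0 (hlamh_ge i hi)
  have hlamhM_pos : 0 < lamh M := hlamh_pos M hMJ
  have hS2_le1 : ∀ i ∈ J, S2 i i ≤ 1 := by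
    intro i hi
    have h := Summable.sum_le_tsum J (fun k _ => mul_self_nonneg (⟪uh i, b k⟫)) (hccS i i)
    rw [hccT i hi i hi, if_pos rfl] at h
    simpa [hS2] using h
  -- basic facts on ESq
  have hEnn : 0 ≤ ESq := by
    rw [hESq]
    exact tsum_nonneg fun k => tsum_nonneg fun j => mul_nonneg (hlam_pos j).le (sq_nonneg _)
  have hg0bS : ∀ k, Summable fun j => lam j * ⟪g0 (b k), b j⟫ ^ 2 := by
    intro k
    apply summable_of_ne_finset_zero (s := J)
    intro j hj
    rw [hg0b_coord]
    by_cases hk : k ∈ J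
    · rw [if_pos hk, if_neg (fun h : k = j => hj (h ▸ hk))]
      norm_num
    · rw [if_neg hk]; norm_num
  have hghbS : ∀ k, Summable fun j => lam j * ⟪gh (b k), b j⟫ ^ 2 := fun k =>
    hVh_dom _ (hghbV k)
  have hDle : ∀ k j, lam j * ⟪g0 (b k) - gh (b k), b j⟫ ^ 2
      ≤ 2 * (lam j * ⟪g0 (b k), b j⟫ ^ 2) + 2 * (lam j * ⟪gh (b k), b j⟫ ^ 2) := by
    intro k j
    rw [inner_sub_left]
    nlinarith only [mul_nonneg (hlam_pos j).le (sq_nonneg (⟪g0 (b k), b j⟫ + ⟪gh (b k), b j⟫))]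
  have hDS : ∀ k, Summable fun j => lam j * ⟪g0 (b k) - gh (b k), b j⟫ ^ 2 := by
    intro k
    refine Summable.of_nonneg_of_le (fun j => mul_nonneg (hlam_pos j).le (sq_nonneg _))
      (fun j => hDle k j) ?_
    exact ((hg0bS k).mul_left 2).add ((hghbS k).mul_left 2)
  have hg0bT : ∀ k, ∑' j, lam j * ⟪g0 (b k), b j⟫ ^ 2 = if k ∈ J then lam k else 0 := by
    intro k
    have hz : ∀ j ∉ ({k} : Finset ℕ), lam j * ⟪g0 (b k), b j⟫ ^ 2 = 0 := by
      intro j hj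
      have hkj : k ≠ j := fun h => hj (by simp [h])
      rw [hg0b_coord]
      by_cases hk : k ∈ J
      · rw [if_pos hk, if_neg hkj]; norm_num
      · rw [if_neg hk]; norm_num
    rw [tsum_eq_sum hz, Finset.sum_singleton, hg0b_coord]
    by_cases hk : k ∈ J
    · rw [if_pos hk, if_pos hk, if_pos rfl]; norm_num
    · rw [if_neg hk, if_neg hk]; norm_num
  have hghbT : ∀ k, ∑' j, lam j * ⟪gh (b k), b j⟫ ^ 2
      ≤ (∑ i ∈ J, ⟪uh i, b k⟫ * ⟪uh i, b k⟫) * ∑ i ∈ J, lamh i := by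
    intro k
    have hle : ∀ j, lam j * ⟪gh (b k), b j⟫ ^ 2
        ≤ (∑ i ∈ J, ⟪uh i, b k⟫ * ⟪uh i, b k⟫)
            * ∑ i ∈ J, lam j * (⟪uh i, b j⟫ * ⟪uh i, b j⟫) := by
      intro j
      rw [hghb_coord]
      have hcs := Finset.sum_mul_sq_le_sq_mul_sq J (fun i => ⟪uh i, b k⟫) (fun i => ⟪uh i, b j⟫)
      have h2 : lam j * (∑ i ∈ J, ⟪uh i, b k⟫ * ⟪uh i, b j⟫) ^ 2
          ≤ lam j * ((∑ i ∈ J, ⟪uh i, b k⟫ ^ 2) * ∑ i ∈ J, ⟪uh i, b j⟫ ^ 2) :=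
        mul_le_mul_of_nonneg_left hcs (hlam_pos j).le
      calc lam j * (∑ i ∈ J, ⟪uh i, b k⟫ * ⟪uh i, b j⟫) ^ 2 ≤ _ := h2
      _ = (∑ i ∈ J, ⟪uh i, b k⟫ * ⟪uh i, b k⟫)
            * ∑ i ∈ J, lam j * (⟪uh i, b j⟫ * ⟪uh i, b j⟫) := by
          simp only [← pow_two, ← Finset.mul_sum]
          ring
    calc ∑' j, lam j * ⟪gh (b k), b j⟫ ^ 2
        ≤ ∑' j, (∑ i ∈ J, ⟪uh i, b k⟫ * ⟪uh i, b k⟫)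
            * ∑ i ∈ J, lam j * (⟪uh i, b j⟫ * ⟪uh i, b j⟫) :=
          Summable.tsum_le_tsum hle (hghbS k)
            ((summable_sum fun i hi => hlcS i hi).mul_left _)
      _ = (∑ i ∈ J, ⟪uh i, b k⟫ * ⟪uh i, b k⟫)
            * ∑' j, ∑ i ∈ J, lam j * (⟪uh i, b j⟫ * ⟪uh i, b j⟫) := tsum_mul_left
      _ = (∑ i ∈ J, ⟪uh i, b k⟫ * ⟪uh i, b k⟫) * ∑ i ∈ J, lamh i := by
          rw [Summable.tsum_finsetSum (fun i hi => hlcS i hi)]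
          congr 1
          exact Finset.sum_congr rfl fun i hi => hlamh_val i hi
  have hboundS : Summable (fun k => 2 * (if k ∈ J then lam k else 0)
      + 2 * ((∑ i ∈ J, ⟪uh i, b k⟫ * ⟪uh i, b k⟫) * ∑ i ∈ J, lamh i)) := by
    apply Summable.add
    · apply Summable.mul_left
      apply summable_of_ne_finset_zero (s := J)
      intro k hk; rw [if_neg hk]
    · apply Summable.mul_left
      exact (summable_sum fun i (hi : i ∈ J) => hccS i i).mul_right _
  have hhS : Summable fun k => ∑' j, lam j * ⟪g0 (b k) - gh (b k), b j⟫ ^ 2 := by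
    refine Summable.of_nonneg_of_le
      (fun k => tsum_nonneg fun j => mul_nonneg (hlam_pos j).le (sq_nonneg _))
      (fun k => ?_) hboundS
    calc ∑' j, lam j * ⟪g0 (b k) - gh (b k), b j⟫ ^ 2
          ≤ ∑' j, (2 * (lam j * ⟪g0 (b k), b j⟫ ^ 2) + 2 * (lam j * ⟪gh (b k), b j⟫ ^ 2)) :=
            Summable.tsum_le_tsum (hDle k) (hDS k) (((hg0bS k).mul_left 2).add ((hghbS k).mul_left 2))
        _ = 2 * (∑' j, lam j * ⟪g0 (b k), b j⟫ ^ 2)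
              + 2 * (∑' j, lam j * ⟪gh (b k), b j⟫ ^ 2) := by
            rw [Summable.tsum_add ((hg0bS k).mul_left 2) ((hghbS k).mul_left 2), tsum_mul_left,
              tsum_mul_left]
        _ ≤ 2 * (if k ∈ J then lam k else 0)
              + 2 * ((∑ i ∈ J, ⟪uh i, b k⟫ * ⟪uh i, b k⟫) * ∑ i ∈ J, lamh i) := by
            rw [hg0bT k]
            have h9 := hghbT k
            linarith only [h9]
  have hφnn : ∀ p : ℕ × ℕ, (0:ℝ) ≤ lam p.2 * ⟪g0 (b p.1) - gh (b p.1), b p.2⟫ ^ 2 :=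
    fun p => mul_nonneg (hlam_pos p.2).le (sq_nonneg _)
  have hφ : Summable fun p : ℕ × ℕ => lam p.2 * ⟪g0 (b p.1) - gh (b p.1), b p.2⟫ ^ 2 :=
    (summable_prod_of_nonneg hφnn).2 ⟨fun k => hDS k, hhS⟩
  have hcolS : ∀ j, Summable fun k => lam j * ⟪g0 (b k) - gh (b k), b j⟫ ^ 2 := by
    intro j
    have heq : (fun k => lam j * ⟪g0 (b k) - gh (b k), b j⟫ ^ 2)
        = fun k => lam j * ⟪g0 (b j) - gh (b j), b k⟫ ^ 2 := by
      funext k; rw [hDsym k j]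
    rw [heq]
    exact (hsum_cc _).mul_left _
  have hcolval : ∀ j, ∑' k, lam j * ⟪g0 (b k) - gh (b k), b j⟫ ^ 2
      = lam j * ‖g0 (b j) - gh (b j)‖ ^ 2 := by
    intro j
    calc ∑' k, lam j * ⟪g0 (b k) - gh (b k), b j⟫ ^ 2
        = ∑' k, lam j * ⟪g0 (b j) - gh (b j), b k⟫ ^ 2 :=
          tsum_congr fun k => by rw [hDsym k j]
      _ = lam j * ∑' k, ⟪g0 (b j) - gh (b j), b k⟫ ^ 2 := tsum_mul_left
      _ = lam j * ‖g0 (b j) - gh (b j)‖ ^ 2 := by rw [htsum_cc]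
  have hE2 : ESq = ∑' j, lam j * ‖g0 (b j) - gh (b j)‖ ^ 2 := by
    have huncurry : Summable (Function.uncurry
        (fun k j => lam j * ⟪g0 (b k) - gh (b k), b j⟫ ^ 2)) := hφ
    have hcomm := Summable.tsum_comm' (f := fun k j => lam j * ⟪g0 (b k) - gh (b k), b j⟫ ^ 2)
      huncurry (fun k => hDS k) hcolS
    rw [hESq, ← hcomm]
    exact tsum_congr fun j => hcolval j
  have hE2S : Summable fun j => lam j * ‖g0 (b j) - gh (b j)‖ ^ 2 := by
    have hsw : Summable fun p : ℕ × ℕ => lam p.1 * ⟪g0 (b p.2) - gh (b p.2), b p.1⟫ ^ 2 :=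
      hφ.prod_symm
    have h2 := (summable_prod_of_nonneg
      (fun p : ℕ × ℕ => mul_nonneg (hlam_pos p.1).le (sq_nonneg _))).1 hsw
    have h3 := h2.2
    have heq : (fun j => ∑' k, lam j * ⟪g0 (b k) - gh (b k), b j⟫ ^ 2)
        = fun j => lam j * ‖g0 (b j) - gh (b j)‖ ^ 2 := funext fun j => hcolval j
    rw [heq] at h3
    exact h3
  have hFE : Ftr ≤ ESq := by
    rw [hE2, hFtr]
    calc ∑ i ∈ J, Rm i i
        = ∑ i ∈ J, ∑' j, (if j ∈ J then (0:ℝ)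
            else lam j * (⟪uh i, b j⟫ * ⟪uh i, b j⟫)) :=
          Finset.sum_congr rfl fun i hi => hRrep i hi i hi
      _ = ∑' j, ∑ i ∈ J, (if j ∈ J then (0:ℝ)
            else lam j * (⟪uh i, b j⟫ * ⟪uh i, b j⟫)) :=
          (Summable.tsum_finsetSum (fun i hi => (hmask _ (hlccS i hi i hi)).1)).symm
      _ ≤ ∑' j, lam j * ‖g0 (b j) - gh (b j)‖ ^ 2 := by
          refine Summable.tsum_le_tsum (fun j => ?_)
            (summable_sum fun i hi => (hmask _ (hlccS i hi i hi)).1) hE2S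
          by_cases hj : j ∈ J
          · simp only [if_pos hj, Finset.sum_const_zero]
            exact mul_nonneg (hlam_pos j).le (sq_nonneg _)
          · simp only [if_neg hj]
            have hb := hBes (g0 (b j) - gh (b j))
            have hco : ∀ i ∈ J, ⟪uh i, g0 (b j) - gh (b j)⟫ ^ 2
                = ⟪uh i, b j⟫ * ⟪uh i, b j⟫ := by
              intro i hi; rw [huD i hi j, if_neg hj]; ring
            calc ∑ i ∈ J, lam j * (⟪uh i, b j⟫ * ⟪uh i, b j⟫)
                = lam j * ∑ i ∈ J, ⟪uh i, g0 (b j) - gh (b j)⟫ ^ 2 := by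
                  rw [Finset.mul_sum]
                  exact Finset.sum_congr rfl fun i hi => by rw [hco i hi]
              _ ≤ lam j * ‖g0 (b j) - gh (b j)‖ ^ 2 :=
                  mul_le_mul_of_nonneg_left hb (hlam_pos j).le
  -- the L2 identity
  have hL2 : L2sq = 2 * gTr := by
    rw [hL2sq]
    have hnorm : ∀ k, ‖g0 (b k) - gh (b k)‖ ^ 2
        = (if k ∈ J then (1:ℝ) else 0)
          - 2 * (if k ∈ J then ∑ i ∈ J, ⟪uh i, b k⟫ * ⟪uh i, b k⟫ else 0)
          + ∑ i ∈ J, ⟪uh i, b k⟫ * ⟪uh i, b k⟫ := by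
      intro k
      rw [norm_sub_sq_real]
      have e1 : ‖g0 (b k)‖ ^ 2 = if k ∈ J then (1:ℝ) else 0 := by
        rw [hg0b]; by_cases hk : k ∈ J
        · rw [if_pos hk, if_pos hk, ← real_inner_self_eq_norm_sq, hbON, if_pos rfl]
        · rw [if_neg hk, if_neg hk, norm_zero]; norm_num
      have e2 : ⟪g0 (b k), gh (b k)⟫
          = if k ∈ J then ∑ i ∈ J, ⟪uh i, b k⟫ * ⟪uh i, b k⟫ else 0 := by
        rw [hg0b]; by_cases hk : k ∈ J
        · rw [if_pos hk, if_pos hk]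
          rw [hghb, inner_sum]
          refine Finset.sum_congr rfl fun i hi => ?_
          rw [real_inner_smul_right, real_inner_comm (uh i) (b k)]
        · rw [if_neg hk, if_neg hk, inner_zero_left]
      have e3 : ‖gh (b k)‖ ^ 2 = ∑ i ∈ J, ⟪uh i, b k⟫ * ⟪uh i, b k⟫ := by
        rw [← real_inner_self_eq_norm_sq, hghb k, sum_inner]
        refine Finset.sum_congr rfl fun i hi => ?_
        rw [real_inner_smul_left, hinner_usum (fun j => ⟪uh j, b k⟫) i hi]
      rw [e1, e2, e3]
    have hA : Summable fun k => (if k ∈ J then (1:ℝ) else 0) :=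
      summable_of_ne_finset_zero (fun k hk => if_neg hk)
    have hB : Summable fun k =>
        (if k ∈ J then ∑ i ∈ J, ⟪uh i, b k⟫ * ⟪uh i, b k⟫ else (0:ℝ)) :=
      summable_of_ne_finset_zero (fun k hk => if_neg hk)
    have hC : Summable fun k => ∑ i ∈ J, ⟪uh i, b k⟫ * ⟪uh i, b k⟫ :=
      summable_sum fun i (hi : i ∈ J) => hccS i i
    rw [tsum_congr hnorm, Summable.tsum_add ((hA.sub (hB.mul_left 2))) hC,
      Summable.tsum_sub hA (hB.mul_left 2), tsum_mul_left]
    have vA : ∑' k, (if k ∈ J then (1:ℝ) else 0) = (J.card : ℝ) := by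
      rw [tsum_eq_sum (fun k (hk : k ∉ J) => if_neg hk)]
      simp
    have vB : ∑' k, (if k ∈ J then ∑ i ∈ J, ⟪uh i, b k⟫ * ⟪uh i, b k⟫ else (0:ℝ))
        = ∑ k ∈ J, ∑ i ∈ J, ⟪uh i, b k⟫ * ⟪uh i, b k⟫ := by
      rw [tsum_eq_sum (fun k (hk : k ∉ J) => if_neg hk)]
      exact Finset.sum_congr rfl fun k hk => if_pos hk
    have vC : ∑' k, ∑ i ∈ J, ⟪uh i, b k⟫ * ⟪uh i, b k⟫ = (J.card : ℝ) := by
      rw [Summable.tsum_finsetSum (fun i (hi : i ∈ J) => hccS i i)]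
      rw [Finset.sum_congr rfl (fun i (hi : i ∈ J) => by
        rw [hccT i hi i hi, if_pos rfl])]
      simp
    rw [vA, vB, vC]
    have vg : gTr = (J.card : ℝ) - ∑ k ∈ J, ∑ i ∈ J, ⟪uh i, b k⟫ * ⟪uh i, b k⟫ := by
      rw [hgTr]
      simp only [hGm, hS2, if_pos rfl]
      rw [Finset.sum_sub_distrib, Finset.sum_comm]
      simp
    rw [vg]; ring
  -- bound on lamh M
  have hlamhM_le : lamh M ≤ lam M + ESq := by
    have h1 : Rm M M = lamh M - SA M M := by simp [hRm]
    have h2 : SA M M ≤ lam M := by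
      have hstep : SA M M ≤ lam M * S2 M M := by
        simp only [hSA, hS2, Finset.mul_sum]
        refine Finset.sum_le_sum fun k hk => ?_
        have hkM : k ≤ M := (Finset.mem_Icc.mp hk).2
        exact mul_le_mul_of_nonneg_right (hlam_mono hkM) (mul_self_nonneg _)
      calc SA M M ≤ lam M * S2 M M := hstep
      _ ≤ lam M * 1 := mul_le_mul_of_nonneg_left (hS2_le1 M hMJ) (hlam_pos M).le
      _ = lam M := mul_one _
    have h3 : Rm M M ≤ Ftr := hFtr ▸ Finset.single_le_sum (fun i hi => hRdiag i hi) hMJ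
    have h4 : Rm M M = lamh M - SA M M := h1
    linarith only [h2, h3, h4, hFE]
  -- cbar pointwise bound
  have hcbar1 : (1:ℝ) ≤ cbar := by rw [hcbar]; exact le_max_right _ _
  have hkey : ∀ k, ∀ i ∈ J, (lam k - lamh i) ^ 2 ≤ cbar * lam k ^ 2 := by
    intro k i hi
    have hk := hlam_pos k
    have hge := hlamh_ge i hi
    have hlei := hlamh_leM i hi
    rcases le_or_gt (lamh i) (lam k) with h | h
    · have h1 : (lam k - lamh i) ^ 2 ≤ lam k ^ 2 := by
        have hip := (hlamh_pos i hi).le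
        have h2k : (0:ℝ) ≤ 2 * lam k - lamh i := by linarith only [h, hip]
        nlinarith only [mul_nonneg hip h2k]
      calc (lam k - lamh i) ^ 2 ≤ lam k ^ 2 := h1
      _ = 1 * lam k ^ 2 := (one_mul _).symm
      _ ≤ cbar * lam k ^ 2 := mul_le_mul_of_nonneg_right hcbar1 (sq_nonneg _)
    · have hq1 : 1 ≤ lamh M / lam 0 := by
        rw [le_div_iff₀ hl0]
        linarith only [hge, hlei]
      have hupper : lamh i - lam k ≤ (lamh M / lam 0 - 1) * lam k := by
        have h3 : lamh M / lam 0 * lam 0 = lamh M := by field_simp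
        have h4 : lamh M / lam 0 * lam 0 ≤ lamh M / lam 0 * lam k :=
          mul_le_mul_of_nonneg_left (hlam_mono (Nat.zero_le k))
            (div_nonneg hlamhM_pos.le hl0.le)
        nlinarith only [h3, h4, hlei]
      have h0' : (0:ℝ) ≤ lamh i - lam k := by linarith
      have hrhs0 : (0:ℝ) ≤ (lamh M / lam 0 - 1) * lam k := by
        nlinarith only [mul_le_mul_of_nonneg_right hq1 hk.le]
      have h6 : (lamh i - lam k) * (lamh i - lam k)
          ≤ ((lamh M / lam 0 - 1) * lam k) * ((lamh M / lam 0 - 1) * lam k) :=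
        mul_le_mul hupper hupper h0' hrhs0
      have h5 : (lam k - lamh i) ^ 2 ≤ (lamh M / lam 0 - 1) ^ 2 * lam k ^ 2 := by
        nlinarith only [h6]
      calc (lam k - lamh i) ^ 2 ≤ (lamh M / lam 0 - 1) ^ 2 * lam k ^ 2 := h5
      _ ≤ cbar * lam k ^ 2 := mul_le_mul_of_nonneg_right
            (by rw [hcbar]; exact le_max_left _ _) (sq_nonneg _)
  have haptw : ∀ k, ∀ i ∈ J, (lam k)⁻¹ * ((lam k - lamh i) ^ 2 * ⟪uh i, b k⟫ ^ 2)
      ≤ cbar * (lam k * (⟪uh i, b k⟫ * ⟪uh i, b k⟫)) := by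
    intro k i hi
    have hk := hlam_pos k
    have h1 : (lam k - lamh i) ^ 2 * ⟪uh i, b k⟫ ^ 2 ≤ (cbar * lam k ^ 2) * ⟪uh i, b k⟫ ^ 2 :=
      mul_le_mul_of_nonneg_right (hkey k i hi) (sq_nonneg _)
    have h2 : (lam k)⁻¹ * ((lam k - lamh i) ^ 2 * ⟪uh i, b k⟫ ^ 2)
        ≤ (lam k)⁻¹ * ((cbar * lam k ^ 2) * ⟪uh i, b k⟫ ^ 2) :=
      mul_le_mul_of_nonneg_left h1 (inv_nonneg.mpr hk.le)
    calc (lam k)⁻¹ * ((lam k - lamh i) ^ 2 * ⟪uh i, b k⟫ ^ 2)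
        ≤ (lam k)⁻¹ * ((cbar * lam k ^ 2) * ⟪uh i, b k⟫ ^ 2) := h2
    _ = cbar * (lam k * (⟪uh i, b k⟫ * ⟪uh i, b k⟫)) := by
        field_simp
  have haiS : ∀ i ∈ J, Summable fun k =>
      (lam k)⁻¹ * ((lam k - lamh i) ^ 2 * ⟪uh i, b k⟫ ^ 2) := by
    intro i hi
    refine Summable.of_nonneg_of_le (fun k => ?_) (fun k => haptw k i hi)
      ((hlcS i hi).mul_left cbar)
    have := (hlam_pos k).le
    positivity
  have haS : Summable (fun k => ∑ i ∈ J,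
      (lam k)⁻¹ * ((lam k - lamh i) ^ 2 * ⟪uh i, b k⟫ ^ 2)) :=
    summable_sum fun i hi => haiS i hi
  have hN0split : N0sq
      = (∑ k ∈ J, ∑ i ∈ J, (lam k)⁻¹ * ((lam k - lamh i) ^ 2 * ⟪uh i, b k⟫ ^ 2))
        + ∑' k, (if k ∈ J then (0:ℝ)
            else ∑ i ∈ J, (lam k)⁻¹ * ((lam k - lamh i) ^ 2 * ⟪uh i, b k⟫ ^ 2)) := by
    have hm := (hmask _ haS).2
    rw [hN0sq]
    linarith only [hm]
  have hPartA : ∑' k, (if k ∈ J then (0:ℝ)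
      else ∑ i ∈ J, (lam k)⁻¹ * ((lam k - lamh i) ^ 2 * ⟪uh i, b k⟫ ^ 2)) ≤ cbar * Ftr := by
    have hmono : ∀ k, (if k ∈ J then (0:ℝ)
        else ∑ i ∈ J, (lam k)⁻¹ * ((lam k - lamh i) ^ 2 * ⟪uh i, b k⟫ ^ 2))
        ≤ ∑ i ∈ J, (if k ∈ J then (0:ℝ)
            else cbar * (lam k * (⟪uh i, b k⟫ * ⟪uh i, b k⟫))) := by
      intro k
      by_cases hk : k ∈ J
      · simp [hk]
      · simp only [if_neg hk]
        exact Finset.sum_le_sum fun i hi => haptw k i hi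
    calc ∑' k, (if k ∈ J then (0:ℝ)
        else ∑ i ∈ J, (lam k)⁻¹ * ((lam k - lamh i) ^ 2 * ⟪uh i, b k⟫ ^ 2))
        ≤ ∑' k, ∑ i ∈ J, (if k ∈ J then (0:ℝ)
            else cbar * (lam k * (⟪uh i, b k⟫ * ⟪uh i, b k⟫))) :=
          Summable.tsum_le_tsum hmono (hmask _ haS).1
            (summable_sum fun i hi => (hmask _ ((hlcS i hi).mul_left cbar)).1)
      _ = ∑ i ∈ J, ∑' k, (if k ∈ J then (0:ℝ)
            else cbar * (lam k * (⟪uh i, b k⟫ * ⟪uh i, b k⟫))) :=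
          Summable.tsum_finsetSum (fun i hi => (hmask _ ((hlcS i hi).mul_left cbar)).1)
      _ = cbar * Ftr := by
          rw [hFtr, Finset.mul_sum]
          refine Finset.sum_congr rfl fun i hi => ?_
          have heq : (fun k => (if k ∈ J then (0:ℝ)
              else cbar * (lam k * (⟪uh i, b k⟫ * ⟪uh i, b k⟫))))
              = fun k => cbar * (if k ∈ J then (0:ℝ)
                  else lam k * (⟪uh i, b k⟫ * ⟪uh i, b k⟫)) := by
            funext k; by_cases hk : k ∈ J <;> simp [hk]
          rw [heq, tsum_mul_left, ← hRrep i hi i hi]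
  have hlm : 0 < lam m := hlam_pos m
  have hPartB : ∑ k ∈ J, ∑ i ∈ J, (lam k)⁻¹ * ((lam k - lamh i) ^ 2 * ⟪uh i, b k⟫ ^ 2)
      ≤ (lam m)⁻¹ * ∑ k ∈ J, ∑ i ∈ J, ((lam k - lamh i) * ⟪uh i, b k⟫) ^ 2 := by
    rw [Finset.mul_sum]
    refine Finset.sum_le_sum fun k hk => ?_
    rw [Finset.mul_sum]
    refine Finset.sum_le_sum fun i _ => ?_
    have hmk : lam m ≤ lam k := hlam_mono (Finset.mem_Icc.mp hk).1
    have hinv : (lam k)⁻¹ ≤ (lam m)⁻¹ := inv_anti₀ hlm hmk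
    have hnn : (0:ℝ) ≤ (lam k - lamh i) ^ 2 * ⟪uh i, b k⟫ ^ 2 := by positivity
    calc (lam k)⁻¹ * ((lam k - lamh i) ^ 2 * ⟪uh i, b k⟫ ^ 2)
        ≤ (lam m)⁻¹ * ((lam k - lamh i) ^ 2 * ⟪uh i, b k⟫ ^ 2) :=
          mul_le_mul_of_nonneg_right hinv hnn
      _ = (lam m)⁻¹ * ((lam k - lamh i) * ⟪uh i, b k⟫) ^ 2 := by ring
  -- the matrices X, Y, U, V
  obtain ⟨X, hX⟩ : ∃ X : ℕ → ℕ → ℝ, X = fun k i => (lam k - lamh i) * ⟪uh i, b k⟫ := ⟨_, rfl⟩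
  obtain ⟨Y, hY⟩ : ∃ Y : ℕ → ℕ → ℝ, Y = fun j i => ∑ k ∈ J, ⟪uh j, b k⟫ * X k i := ⟨_, rfl⟩
  obtain ⟨Um, hUm⟩ : ∃ Um : ℕ → ℕ → ℝ, Um = fun k i => ∑ j ∈ J, ⟪uh j, b k⟫ * Y j i := ⟨_, rfl⟩
  obtain ⟨Vm, hVm⟩ : ∃ Vm : ℕ → ℕ → ℝ, Vm = fun k i => ∑ l ∈ J, Gt k l * X l i := ⟨_, rfl⟩
  have hXdecomp : ∀ k ∈ J, ∀ i : ℕ, Vm k i = X k i - Um k i := by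
    intro k hk i
    have e1 : ∑ l ∈ J, (if k = l then (1:ℝ) else 0) * X l i = X k i := by
      have e1' : ∀ l ∈ J, (if k = l then (1:ℝ) else 0) * X l i
          = (if k = l then X l i else 0) := by
        intro l _; by_cases h : k = l <;> simp [h]
      rw [Finset.sum_congr rfl e1', Finset.sum_ite_eq, if_pos hk]
    have e2 : ∑ l ∈ J, (∑ j ∈ J, ⟪uh j, b k⟫ * ⟪uh j, b l⟫) * X l i
        = ∑ j ∈ J, ⟪uh j, b k⟫ * Y j i := by
      calc ∑ l ∈ J, (∑ j ∈ J, ⟪uh j, b k⟫ * ⟪uh j, b l⟫) * X l i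
          = ∑ l ∈ J, ∑ j ∈ J, ⟪uh j, b k⟫ * (⟪uh j, b l⟫ * X l i) := by
            refine Finset.sum_congr rfl fun l _ => ?_
            rw [Finset.sum_mul]
            exact Finset.sum_congr rfl fun j _ => by ring
        _ = ∑ j ∈ J, ∑ l ∈ J, ⟪uh j, b k⟫ * (⟪uh j, b l⟫ * X l i) := Finset.sum_comm
        _ = ∑ j ∈ J, ⟪uh j, b k⟫ * Y j i := by
            refine Finset.sum_congr rfl fun j _ => ?_
            rw [← Finset.mul_sum]
            congr 1
            simp only [hY]
    simp only [hVm, hGt, hUm]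
    rw [Finset.sum_congr rfl (fun l (_ : l ∈ J) =>
      (sub_mul (if k = l then (1:ℝ) else 0) (∑ j ∈ J, ⟪uh j, b k⟫ * ⟪uh j, b l⟫) (X l i)))]
    rw [Finset.sum_sub_distrib, e1, e2]
  -- Frobenius / trace bound
  have hfro : ∀ (A : ℕ → ℕ → ℝ), (∀ i ∈ J, ∀ j ∈ J, A i j ^ 2 ≤ A i i * A j j) →
      ∑ i ∈ J, ∑ j ∈ J, A i j ^ 2 ≤ (∑ i ∈ J, A i i) ^ 2 := by
    intro A hA
    calc ∑ i ∈ J, ∑ j ∈ J, A i j ^ 2 ≤ ∑ i ∈ J, ∑ j ∈ J, A i i * A j j :=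
          Finset.sum_le_sum fun i hi => Finset.sum_le_sum fun j hj => hA i hi j hj
    _ = (∑ i ∈ J, A i i) ^ 2 := by rw [pow_two, Finset.sum_mul_sum]
  obtain ⟨SG, hSGdef⟩ : ∃ x:ℝ, x = ∑ i ∈ J, ∑ j ∈ J, Gm i j ^ 2 := ⟨_, rfl⟩
  obtain ⟨SR, hSRdef⟩ : ∃ x:ℝ, x = ∑ i ∈ J, ∑ j ∈ J, Rm i j ^ 2 := ⟨_, rfl⟩
  obtain ⟨SGt, hSGtdef⟩ : ∃ x:ℝ, x = ∑ i ∈ J, ∑ j ∈ J, Gt i j ^ 2 := ⟨_, rfl⟩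
  have hSG0 : 0 ≤ SG := by rw [hSGdef]; positivity
  have hSR0 : 0 ≤ SR := by rw [hSRdef]; positivity
  have hSGt0 : 0 ≤ SGt := by rw [hSGtdef]; positivity
  have hSGle : SG ≤ gTr ^ 2 := by rw [hSGdef, hgTr]; exact hfro Gm hGcs
  have hSRle : SR ≤ Ftr ^ 2 := by rw [hSRdef, hFtr]; exact hfro Rm hRcs
  have hSGtle : SGt ≤ gTr ^ 2 := by
    rw [hSGtdef, ← hTrGt]; exact hfro Gt hGtcs
  have hsqG : Real.sqrt SG ≤ gTr := sqrt_le_of_le_sq hgTr0 hSGle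
  have hsqR : Real.sqrt SR ≤ Ftr := sqrt_le_of_le_sq hFtr0 hSRle
  -- U is contraction of Y
  have hUSY : ∑ k ∈ J, ∑ i ∈ J, Um k i ^ 2 ≤ ∑ j ∈ J, ∑ i ∈ J, Y j i ^ 2 := by
    have h1 : ∀ i, ∑ k ∈ J, Um k i ^ 2 ≤ ∑ j ∈ J, Y j i ^ 2 := by
      intro i
      calc ∑ k ∈ J, Um k i ^ 2 = ∑ k ∈ J, (∑ j ∈ J, Y j i * ⟪uh j, b k⟫) ^ 2 := by
            refine Finset.sum_congr rfl fun k _ => ?_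
            simp only [hUm]
            congr 1
            exact Finset.sum_congr rfl fun j _ => mul_comm _ _
        _ ≤ ∑ j ∈ J, Y j i ^ 2 := hCT (fun j => Y j i)
    calc ∑ k ∈ J, ∑ i ∈ J, Um k i ^ 2 = ∑ i ∈ J, ∑ k ∈ J, Um k i ^ 2 := Finset.sum_comm
    _ ≤ ∑ i ∈ J, ∑ j ∈ J, Y j i ^ 2 := Finset.sum_le_sum fun i _ => h1 i
    _ = ∑ j ∈ J, ∑ i ∈ J, Y j i ^ 2 := Finset.sum_comm
  have hYrep : ∀ j ∈ J, ∀ i ∈ J, Y j i = lamh i * Gm j i - Rm j i := by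
    intro j hj i hi
    have e0 : Y j i = SA j i - lamh i * S2 j i := by
      simp only [hY, hX, hSA, hS2]
      rw [Finset.mul_sum, ← Finset.sum_sub_distrib]
      exact Finset.sum_congr rfl fun k _ => by ring
    simp only [hGm, hRm]
    by_cases h : j = i
    · subst h
      rw [e0, if_pos rfl, if_pos rfl]; ring
    · rw [e0, if_neg h, if_neg h]; ring
  have hSYb : ∑ j ∈ J, ∑ i ∈ J, Y j i ^ 2
      ≤ (lamh M * Real.sqrt SG + Real.sqrt SR) ^ 2 := by
    have hmk := finset_minkowski (J ×ˢ J) (fun p => lamh p.2 * Gm p.1 p.2)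
      (fun p => -(Rm p.1 p.2))
    simp only [Finset.sum_product] at hmk
    have hYeq : ∑ j ∈ J, ∑ i ∈ J, Y j i ^ 2
        = ∑ j ∈ J, ∑ i ∈ J, (lamh i * Gm j i + -(Rm j i)) ^ 2 :=
      Finset.sum_congr rfl fun j hj => Finset.sum_congr rfl fun i hi => by
        rw [hYrep j hj i hi]; ring
    have hnegR : ∑ j ∈ J, ∑ i ∈ J, (-(Rm j i)) ^ 2 = SR := by
      rw [hSRdef]
      exact Finset.sum_congr rfl fun j _ => Finset.sum_congr rfl fun i _ => by ring
    have hlG : ∑ j ∈ J, ∑ i ∈ J, (lamh i * Gm j i) ^ 2 ≤ lamh M ^ 2 * SG := by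
      rw [hSGdef, Finset.mul_sum]
      refine Finset.sum_le_sum fun j _ => ?_
      rw [Finset.mul_sum]
      refine Finset.sum_le_sum fun i hi => ?_
      rw [mul_pow]
      exact mul_le_mul_of_nonneg_right
        (pow_le_pow_left₀ (hlamh_pos i hi).le (hlamh_leM i hi) 2) (sq_nonneg _)
    have hsq1 : Real.sqrt (∑ j ∈ J, ∑ i ∈ J, (lamh i * Gm j i) ^ 2)
        ≤ lamh M * Real.sqrt SG := by
      apply sqrt_le_of_le_sq (mul_nonneg hlamhM_pos.le (Real.sqrt_nonneg _))
      calc ∑ j ∈ J, ∑ i ∈ J, (lamh i * Gm j i) ^ 2 ≤ lamh M ^ 2 * SG := hlG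
      _ = (lamh M * Real.sqrt SG) ^ 2 := by rw [mul_pow, Real.sq_sqrt hSG0]
    have h2 : Real.sqrt (∑ j ∈ J, ∑ i ∈ J, (lamh i * Gm j i) ^ 2)
        + Real.sqrt (∑ j ∈ J, ∑ i ∈ J, (-(Rm j i)) ^ 2)
        ≤ lamh M * Real.sqrt SG + Real.sqrt SR := by
      rw [hnegR]
      exact add_le_add hsq1 le_rfl
    calc ∑ j ∈ J, ∑ i ∈ J, Y j i ^ 2
        = ∑ j ∈ J, ∑ i ∈ J, (lamh i * Gm j i + -(Rm j i)) ^ 2 := hYeq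
    _ ≤ (Real.sqrt (∑ j ∈ J, ∑ i ∈ J, (lamh i * Gm j i) ^ 2)
          + Real.sqrt (∑ j ∈ J, ∑ i ∈ J, (-(Rm j i)) ^ 2)) ^ 2 := hmk
    _ ≤ (lamh M * Real.sqrt SG + Real.sqrt SR) ^ 2 := by
        apply pow_le_pow_left₀ (by positivity) h2
  -- operator bound for V
  have hOP : ∀ w : ℕ → ℝ, ∑ i ∈ J, (∑ l ∈ J, w l * X l i) ^ 2
      ≤ (lam M + lamh M) ^ 2 * ∑ l ∈ J, w l ^ 2 := by
    intro w
    have hq : ∀ i, ∑ l ∈ J, w l * X l i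
        = (∑ l ∈ J, (lam l * w l) * ⟪uh i, b l⟫)
          + -(lamh i * (∑ l ∈ J, w l * ⟪uh i, b l⟫)) := by
      intro i
      calc ∑ l ∈ J, w l * X l i
          = ∑ l ∈ J, ((lam l * w l) * ⟪uh i, b l⟫ - lamh i * (w l * ⟪uh i, b l⟫)) := by
            refine Finset.sum_congr rfl fun l _ => ?_
            simp only [hX]; ring
        _ = (∑ l ∈ J, (lam l * w l) * ⟪uh i, b l⟫)
              - ∑ l ∈ J, lamh i * (w l * ⟪uh i, b l⟫) := Finset.sum_sub_distrib _ _
        _ = _ := by rw [← Finset.mul_sum]; ring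
    have hW0 : (0:ℝ) ≤ ∑ l ∈ J, w l ^ 2 := Finset.sum_nonneg fun l _ => sq_nonneg _
    have hP : ∑ i ∈ J, (∑ l ∈ J, (lam l * w l) * ⟪uh i, b l⟫) ^ 2
        ≤ lam M ^ 2 * ∑ l ∈ J, w l ^ 2 := by
      calc ∑ i ∈ J, (∑ l ∈ J, (lam l * w l) * ⟪uh i, b l⟫) ^ 2
          ≤ ∑ l ∈ J, (lam l * w l) ^ 2 := hCL (fun l => lam l * w l)
      _ ≤ ∑ l ∈ J, lam M ^ 2 * w l ^ 2 := by
          refine Finset.sum_le_sum fun l hl => ?_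
          have hlM : lam l ≤ lam M := hlam_mono (Finset.mem_Icc.mp hl).2
          rw [mul_pow]
          exact mul_le_mul_of_nonneg_right (pow_le_pow_left₀ (hlam_pos l).le hlM 2) (sq_nonneg _)
      _ = lam M ^ 2 * ∑ l ∈ J, w l ^ 2 := by rw [Finset.mul_sum]
    have hQ : ∑ i ∈ J, (-(lamh i * (∑ l ∈ J, w l * ⟪uh i, b l⟫))) ^ 2
        ≤ lamh M ^ 2 * ∑ l ∈ J, w l ^ 2 := by
      have h1 : ∀ i ∈ J, (-(lamh i * (∑ l ∈ J, w l * ⟪uh i, b l⟫))) ^ 2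
          ≤ lamh M ^ 2 * (∑ l ∈ J, w l * ⟪uh i, b l⟫) ^ 2 := by
        intro i hi
        have he : (-(lamh i * (∑ l ∈ J, w l * ⟪uh i, b l⟫))) ^ 2
            = lamh i ^ 2 * (∑ l ∈ J, w l * ⟪uh i, b l⟫) ^ 2 := by ring
        rw [he]
        exact mul_le_mul_of_nonneg_right
          (pow_le_pow_left₀ (hlamh_pos i hi).le (hlamh_leM i hi) 2) (sq_nonneg _)
      calc ∑ i ∈ J, (-(lamh i * (∑ l ∈ J, w l * ⟪uh i, b l⟫))) ^ 2
          ≤ ∑ i ∈ J, lamh M ^ 2 * (∑ l ∈ J, w l * ⟪uh i, b l⟫) ^ 2 :=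
            Finset.sum_le_sum h1
      _ = lamh M ^ 2 * ∑ i ∈ J, (∑ l ∈ J, w l * ⟪uh i, b l⟫) ^ 2 := by rw [Finset.mul_sum]
      _ ≤ lamh M ^ 2 * ∑ l ∈ J, w l ^ 2 := mul_le_mul_of_nonneg_left (hCL w) (sq_nonneg _)
    have hs1 : Real.sqrt (∑ i ∈ J, (∑ l ∈ J, (lam l * w l) * ⟪uh i, b l⟫) ^ 2)
        ≤ lam M * Real.sqrt (∑ l ∈ J, w l ^ 2) := by
      apply sqrt_le_of_le_sq (mul_nonneg (hlam_pos M).le (Real.sqrt_nonneg _))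
      rw [mul_pow, Real.sq_sqrt hW0]; exact hP
    have hs2 : Real.sqrt (∑ i ∈ J, (-(lamh i * (∑ l ∈ J, w l * ⟪uh i, b l⟫))) ^ 2)
        ≤ lamh M * Real.sqrt (∑ l ∈ J, w l ^ 2) := by
      apply sqrt_le_of_le_sq (mul_nonneg hlamhM_pos.le (Real.sqrt_nonneg _))
      rw [mul_pow, Real.sq_sqrt hW0]; exact hQ
    have hmk := finset_minkowski J (fun i => ∑ l ∈ J, (lam l * w l) * ⟪uh i, b l⟫)
      (fun i => -(lamh i * (∑ l ∈ J, w l * ⟪uh i, b l⟫)))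
    calc ∑ i ∈ J, (∑ l ∈ J, w l * X l i) ^ 2
        = ∑ i ∈ J, ((∑ l ∈ J, (lam l * w l) * ⟪uh i, b l⟫)
            + -(lamh i * (∑ l ∈ J, w l * ⟪uh i, b l⟫))) ^ 2 :=
          Finset.sum_congr rfl fun i _ => by rw [hq i]
      _ ≤ (Real.sqrt (∑ i ∈ J, (∑ l ∈ J, (lam l * w l) * ⟪uh i, b l⟫) ^ 2)
            + Real.sqrt (∑ i ∈ J, (-(lamh i * (∑ l ∈ J, w l * ⟪uh i, b l⟫))) ^ 2)) ^ 2 := hmk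
      _ ≤ ((lam M + lamh M) * Real.sqrt (∑ l ∈ J, w l ^ 2)) ^ 2 := by
          apply pow_le_pow_left₀ (by positivity)
          calc Real.sqrt (∑ i ∈ J, (∑ l ∈ J, (lam l * w l) * ⟪uh i, b l⟫) ^ 2)
              + Real.sqrt (∑ i ∈ J, (-(lamh i * (∑ l ∈ J, w l * ⟪uh i, b l⟫))) ^ 2)
              ≤ lam M * Real.sqrt (∑ l ∈ J, w l ^ 2)
                + lamh M * Real.sqrt (∑ l ∈ J, w l ^ 2) := add_le_add hs1 hs2
          _ = (lam M + lamh M) * Real.sqrt (∑ l ∈ J, w l ^ 2) := by ring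
      _ = (lam M + lamh M) ^ 2 * ∑ l ∈ J, w l ^ 2 := by
          rw [mul_pow, Real.sq_sqrt hW0]
  have hSVb : ∑ k ∈ J, ∑ i ∈ J, Vm k i ^ 2 ≤ (lam M + lamh M) ^ 2 * SGt := by
    calc ∑ k ∈ J, ∑ i ∈ J, Vm k i ^ 2
        = ∑ k ∈ J, ∑ i ∈ J, (∑ l ∈ J, Gt k l * X l i) ^ 2 := by simp only [hVm]
      _ ≤ ∑ k ∈ J, (lam M + lamh M) ^ 2 * ∑ l ∈ J, Gt k l ^ 2 :=
          Finset.sum_le_sum fun k _ => hOP (fun l => Gt k l)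
      _ = (lam M + lamh M) ^ 2 * SGt := by rw [hSGtdef, Finset.mul_sum]
  -- assemble the bound on SX
  obtain ⟨SX, hSXdef⟩ : ∃ x:ℝ, x = ∑ k ∈ J, ∑ i ∈ J, X k i ^ 2 := ⟨_, rfl⟩
  obtain ⟨SU, hSUdef⟩ : ∃ x:ℝ, x = ∑ k ∈ J, ∑ i ∈ J, Um k i ^ 2 := ⟨_, rfl⟩
  obtain ⟨SV, hSVdef⟩ : ∃ x:ℝ, x = ∑ k ∈ J, ∑ i ∈ J, Vm k i ^ 2 := ⟨_, rfl⟩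
  have hSU0 : 0 ≤ SU := by rw [hSUdef]; positivity
  have hSV0 : 0 ≤ SV := by rw [hSVdef]; positivity
  have hSXsplit : SX ≤ (Real.sqrt SU + Real.sqrt SV) ^ 2 := by
    have hmk := finset_minkowski (J ×ˢ J) (fun p => Um p.1 p.2) (fun p => Vm p.1 p.2)
    simp only [Finset.sum_product] at hmk
    have hXU : SX = ∑ k ∈ J, ∑ i ∈ J, (Um k i + Vm k i) ^ 2 := by
      rw [hSXdef]
      refine Finset.sum_congr rfl fun k hk => Finset.sum_congr rfl fun i _ => ?_
      rw [hXdecomp k hk i]; ring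
    rw [← hSUdef, ← hSVdef] at hmk
    rw [hXU]
    exact hmk
  have hsqX : Real.sqrt SU + Real.sqrt SV ≤ 3 * lam M * gTr + (1 + 2 * gTr) * ESq := by
    have h1 : Real.sqrt SU ≤ lamh M * gTr + Ftr := by
      have hUY : SU ≤ (lamh M * Real.sqrt SG + Real.sqrt SR) ^ 2 := by
        rw [hSUdef]; exact le_trans hUSY hSYb
      have h3 := sqrt_le_of_le_sq (by positivity) hUY
      have h2 : lamh M * Real.sqrt SG + Real.sqrt SR ≤ lamh M * gTr + Ftr :=
        add_le_add (mul_le_mul_of_nonneg_left hsqG hlamhM_pos.le) hsqR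
      linarith only [h2, h3]
    have h2 : Real.sqrt SV ≤ (lam M + lamh M) * gTr := by
      have hVb : SV ≤ ((lam M + lamh M) * gTr) ^ 2 := by
        rw [hSVdef]
        calc ∑ k ∈ J, ∑ i ∈ J, Vm k i ^ 2 ≤ (lam M + lamh M) ^ 2 * SGt := hSVb
        _ ≤ (lam M + lamh M) ^ 2 * gTr ^ 2 :=
            mul_le_mul_of_nonneg_left hSGtle (by positivity)
        _ = ((lam M + lamh M) * gTr) ^ 2 := by ring
      refine sqrt_le_of_le_sq (mul_nonneg ?_ hgTr0) hVb
      linarith only [(hlam_pos M).le, hlamhM_pos.le]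
    have t1 : lamh M * gTr ≤ (lam M + ESq) * gTr :=
      mul_le_mul_of_nonneg_right hlamhM_le hgTr0
    have t2 : (lam M + lamh M) * gTr ≤ (lam M + (lam M + ESq)) * gTr :=
      mul_le_mul_of_nonneg_right (by linarith only [hlamhM_le]) hgTr0
    linarith only [h1, h2, t1, t2, hFE]
  have hSXK : SX ≤ (3 * lam M * gTr + (1 + 2 * gTr) * ESq) ^ 2 := by
    have hK0 : (0:ℝ) ≤ 3 * lam M * gTr + (1 + 2 * gTr) * ESq := by
      have h1 : (0:ℝ) ≤ 1 + 2 * gTr := by linarith only [hgTr0]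
      linarith only [mul_nonneg h1 hEnn, mul_nonneg (hlam_pos M).le hgTr0]
    calc SX ≤ (Real.sqrt SU + Real.sqrt SV) ^ 2 := hSXsplit
    _ ≤ (3 * lam M * gTr + (1 + 2 * gTr) * ESq) ^ 2 :=
        pow_le_pow_left₀ (add_nonneg (Real.sqrt_nonneg _) (Real.sqrt_nonneg _)) hsqX 2
  -- main assembly
  have hmain : N0sq ≤ cbar * ESq + (lam m)⁻¹ * SX := by
    rw [hN0split]
    have hcbar0 : (0:ℝ) ≤ cbar := le_trans zero_le_one hcbar1
    have hFE' : cbar * Ftr ≤ cbar * ESq := mul_le_mul_of_nonneg_left hFE hcbar0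
    have hXX : SX = ∑ k ∈ J, ∑ i ∈ J, ((lam k - lamh i) * ⟪uh i, b k⟫) ^ 2 := by
      rw [hSXdef]; simp only [hX]
    rw [hXX]
    linarith only [hPartB, hPartA, hFE']
  -- final algebra
  rw [hL2]
  have hmm' : lam m ≤ lam M := hlam_mono hmM
  have halpha : 1 + gTr / 2 ≤ 1 + lam M / (4 * lam m) * (2 * gTr) := by
    have h1 : (1:ℝ)/4 ≤ lam M / (4 * lam m) := by
      rw [div_le_div_iff₀ (by norm_num) (by linarith only [hlm])]
      linarith only [hmm']
    linarith only [mul_le_mul_of_nonneg_right h1 hgTr0]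
  have halpha0 : (0:ℝ) ≤ 1 + gTr / 2 := by linarith only [hgTr0]
  have hstepB : (1 + 2 * gTr) ^ 2 ≤ 3 * (1 + gTr ^ 2) * (1 + gTr / 2) ^ 2 := by
    rcases le_or_gt gTr 1 with h | h
    · nlinarith only [hgTr0, h, mul_nonneg hgTr0 hgTr0,
        mul_nonneg (mul_nonneg hgTr0 hgTr0) hgTr0,
        mul_nonneg (mul_nonneg (mul_nonneg hgTr0 hgTr0) hgTr0) hgTr0]
    · nlinarith only [hgTr0, h, mul_nonneg hgTr0 hgTr0,
        mul_nonneg (mul_nonneg hgTr0 hgTr0) hgTr0,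
        mul_nonneg (mul_nonneg (mul_nonneg hgTr0 hgTr0) hgTr0) hgTr0,
        mul_le_mul_of_nonneg_left h.le hgTr0]
  have hstepA : (3 * lam M * gTr + (1 + 2 * gTr) * ESq) ^ 2
      ≤ 18 * (lam M * gTr) ^ 2 + 2 * ((1 + 2 * gTr) * ESq) ^ 2 := by
    nlinarith only [sq_nonneg (3 * lam M * gTr - (1 + 2 * gTr) * ESq)]
  have hSXf : SX ≤ 3 * (1 + gTr ^ 2) *
      (2 * (1 + lam M / (4 * lam m) * (2 * gTr)) ^ 2 * ESq ^ 2
        + 2 * lam M ^ 2 * (2 * gTr) ^ 2) := by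
    have hb : (1 + 2 * gTr) ^ 2 * ESq ^ 2
        ≤ 3 * (1 + gTr ^ 2) * (1 + gTr / 2) ^ 2 * ESq ^ 2 :=
      mul_le_mul_of_nonneg_right hstepB (sq_nonneg _)
    have hc : (1 + gTr / 2) ^ 2 ≤ (1 + lam M / (4 * lam m) * (2 * gTr)) ^ 2 :=
      pow_le_pow_left₀ halpha0 halpha 2
    have hd : 3 * (1 + gTr ^ 2) * (1 + gTr / 2) ^ 2 * ESq ^ 2
        ≤ 3 * (1 + gTr ^ 2) * (1 + lam M / (4 * lam m) * (2 * gTr)) ^ 2 * ESq ^ 2 := by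
      have h1 : (0:ℝ) ≤ 3 * (1 + gTr ^ 2) := by positivity
      have h2 := mul_le_mul_of_nonneg_right (mul_le_mul_of_nonneg_left hc h1) (sq_nonneg ESq)
      linarith only [h2]
    have he : 18 * (lam M * gTr) ^ 2 ≤ 24 * (1 + gTr ^ 2) * (lam M * gTr) ^ 2 := by
      nlinarith only [sq_nonneg (lam M * gTr),
        mul_nonneg (mul_nonneg hgTr0 hgTr0) (sq_nonneg (lam M * gTr))]
    calc SX ≤ (3 * lam M * gTr + (1 + 2 * gTr) * ESq) ^ 2 := hSXK
    _ ≤ 18 * (lam M * gTr) ^ 2 + 2 * ((1 + 2 * gTr) * ESq) ^ 2 := hstepA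
    _ ≤ 24 * (1 + gTr ^ 2) * (lam M * gTr) ^ 2
          + 2 * (3 * (1 + gTr ^ 2) * (1 + lam M / (4 * lam m) * (2 * gTr)) ^ 2 * ESq ^ 2) := by
        nlinarith only [hb, hd, he]
    _ = 3 * (1 + gTr ^ 2) *
          (2 * (1 + lam M / (4 * lam m) * (2 * gTr)) ^ 2 * ESq ^ 2
            + 2 * lam M ^ 2 * (2 * gTr) ^ 2) := by ring
  have halg : (lam m)⁻¹ * SX ≤ 3 / lam m * (1 + 1 / 4 * (2 * gTr) ^ 2) *
      (2 * (1 + lam M / (4 * lam m) * (2 * gTr)) ^ 2 * ESq ^ 2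
        + 2 * lam M ^ 2 * (2 * gTr) ^ 2) := by
    have hre : lam m * (3 / lam m * (1 + 1 / 4 * (2 * gTr) ^ 2) *
        (2 * (1 + lam M / (4 * lam m) * (2 * gTr)) ^ 2 * ESq ^ 2
          + 2 * lam M ^ 2 * (2 * gTr) ^ 2))
        = 3 * (1 + gTr ^ 2) *
          (2 * (1 + lam M / (4 * lam m) * (2 * gTr)) ^ 2 * ESq ^ 2
            + 2 * lam M ^ 2 * (2 * gTr) ^ 2) := by
      field_simp
      ring
    have h1 : SX ≤ lam m * (3 / lam m * (1 + 1 / 4 * (2 * gTr) ^ 2) *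
        (2 * (1 + lam M / (4 * lam m) * (2 * gTr)) ^ 2 * ESq ^ 2
          + 2 * lam M ^ 2 * (2 * gTr) ^ 2)) := by
      rw [hre]; exact hSXf
    have h2 := mul_le_mul_of_nonneg_left h1 (inv_nonneg.mpr hlm.le)
    rwa [← mul_assoc, inv_mul_cancel₀ hlm.ne', one_mul] at h2
  have hT2 : 0 ≤ 3 * (lam M - lam m) ^ 2 / (4 * lam m) * (2 * gTr) ^ 2 := by positivity
  linarith only [hmain, halg, hT2]
end

section
/- Assume the continuous gap conditions: λ_{m−1} < λ_m if m > 1, and λ_M < λ_{M+1}; assume the continuous–discrete gap conditions. Then the Hilbert–Schmidt norm of the density matrix error is bounded by the A^{−1/2}-scaled residual: ‖γ⁰ − γ_h‖_{S2} ≤ √2 · c_h · N_{−1/2}. -/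
open scoped RealInnerProductSpace

set_option maxHeartbeats 1000000 in
/-- 0-based indexing: `‖γ⁰ − γ_h‖_{S2} ≤ √2 · c_h · N_{−1/2}`. -/
theorem stmt_16
    {H : Type*} [NormedAddCommGroup H] [InnerProductSpace ℝ H] [CompleteSpace H]
    (b : HilbertBasis ℕ ℝ H)
    (lam : ℕ → ℝ) (hlam_pos : ∀ k, 0 < lam k) (hlam_mono : Monotone lam)
    (hlam_tendsto : Filter.Tendsto lam Filter.atTop Filter.atTop)
    (m M : ℕ) (hmM : m ≤ M)
    (hgap_low : 0 < m → lam (m - 1) < lam m)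
    (hgap_up : lam M < lam (M + 1))
    (Vh : Submodule ℝ H) (hVh_fin : FiniteDimensional ℝ Vh)
    (hVh_dom : ∀ v ∈ Vh, Summable fun k => lam k * ⟪v, b k⟫ ^ 2)
    (uh : ℕ → H) (lamh : ℕ → ℝ)
    (huh_mem : ∀ i ∈ Finset.Icc m M, uh i ∈ Vh)
    (huh_orth : ∀ i ∈ Finset.Icc m M, ∀ j ∈ Finset.Icc m M,
      ⟪uh i, uh j⟫ = if i = j then 1 else 0)
    (hlamh_mono : ∀ i ∈ Finset.Icc m M, ∀ j ∈ Finset.Icc m M, i ≤ j → lamh i ≤ lamh j)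
    (heig_h : ∀ i ∈ Finset.Icc m M, ∀ v ∈ Vh,
      (∑' k, lam k * (⟪uh i, b k⟫ * ⟪v, b k⟫)) = lamh i * ⟪uh i, v⟫)
    (g0 gh : H → H)
    (hg0 : ∀ w, g0 w = ∑ i ∈ Finset.Icc m M, ⟪w, b i⟫ • b i)
    (hgh : ∀ w, gh w = ∑ i ∈ Finset.Icc m M, ⟪w, uh i⟫ • uh i)
    (lamBar lamUnd : ℝ)
    (hbar : 0 < m → lam (m - 1) ≤ lamBar ∧ lamBar < lamh m)
    (hund : lamh M < lamUnd ∧ lamUnd ≤ lam (M + 1))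
    (ch : ℝ)
    (hch : ch = if 0 < m then
        max ((lamh m / lamBar - 1)⁻¹) ((1 - lamh M / lamUnd)⁻¹)
      else (1 - lamh M / lamUnd)⁻¹)
    (L2sq : ℝ) (hL2sq : L2sq = ∑' k, ‖g0 (b k) - gh (b k)‖ ^ 2)
    (Nm12sq : ℝ)
    (hNm12sq : Nm12sq = ∑' k, ∑ i ∈ Finset.Icc m M,
      ((lam k) ^ 2)⁻¹ * ((lam k - lamh i) ^ 2 * ⟪uh i, b k⟫ ^ 2))
    :
    Real.sqrt L2sq ≤ Real.sqrt 2 * ch * Real.sqrt Nm12sq := by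
  classical
  set p : Finset ℕ := Finset.Icc m M with hp
  set s : ℕ → ℝ := fun k => ∑ i ∈ p, ⟪uh i, b k⟫ ^ 2 with hs
  have hm_mem : m ∈ p := by rw [hp]; exact Finset.mem_Icc.mpr ⟨le_refl m, hmM⟩
  have hM_mem : M ∈ p := by rw [hp]; exact Finset.mem_Icc.mpr ⟨hmM, le_refl M⟩
  -- lamh nonneg
  have hlamh_nonneg : ∀ i ∈ p, 0 ≤ lamh i := by
    intro i hi
    have h1 := heig_h i hi (uh i) (huh_mem i hi)
    have h2 : ⟪uh i, uh i⟫ = (1:ℝ) := by simpa using huh_orth i hi i hi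
    rw [h2, mul_one] at h1
    rw [← h1]
    exact tsum_nonneg fun k => mul_nonneg (hlam_pos k).le (mul_self_nonneg _)
  -- summability of coefficients squared
  have hsumq : ∀ i : ℕ, Summable (fun k => ⟪uh i, b k⟫ ^ 2) := by
    intro i
    refine (b.summable_inner_mul_inner (uh i) (uh i)).congr fun k => ?_
    rw [sq, real_inner_comm (uh i) (b k)]
  -- Parseval
  have hpars : ∀ i ∈ p, ∑' k, ⟪uh i, b k⟫ ^ 2 = 1 := by
    intro i hi
    have h := b.tsum_inner_mul_inner (uh i) (uh i)
    have h2 : ⟪uh i, uh i⟫ = (1:ℝ) := by simpa using huh_orth i hi i hi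
    rw [h2] at h
    have hk : ∀ k, ⟪uh i, b k⟫ ^ 2 = ⟪uh i, b k⟫ * ⟪b k, uh i⟫ := fun k => by
      rw [sq, real_inner_comm (uh i) (b k)]
    exact (tsum_congr hk).trans h
  -- inner products with gh
  have hgh_apply : ∀ (w x : H), ⟪gh w, x⟫ = ∑ i ∈ p, ⟪w, uh i⟫ * ⟪uh i, x⟫ := by
    intro w x
    rw [hgh, sum_inner]
    exact Finset.sum_congr rfl fun i _ => real_inner_smul_left _ _ _
  have hgh_coord : ∀ (w : H), ∀ i ∈ p, ⟪gh w, uh i⟫ = ⟪w, uh i⟫ := by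
    intro w i hi
    rw [hgh_apply,
      Finset.sum_congr rfl (fun j hj => by rw [huh_orth j hj i hi])]
    simp [Finset.sum_ite_eq', hi]
  have hgh_self : ∀ (w : H), ⟪gh w, gh w⟫ = ∑ i ∈ p, ⟪w, uh i⟫ ^ 2 := by
    intro w
    rw [hgh_apply]
    refine Finset.sum_congr rfl fun i hi => ?_
    rw [real_inner_comm (gh w) (uh i), hgh_coord w i hi, sq]
  have hw_gh : ∀ (w : H), ⟪w, gh w⟫ = ∑ i ∈ p, ⟪w, uh i⟫ ^ 2 := by
    intro w
    rw [real_inner_comm (gh w) w, hgh_apply]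
    refine Finset.sum_congr rfl fun i hi => ?_
    rw [real_inner_comm w (uh i), sq]
  have horthob : ∀ i j : ℕ, ⟪b i, b j⟫ = if i = j then (1:ℝ) else 0 :=
    orthonormal_iff_ite.mp b.orthonormal
  have hg0b : ∀ k, g0 (b k) = if k ∈ p then b k else 0 := by
    intro k
    rw [hg0, Finset.sum_congr rfl (fun i _ => by rw [horthob k i])]
    simp [ite_smul]
  have hs_nonneg : ∀ k, 0 ≤ s k := fun k => Finset.sum_nonneg fun i _ => sq_nonneg _
  have hsk : ∀ k, ∑ i ∈ p, ⟪b k, uh i⟫ ^ 2 = s k := by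
    intro k
    simp only [hs]
    exact Finset.sum_congr rfl fun i _ => by rw [sq, real_inner_comm (uh i) (b k), ← sq]
  -- term formula
  have hterm : ∀ k, ‖g0 (b k) - gh (b k)‖ ^ 2 = (if k ∈ p then 1 - s k else s k) := by
    intro k
    have h3 : ‖gh (b k)‖ ^ 2 = s k := by
      rw [← real_inner_self_eq_norm_sq]
      exact (hgh_self (b k)).trans (hsk k)
    by_cases hk : k ∈ p
    · have hn := norm_sub_sq_real (b k) (gh (b k))
      have h1 : ‖b k‖ = 1 := b.orthonormal.1 k
      have h2 : ⟪b k, gh (b k)⟫ = s k := (hw_gh (b k)).trans (hsk k)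
      rw [hg0b k, if_pos hk, hn, h1, h2, h3, if_pos hk]
      ring
    · rw [hg0b k, if_neg hk, zero_sub, norm_neg, h3, if_neg hk]
  -- summability of s
  have hs_summ : Summable s := by
    rw [hs]; exact summable_sum fun i _ => hsumq i
  have hs_tsum : ∑' k, s k = (p.card : ℝ) := by
    simp only [hs]
    rw [Summable.tsum_finsetSum (fun i _ => hsumq i), Finset.sum_congr rfl (fun i hi => hpars i hi),
      Finset.sum_const, nsmul_eq_mul, mul_one]
  set sout : ℕ → ℝ := fun k => if k ∈ p then 0 else s k with hsout
  have hsin_summ : Summable (fun k => if k ∈ p then s k else 0) :=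
    summable_of_ne_finset_zero (s := p) (fun k hk => by simp [hk])
  have hsout_summ : Summable sout := by
    refine (hs_summ.sub hsin_summ).congr fun k => ?_
    by_cases hk : k ∈ p <;> simp [hsout, hk]
  have hsplit : ∑' k, s k = (∑ k ∈ p, s k) + ∑' k, sout k := by
    have h1 : ∀ k, s k = (if k ∈ p then s k else 0) + sout k := by
      intro k; by_cases hk : k ∈ p <;> simp [hsout, hk]
    rw [tsum_congr h1, Summable.tsum_add hsin_summ hsout_summ,
      tsum_eq_sum (s := p) (fun k hk => by simp [hk])]
    congr 1
    exact Finset.sum_congr rfl fun k hk => by simp [hk]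
  -- L2sq = 2 * T
  have hL2 : L2sq = 2 * ∑' k, sout k := by
    have ht : ∀ k, ‖g0 (b k) - gh (b k)‖ ^ 2 = (if k ∈ p then 1 - 2 * s k else 0) + s k := by
      intro k; rw [hterm k]; by_cases hk : k ∈ p <;> simp [hk] <;> ring
    have hg_summ : Summable (fun k : ℕ => if k ∈ p then 1 - 2 * s k else 0) :=
      summable_of_ne_finset_zero (s := p) (fun k hk => by simp [hk])
    rw [hL2sq, tsum_congr ht, Summable.tsum_add hg_summ hs_summ,
      tsum_eq_sum (s := p) (fun k hk => by simp [hk]), hs_tsum]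
    have h1 : ∑ k ∈ p, (if k ∈ p then 1 - 2 * s k else 0) = ∑ k ∈ p, (1 - 2 * s k) :=
      Finset.sum_congr rfl fun k hk => by simp [hk]
    have h2 : ∑ k ∈ p, (1 - 2 * s k) = (p.card : ℝ) - 2 * ∑ k ∈ p, s k := by
      rw [Finset.sum_sub_distrib, Finset.sum_const, nsmul_eq_mul, mul_one, Finset.mul_sum]
    have h3 := hsplit
    rw [hs_tsum] at h3
    rw [h1, h2]
    linarith
  -- positivity of ch etc.
  have hMh0 : 0 ≤ lamh M := hlamh_nonneg M hM_mem
  have hUnd_pos : 0 < lamUnd := lt_of_le_of_lt hMh0 hund.1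
  have hbpos : 0 < 1 - lamh M / lamUnd := by
    have h1 : lamh M / lamUnd < 1 := (div_lt_one hUnd_pos).mpr hund.1
    linarith
  have hch_ge_b : (1 - lamh M / lamUnd)⁻¹ ≤ ch := by
    rw [hch]; split
    · exact le_max_right _ _
    · exact le_refl _
  have hch_pos : 0 < ch := lt_of_lt_of_le (inv_pos.mpr hbpos) hch_ge_b
  -- key gap inequality
  have hkey : ∀ k ∉ p, ∀ i ∈ p, (lam k) ^ 2 ≤ ch ^ 2 * (lam k - lamh i) ^ 2 := by
    intro k hk i hi
    have hi' := hi
    rw [hp, Finset.mem_Icc] at hi'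
    obtain ⟨him, hiM⟩ := hi'
    have hk' : k < m ∨ M < k := by
      rw [hp, Finset.mem_Icc] at hk; omega
    have hLpos := hlam_pos k
    rcases hk' with hkm | hkM
    · -- k < m
      have hm' : 0 < m := lt_of_le_of_lt (Nat.zero_le k) hkm
      obtain ⟨hb1, hb2⟩ := hbar hm'
      have hLlek : lam k ≤ lamBar := le_trans (hlam_mono (by omega : k ≤ m - 1)) hb1
      have hBpos : 0 < lamBar := lt_of_lt_of_le (hlam_pos (m - 1)) hb1
      have hmu : lamh m ≤ lamh i := hlamh_mono m hm_mem i hi him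
      have haval : 0 < lamh m / lamBar - 1 := by
        have h1 : 1 < lamh m / lamBar := (one_lt_div hBpos).mpr hb2
        linarith
      have hch_ge_a : (lamh m / lamBar - 1)⁻¹ ≤ ch := by
        rw [hch, if_pos hm']; exact le_max_left _ _
      have hA : (lamh m / lamBar - 1) * lam k ≤ lamh i - lam k := by
        have h1 : lamh m / lamBar * lam k ≤ lamh m := by
          rw [div_mul_eq_mul_div, div_le_iff₀ hBpos]
          have h0m : 0 ≤ lamh m := le_of_lt (lt_trans hBpos hb2)
          exact mul_le_mul_of_nonneg_left hLlek h0m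
        have h2 : (lamh m / lamBar - 1) * lam k = lamh m / lamBar * lam k - lam k := by ring
        linarith
      have hineq : lam k ≤ ch * (lamh i - lam k) := by
        have h2 : lam k ≤ (lamh m / lamBar - 1)⁻¹ * (lamh i - lam k) := by
          have h3 := mul_le_mul_of_nonneg_left hA (le_of_lt (inv_pos.mpr haval))
          rwa [← mul_assoc, inv_mul_cancel₀ (ne_of_gt haval), one_mul] at h3
        have h4 : 0 ≤ lamh i - lam k := by
          have := mul_pos haval hLpos
          linarith [hA]
        exact le_trans h2 (mul_le_mul_of_nonneg_right hch_ge_a h4)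
      have h5 : lam k * lam k ≤ (ch * (lamh i - lam k)) * (ch * (lamh i - lam k)) :=
        mul_le_mul hineq hineq hLpos.le (le_trans hLpos.le hineq)
      calc lam k ^ 2 = lam k * lam k := by ring
        _ ≤ (ch * (lamh i - lam k)) * (ch * (lamh i - lam k)) := h5
        _ = ch ^ 2 * (lam k - lamh i) ^ 2 := by ring
    · -- M < k
      have hLge : lamUnd ≤ lam k := le_trans hund.2 (hlam_mono (by omega : M + 1 ≤ k))
      have hmu : lamh i ≤ lamh M := hlamh_mono i hi M hM_mem hiM
      have h1 : lamh i ≤ lamh M / lamUnd * lam k := by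
        have he : lamh M / lamUnd * lamUnd = lamh M := div_mul_cancel₀ _ (ne_of_gt hUnd_pos)
        have h2 : lamh M / lamUnd * lamUnd ≤ lamh M / lamUnd * lam k :=
          mul_le_mul_of_nonneg_left hLge (div_nonneg hMh0 hUnd_pos.le)
        linarith
      have hA : (1 - lamh M / lamUnd) * lam k ≤ lam k - lamh i := by nlinarith [h1]
      have hineq : lam k ≤ ch * (lam k - lamh i) := by
        have h2 : lam k ≤ (1 - lamh M / lamUnd)⁻¹ * (lam k - lamh i) := by
          have h3 := mul_le_mul_of_nonneg_left hA (le_of_lt (inv_pos.mpr hbpos))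
          rwa [← mul_assoc, inv_mul_cancel₀ (ne_of_gt hbpos), one_mul] at h3
        have h4 : 0 ≤ lam k - lamh i := by
          have := mul_pos hbpos hLpos
          linarith [hA]
        exact le_trans h2 (mul_le_mul_of_nonneg_right hch_ge_b h4)
      have h5 : lam k * lam k ≤ (ch * (lam k - lamh i)) * (ch * (lam k - lamh i)) :=
        mul_le_mul hineq hineq hLpos.le (le_trans hLpos.le hineq)
      calc lam k ^ 2 = lam k * lam k := by ring
        _ ≤ (ch * (lam k - lamh i)) * (ch * (lam k - lamh i)) := h5
        _ = ch ^ 2 * (lam k - lamh i) ^ 2 := by ring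
  -- summability of the residual terms
  set F : ℕ → ℝ := fun k => ∑ i ∈ p, ((lam k) ^ 2)⁻¹ * ((lam k - lamh i) ^ 2 * ⟪uh i, b k⟫ ^ 2)
    with hF
  have hF_summ : Summable F := by
    rw [hF]
    refine summable_sum fun i hi => ?_
    have hgsum : Summable (fun k => (1 + lamh i / lam 0) ^ 2 * ⟪uh i, b k⟫ ^ 2) :=
      (hsumq i).mul_left _
    refine hgsum.of_nonneg_of_le (fun k => by positivity) ?_
    intro k
    have hL := hlam_pos k
    have hlamk0 : lam 0 ≤ lam k := hlam_mono (Nat.zero_le k)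
    have h0 := hlam_pos 0
    have hmu := hlamh_nonneg i hi
    have hd1 : lamh i / lam k ≤ lamh i / lam 0 := div_le_div_of_nonneg_left hmu h0 hlamk0
    have hd0 : 0 ≤ lamh i / lam k := div_nonneg hmu hL.le
    have hd0' : 0 ≤ lamh i / lam 0 := div_nonneg hmu h0.le
    have hLne : lam k ≠ 0 := ne_of_gt hL
    have hsq2 : ((lam k) ^ 2)⁻¹ * (lam k - lamh i) ^ 2 ≤ (1 + lamh i / lam 0) ^ 2 := by
      have he : ((lam k) ^ 2)⁻¹ * (lam k - lamh i) ^ 2 = (1 - lamh i / lam k) ^ 2 := by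
        field_simp
      rw [he]
      apply sq_le_sq' <;> linarith
    calc ((lam k) ^ 2)⁻¹ * ((lam k - lamh i) ^ 2 * ⟪uh i, b k⟫ ^ 2)
        = (((lam k) ^ 2)⁻¹ * (lam k - lamh i) ^ 2) * ⟪uh i, b k⟫ ^ 2 := by ring
      _ ≤ (1 + lamh i / lam 0) ^ 2 * ⟪uh i, b k⟫ ^ 2 :=
          mul_le_mul_of_nonneg_right hsq2 (sq_nonneg _)
  -- termwise bound
  have hbound : ∀ k, sout k ≤ ch ^ 2 * F k := by
    intro k
    by_cases hk : k ∈ p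
    · simp only [hsout, if_pos hk]
      exact mul_nonneg (sq_nonneg ch) (Finset.sum_nonneg fun i _ => by positivity)
    · simp only [hsout, if_neg hk, hs, hF]
      rw [Finset.mul_sum]
      refine Finset.sum_le_sum fun i hi => ?_
      have hsq := hkey k hk i hi
      have hL := hlam_pos k
      have h2 := mul_le_mul_of_nonneg_right hsq
        (show (0:ℝ) ≤ ((lam k) ^ 2)⁻¹ * ⟪uh i, b k⟫ ^ 2 by positivity)
      have hLne : lam k ≠ 0 := ne_of_gt hL
      calc ⟪uh i, b k⟫ ^ 2 = (lam k) ^ 2 * (((lam k) ^ 2)⁻¹ * ⟪uh i, b k⟫ ^ 2) := by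
            field_simp
        _ ≤ ch ^ 2 * (lam k - lamh i) ^ 2 * (((lam k) ^ 2)⁻¹ * ⟪uh i, b k⟫ ^ 2) := h2
        _ = ch ^ 2 * (((lam k) ^ 2)⁻¹ * ((lam k - lamh i) ^ 2 * ⟪uh i, b k⟫ ^ 2)) := by ring
  have hN_eq : Nm12sq = ∑' k, F k := by rw [hNm12sq, hF]
  have hT_le : ∑' k, sout k ≤ ch ^ 2 * Nm12sq := by
    have h1 : ∑' k, sout k ≤ ∑' k, ch ^ 2 * F k :=
      Summable.tsum_le_tsum hbound hsout_summ (hF_summ.mul_left _)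
    rw [hN_eq, ← tsum_mul_left]
    exact h1
  have hN_nonneg : 0 ≤ Nm12sq := by
    rw [hN_eq]
    exact tsum_nonneg fun k => Finset.sum_nonneg fun i _ => by positivity
  have hL2sq_le : L2sq ≤ 2 * (ch ^ 2 * Nm12sq) := by rw [hL2]; linarith
  calc Real.sqrt L2sq ≤ Real.sqrt (2 * (ch ^ 2 * Nm12sq)) := Real.sqrt_le_sqrt hL2sq_le
    _ = Real.sqrt 2 * ch * Real.sqrt Nm12sq := by
        rw [Real.sqrt_mul (by norm_num : (0:ℝ) ≤ 2), Real.sqrt_mul (sq_nonneg ch),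
          Real.sqrt_sq hch_pos.le, mul_assoc]
end

section
/- Assume the continuous gap conditions: λ_{m−1} < λ_m if m > 1, and λ_M < λ_{M+1}; assume the continuous–discrete gap conditions, and set c̃_h := max[λ̄_{m−1}^{−1/2}(λ_{mh}/λ̄_{m−1} − 1)^{−1}, λ̲_{M+1}^{−1/2}(1 − λ_{Mh}/λ̲_{M+1})^{−1}], the first entry being discarded when m = 1. Then the Hilbert–Schmidt norm of the density matrix error is bounded by the cluster residual norm: ‖γ⁰ − γ_h‖_{S2} ≤ √2 · c̃_h · N_0. -/
open scoped RealInnerProductSpace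

/-- 0-based indexing: `‖γ⁰ − γ_h‖_{S2} ≤ √2 · c̃_h · N₀`. -/
theorem stmt_17
    {H : Type*} [NormedAddCommGroup H] [InnerProductSpace ℝ H] [CompleteSpace H]
    (b : HilbertBasis ℕ ℝ H)
    (lam : ℕ → ℝ) (hlam_pos : ∀ k, 0 < lam k) (hlam_mono : Monotone lam)
    (hlam_tendsto : Filter.Tendsto lam Filter.atTop Filter.atTop)
    (m M : ℕ) (hmM : m ≤ M)
    (hgap_low : 0 < m → lam (m - 1) < lam m)
    (hgap_up : lam M < lam (M + 1))
    (Vh : Submodule ℝ H) (hVh_fin : FiniteDimensional ℝ Vh)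
    (hVh_dom : ∀ v ∈ Vh, Summable fun k => lam k * ⟪v, b k⟫ ^ 2)
    (uh : ℕ → H) (lamh : ℕ → ℝ)
    (huh_mem : ∀ i ∈ Finset.Icc m M, uh i ∈ Vh)
    (huh_orth : ∀ i ∈ Finset.Icc m M, ∀ j ∈ Finset.Icc m M,
      ⟪uh i, uh j⟫ = if i = j then 1 else 0)
    (hlamh_mono : ∀ i ∈ Finset.Icc m M, ∀ j ∈ Finset.Icc m M, i ≤ j → lamh i ≤ lamh j)
    (heig_h : ∀ i ∈ Finset.Icc m M, ∀ v ∈ Vh,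
      (∑' k, lam k * (⟪uh i, b k⟫ * ⟪v, b k⟫)) = lamh i * ⟪uh i, v⟫)
    (g0 gh : H → H)
    (hg0 : ∀ w, g0 w = ∑ i ∈ Finset.Icc m M, ⟪w, b i⟫ • b i)
    (hgh : ∀ w, gh w = ∑ i ∈ Finset.Icc m M, ⟪w, uh i⟫ • uh i)
    (lamBar lamUnd : ℝ)
    (hbar : 0 < m → lam (m - 1) ≤ lamBar ∧ lamBar < lamh m)
    (hund : lamh M < lamUnd ∧ lamUnd ≤ lam (M + 1))
    (cth : ℝ)
    (hcth : cth = if 0 < m then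
        max ((Real.sqrt lamBar)⁻¹ * (lamh m / lamBar - 1)⁻¹)
            ((Real.sqrt lamUnd)⁻¹ * (1 - lamh M / lamUnd)⁻¹)
      else (Real.sqrt lamUnd)⁻¹ * (1 - lamh M / lamUnd)⁻¹)
    (L2sq : ℝ) (hL2sq : L2sq = ∑' k, ‖g0 (b k) - gh (b k)‖ ^ 2)
    (N0sq : ℝ)
    (hN0sq : N0sq = ∑' k, ∑ i ∈ Finset.Icc m M,
      (lam k)⁻¹ * ((lam k - lamh i) ^ 2 * ⟪uh i, b k⟫ ^ 2))
    :
    Real.sqrt L2sq ≤ Real.sqrt 2 * cth * Real.sqrt N0sq := by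
  classical
  set D := Finset.Icc m M with hD
  have hmD : m ∈ D := Finset.mem_Icc.mpr ⟨le_refl m, hmM⟩
  have hMD : M ∈ D := Finset.mem_Icc.mpr ⟨hmM, le_refl M⟩
  -- Parseval
  have hPar : ∀ x : H, HasSum (fun k => ⟪x, b k⟫ ^ 2) (‖x‖ ^ 2) := by
    intro x
    have := b.hasSum_inner_mul_inner x x
    simpa [real_inner_self_eq_norm_sq, sq, real_inner_comm x] using this
  -- each uh i has norm 1
  have hu1 : ∀ i ∈ D, HasSum (fun k => ⟪uh i, b k⟫ ^ 2) 1 := by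
    intro i hi
    have := hPar (uh i)
    rwa [← real_inner_self_eq_norm_sq, huh_orth i hi i hi, if_pos rfl] at this
  -- positivity of lamh
  have hlamh_pos : ∀ i ∈ D, 0 < lamh i := by
    intro i hi
    have heq : (∑' k, lam k * (⟪uh i, b k⟫ * ⟪uh i, b k⟫)) = lamh i * ⟪uh i, uh i⟫ :=
      heig_h i hi (uh i) (huh_mem i hi)
    rw [huh_orth i hi i hi, if_pos rfl, mul_one] at heq
    have hsum1 : Summable (fun k => lam k * ⟪uh i, b k⟫ ^ 2) :=
      hVh_dom (uh i) (huh_mem i hi)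
    have hle : lam 0 * 1 ≤ ∑' k, lam k * (⟪uh i, b k⟫ * ⟪uh i, b k⟫) := by
      have h0 : (∑' k, lam 0 * ⟪uh i, b k⟫ ^ 2) = lam 0 * 1 := by
        rw [tsum_mul_left, (hu1 i hi).tsum_eq]
      rw [← h0]
      refine Summable.tsum_le_tsum (fun k => ?_) (((hu1 i hi).summable).mul_left _)
        (by simpa [sq] using hsum1)
      have h1 : lam 0 ≤ lam k := hlam_mono (Nat.zero_le k)
      nlinarith [sq_nonneg (⟪uh i, b k⟫)]
    rw [heq] at hle
    have := hlam_pos 0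
    linarith
  -- positivity facts for the constant
  have hlamUnd_pos : 0 < lamUnd := lt_trans (hlamh_pos M hMD) hund.1
  have hbb_pos : 0 < (Real.sqrt lamUnd)⁻¹ * (1 - lamh M / lamUnd)⁻¹ := by
    have h1 : lamh M / lamUnd < 1 := (div_lt_one hlamUnd_pos).mpr hund.1
    have h2 : 0 < Real.sqrt lamUnd := Real.sqrt_pos.mpr hlamUnd_pos
    have h3 : 0 < 1 - lamh M / lamUnd := by linarith
    exact mul_pos (inv_pos.2 h2) (inv_pos.2 h3)
  have hcth_bb : (Real.sqrt lamUnd)⁻¹ * (1 - lamh M / lamUnd)⁻¹ ≤ cth := by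
    rw [hcth]; split
    · exact le_max_right _ _
    · exact le_refl _
  have hcth_pos : 0 < cth := lt_of_lt_of_le hbb_pos hcth_bb
  -- the key gap inequality
  have hkey : ∀ k, k ∉ D → ∀ i ∈ D, lam k ≤ cth ^ 2 * (lam k - lamh i) ^ 2 := by
    intro k hk i hi
    have hiD := Finset.mem_Icc.mp hi
    suffices h : Real.sqrt (lam k) ≤ cth * |lam k - lamh i| by
      nlinarith [Real.sq_sqrt (hlam_pos k).le, abs_nonneg (lam k - lamh i),
        sq_abs (lam k - lamh i), Real.sqrt_nonneg (lam k)]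
    rw [hD, Finset.mem_Icc, not_and_or, not_le, not_le] at hk
    rcases hk with hk | hk
    · -- k < m
      have hm : 0 < m := by omega
      obtain ⟨hb1, hb2⟩ := hbar hm
      have hBpos : 0 < lamBar := lt_of_lt_of_le (hlam_pos (m - 1)) hb1
      have h1 : lam k ≤ lamBar := le_trans (hlam_mono (by omega : k ≤ m - 1)) hb1
      have h3 : lamh m ≤ lamh i := hlamh_mono m hmD i hi hiD.1
      have habs : |lam k - lamh i| = lamh i - lam k := by
        rw [abs_of_nonpos (by linarith)]; ring
      rw [habs]
      have hcth_aa : (Real.sqrt lamBar)⁻¹ * (lamh m / lamBar - 1)⁻¹ ≤ cth := by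
        rw [hcth, if_pos hm]; exact le_max_left _ _
      have hs : 0 < Real.sqrt lamBar := Real.sqrt_pos.mpr hBpos
      have haa_pos : 0 < (Real.sqrt lamBar)⁻¹ * (lamh m / lamBar - 1)⁻¹ := by
        have h4 : 0 < lamh m / lamBar - 1 := by
          have := (one_lt_div hBpos).mpr hb2
          linarith
        exact mul_pos (inv_pos.2 hs) (inv_pos.2 h4)
      have haa_eq : (Real.sqrt lamBar)⁻¹ * (lamh m / lamBar - 1)⁻¹ * (lamh m - lamBar) =
          Real.sqrt lamBar := by
        have h6 : lamh m / lamBar - 1 = (lamh m - lamBar) / lamBar := by field_simp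
        rw [h6]
        have hsq : Real.sqrt lamBar * Real.sqrt lamBar = lamBar :=
          Real.mul_self_sqrt hBpos.le
        have hne : lamh m - lamBar ≠ 0 := ne_of_gt (sub_pos.2 hb2)
        field_simp
        rw [Real.sq_sqrt hBpos.le]
      calc Real.sqrt (lam k) ≤ Real.sqrt lamBar := Real.sqrt_le_sqrt h1
        _ = (Real.sqrt lamBar)⁻¹ * (lamh m / lamBar - 1)⁻¹ * (lamh m - lamBar) := haa_eq.symm
        _ ≤ (Real.sqrt lamBar)⁻¹ * (lamh m / lamBar - 1)⁻¹ * (lamh i - lam k) :=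
            mul_le_mul_of_nonneg_left (by linarith) haa_pos.le
        _ ≤ cth * (lamh i - lam k) := mul_le_mul_of_nonneg_right hcth_aa (by linarith)
    · -- M < k
      have h1 : lamUnd ≤ lam k := le_trans hund.2 (hlam_mono hk)
      have h2 : lamh i ≤ lamh M := hlamh_mono i hi M hMD hiD.2
      have h3 : 0 < lamh i := hlamh_pos i hi
      have habs : |lam k - lamh i| = lam k - lamh i := by
        rw [abs_of_nonneg]; linarith
      rw [habs]
      have hs : Real.sqrt (lam k) * Real.sqrt (lam k) = lam k :=
        Real.mul_self_sqrt (hlam_pos k).le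
      have ht : Real.sqrt lamUnd * Real.sqrt lamUnd = lamUnd :=
        Real.mul_self_sqrt hlamUnd_pos.le
      have hst : Real.sqrt lamUnd ≤ Real.sqrt (lam k) := Real.sqrt_le_sqrt h1
      have htpos : 0 < Real.sqrt lamUnd := Real.sqrt_pos.mpr hlamUnd_pos
      have hgoal : Real.sqrt (lam k) * (lamUnd - lamh M) ≤
          Real.sqrt lamUnd * (lam k - lamh i) := by
        have hM0 : 0 < lamh M := hlamh_pos M hMD
        nlinarith [mul_nonneg (sub_nonneg.2 hst)
          (add_nonneg (mul_nonneg (Real.sqrt_nonneg (lam k)) (Real.sqrt_nonneg lamUnd)) hM0.le)]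
      have h4 : 0 < lamUnd - lamh M := sub_pos.2 hund.1
      have h5 : Real.sqrt (lam k) ≤ Real.sqrt lamUnd * (lam k - lamh i) / (lamUnd - lamh M) :=
        (le_div_iff₀ h4).mpr hgoal
      have hbbe : (Real.sqrt lamUnd)⁻¹ * (1 - lamh M / lamUnd)⁻¹ * (lam k - lamh i) =
          Real.sqrt lamUnd * (lam k - lamh i) / (lamUnd - lamh M) := by
        have h6 : (1 - lamh M / lamUnd) = (lamUnd - lamh M) / lamUnd := by
          field_simp
        rw [h6]
        field_simp
        rw [Real.sq_sqrt hlamUnd_pos.le]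
      have h7 : 0 ≤ lam k - lamh i := by linarith
      calc Real.sqrt (lam k) ≤ Real.sqrt lamUnd * (lam k - lamh i) / (lamUnd - lamh M) := h5
        _ = (Real.sqrt lamUnd)⁻¹ * (1 - lamh M / lamUnd)⁻¹ * (lam k - lamh i) := hbbe.symm
        _ ≤ cth * (lam k - lamh i) := mul_le_mul_of_nonneg_right hcth_bb h7
  -- the pointwise pieces
  set S : ℕ → ℝ := fun k => ∑ i ∈ D, ⟪uh i, b k⟫ ^ 2 with hSdef
  set T : ℕ → ℝ := fun k => ∑ i ∈ D, (lam k)⁻¹ * ((lam k - lamh i) ^ 2 * ⟪uh i, b k⟫ ^ 2)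
    with hTdef
  set χ : ℕ → ℝ := fun k => if k ∈ D then 1 else 0 with hχdef
  have hg0' : ∀ k, g0 (b k) = if k ∈ D then b k else 0 := by
    intro k
    rw [hg0]
    simp [orthonormal_iff_ite.mp b.orthonormal, ite_smul, Finset.sum_ite_eq]
  have hinner_gh : ∀ k, ⟪b k, gh (b k)⟫ = S k := by
    intro k
    rw [hgh, inner_sum, hSdef]
    simp only [real_inner_smul_right]
    exact Finset.sum_congr rfl fun i hi => by rw [real_inner_comm (b k) (uh i)]; ring
  have hnorm_gh : ∀ k, ‖gh (b k)‖ ^ 2 = S k := by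
    intro k
    rw [← real_inner_self_eq_norm_sq, hgh, sum_inner, hSdef]
    refine Finset.sum_congr rfl fun i hi => ?_
    rw [real_inner_smul_left, inner_sum]
    simp only [real_inner_smul_right]
    have : ∀ j ∈ D, ⟪b k, uh j⟫ * ⟪uh i, uh j⟫ =
        if i = j then ⟪b k, uh j⟫ else 0 := by
      intro j hj
      rw [huh_orth i hi j hj]
      split <;> simp
    rw [Finset.sum_congr rfl this, Finset.sum_ite_eq, if_pos hi,
      real_inner_comm (b k) (uh i)]
    ring
  have hE : ∀ k, ‖g0 (b k) - gh (b k)‖ ^ 2 = (S k - χ k * S k) + (χ k - χ k * S k) := by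
    intro k
    rw [hg0']
    by_cases hk : k ∈ D
    · rw [if_pos hk]
      have h1 : ‖b k - gh (b k)‖ ^ 2 =
          ‖b k‖ ^ 2 - 2 * ⟪b k, gh (b k)⟫ + ‖gh (b k)‖ ^ 2 := by
        rw [norm_sub_sq_real]
      rw [h1, hinner_gh, hnorm_gh, b.orthonormal.1 k, hχdef]
      simp only [if_pos hk]
      ring
    · rw [if_neg hk, zero_sub, norm_neg, hnorm_gh, hχdef]
      simp only [if_neg hk]
      ring
  -- HasSum computations
  have hHS_S : HasSum S (D.card : ℝ) := by
    have h1 : HasSum (fun k => ∑ i ∈ D, ⟪uh i, b k⟫ ^ 2) (∑ i ∈ D, (1:ℝ)) :=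
      hasSum_sum (fun i hi => hu1 i hi)
    simpa [hSdef] using h1
  have hχS : HasSum (fun k => χ k * S k) (∑ k ∈ D, S k) := by
    have h1 : HasSum (fun k => χ k * S k) (∑ k ∈ D, χ k * S k) :=
      hasSum_sum_of_ne_finset_zero (fun k hk => by simp [hχdef, if_neg hk])
    have h2 : (∑ k ∈ D, χ k * S k) = ∑ k ∈ D, S k :=
      Finset.sum_congr rfl fun k hk => by simp [hχdef, if_pos hk]
    rwa [h2] at h1
  have hχsum : HasSum χ (D.card : ℝ) := by
    have h1 : HasSum χ (∑ k ∈ D, χ k) :=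
      hasSum_sum_of_ne_finset_zero (fun k hk => by simp [hχdef, if_neg hk])
    have h2 : (∑ k ∈ D, χ k) = (D.card : ℝ) := by
      have h3 : ∀ k ∈ D, χ k = 1 := fun k hk => by simp [hχdef, if_pos hk]
      rw [Finset.sum_congr rfl h3]
      simp
    rwa [h2] at h1
  have hR : HasSum (fun k => S k - χ k * S k) ((D.card : ℝ) - ∑ k ∈ D, S k) :=
    hHS_S.sub hχS
  have hC : HasSum (fun k => χ k - χ k * S k) ((D.card : ℝ) - ∑ k ∈ D, S k) :=
    hχsum.sub hχS
  have hEsum : HasSum (fun k => ‖g0 (b k) - gh (b k)‖ ^ 2)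
      (((D.card : ℝ) - ∑ k ∈ D, S k) + ((D.card : ℝ) - ∑ k ∈ D, S k)) := by
    have h1 := hR.add hC
    have hfe : (fun k => ‖g0 (b k) - gh (b k)‖ ^ 2) =
        fun k => (S k - χ k * S k) + (χ k - χ k * S k) := funext hE
    rw [hfe]
    exact h1
  have hL2val : L2sq = 2 * ((D.card : ℝ) - ∑ k ∈ D, S k) := by
    rw [hL2sq, hEsum.tsum_eq]; ring
  -- summability of T
  have hTi : ∀ i ∈ D, Summable (fun k => (lam k)⁻¹ * ((lam k - lamh i) ^ 2 * ⟪uh i, b k⟫ ^ 2)) := by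
    intro i hi
    have hA : Summable (fun k => lam k * ⟪uh i, b k⟫ ^ 2) := hVh_dom _ (huh_mem i hi)
    have hB : Summable (fun k => ⟪uh i, b k⟫ ^ 2) := (hu1 i hi).summable
    have hC' : Summable (fun k => (lam k)⁻¹ * ⟪uh i, b k⟫ ^ 2) := by
      refine Summable.of_nonneg_of_le
        (fun k => mul_nonneg (inv_nonneg.2 (hlam_pos k).le) (sq_nonneg _))
        (fun k => ?_) (hB.mul_left (lam 0)⁻¹)
      have h1 : (lam k)⁻¹ ≤ (lam 0)⁻¹ :=
        inv_anti₀ (hlam_pos 0) (hlam_mono (Nat.zero_le k))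
      exact mul_le_mul_of_nonneg_right h1 (sq_nonneg _)
    have heq : ∀ k, (lam k)⁻¹ * ((lam k - lamh i) ^ 2 * ⟪uh i, b k⟫ ^ 2) =
        lam k * ⟪uh i, b k⟫ ^ 2 - (2 * lamh i) * ⟪uh i, b k⟫ ^ 2
          + (lamh i ^ 2) * ((lam k)⁻¹ * ⟪uh i, b k⟫ ^ 2) := by
      intro k
      have h0 : lam k ≠ 0 := (hlam_pos k).ne'
      field_simp
      ring
    exact ((hA.sub (hB.mul_left _)).add (hC'.mul_left _)).congr (fun k => (heq k).symm)
  have hT_sum : Summable T := by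
    rw [hTdef]
    exact summable_sum (fun i hi => hTi i hi)
  -- pointwise bound
  have hbound : ∀ k, S k - χ k * S k ≤ cth ^ 2 * T k := by
    intro k
    by_cases hk : k ∈ D
    · have h1 : χ k = 1 := by simp [hχdef, if_pos hk]
      rw [h1, one_mul, sub_self]
      have hTk : 0 ≤ T k := by
        rw [hTdef]
        refine Finset.sum_nonneg fun i hi => ?_
        exact mul_nonneg (inv_nonneg.2 (hlam_pos k).le)
          (mul_nonneg (sq_nonneg _) (sq_nonneg _))
      exact mul_nonneg (sq_nonneg _) hTk
    · have h1 : χ k = 0 := by simp [hχdef, if_neg hk]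
      rw [h1, zero_mul, sub_zero, hSdef, hTdef]
      simp only
      rw [Finset.mul_sum]
      refine Finset.sum_le_sum fun i hi => ?_
      have hkey' := hkey k hk i hi
      have hlk := hlam_pos k
      have h2 : (lam k)⁻¹ * lam k = 1 := inv_mul_cancel₀ hlk.ne'
      calc ⟪uh i, b k⟫ ^ 2 = ((lam k)⁻¹ * lam k) * ⟪uh i, b k⟫ ^ 2 := by rw [h2, one_mul]
        _ ≤ ((lam k)⁻¹ * (cth ^ 2 * (lam k - lamh i) ^ 2)) * ⟪uh i, b k⟫ ^ 2 := by
            refine mul_le_mul_of_nonneg_right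
              (mul_le_mul_of_nonneg_left hkey' (inv_nonneg.2 hlk.le)) (sq_nonneg _)
        _ = cth ^ 2 * ((lam k)⁻¹ * ((lam k - lamh i) ^ 2 * ⟪uh i, b k⟫ ^ 2)) := by ring
  -- conclude
  have hN0val : N0sq = ∑' k, T k := by rw [hN0sq, hTdef]
  have hfin : L2sq ≤ 2 * (cth ^ 2 * N0sq) := by
    have h1 : (∑' k, (S k - χ k * S k)) ≤ ∑' k, cth ^ 2 * T k :=
      Summable.tsum_le_tsum hbound hR.summable (hT_sum.mul_left _)
    rw [tsum_mul_left] at h1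
    rw [hL2val, hR.tsum_eq] at *
    rw [hN0val]
    linarith [h1]
  have hL2nonneg : 0 ≤ L2sq := by
    rw [hL2sq]
    exact tsum_nonneg fun k => sq_nonneg _
  calc Real.sqrt L2sq ≤ Real.sqrt (2 * (cth ^ 2 * N0sq)) := Real.sqrt_le_sqrt hfin
    _ = Real.sqrt 2 * cth * Real.sqrt N0sq := by
        rw [Real.sqrt_mul (by norm_num : (0:ℝ) ≤ 2), Real.sqrt_mul (sq_nonneg cth),
          Real.sqrt_sq hcth_pos.le, mul_assoc]
end

section
/- Assume the continuous gap conditions: λ_{m−1} < λ_m if m > 1, and λ_M < λ_{M+1}; assume the continuous–discrete gap conditions, the non-orthogonality condition, and conformity λ_i ≤ λ_{ih} for i = m,…,M; set c̃_h := max[λ̄_{m−1}^{−1/2}(λ_{mh}/λ̄_{m−1} − 1)^{−1}, λ̲_{M+1}^{−1/2}(1 − λ_{Mh}/λ̲_{M+1})^{−1}], the first entry being discarded when m = 1, and η² := (2 c_h² + 2 λ_{Mh} c̃_h⁴ N_0²) N_0². Then the guaranteed bounds 0 ≤ Σ_{i=m}^{M} (λ_{ih} − λ_i) ≤ η² and ‖A^{1/2}(γ⁰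 − γ_h)‖_{S2}² ≤ η² hold (this is the abstract form, with N_0 in place of the computable flux estimator, of the Case I bounds of the paper's guaranteed eigenvalue and density matrix error theorems). -/
open scoped RealInnerProductSpace

set_option maxHeartbeats 1000000

/-- 0-based indexing: Case I guaranteed bounds with
`η² = (2c_h² + 2λ_{Mh} c̃_h⁴ N₀²) N₀²`:
`0 ≤ Σ_i (λ_{ih} − λ_i) ≤ η²` and `‖A^{1/2}(γ⁰ − γ_h)‖_{S2}² ≤ η²`. -/
theorem stmt_18
    {H : Type*} [NormedAddCommGroup H] [InnerProductSpace ℝ H] [CompleteSpace H]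
    (b : HilbertBasis ℕ ℝ H)
    (lam : ℕ → ℝ) (hlam_pos : ∀ k, 0 < lam k) (hlam_mono : Monotone lam)
    (hlam_tendsto : Filter.Tendsto lam Filter.atTop Filter.atTop)
    (m M : ℕ) (hmM : m ≤ M)
    (hgap_low : 0 < m → lam (m - 1) < lam m)
    (hgap_up : lam M < lam (M + 1))
    (Vh : Submodule ℝ H) (hVh_fin : FiniteDimensional ℝ Vh)
    (hVh_dom : ∀ v ∈ Vh, Summable fun k => lam k * ⟪v, b k⟫ ^ 2)
    (uh : ℕ → H) (lamh : ℕ → ℝ)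
    (huh_mem : ∀ i ∈ Finset.Icc m M, uh i ∈ Vh)
    (huh_orth : ∀ i ∈ Finset.Icc m M, ∀ j ∈ Finset.Icc m M,
      ⟪uh i, uh j⟫ = if i = j then 1 else 0)
    (hlamh_mono : ∀ i ∈ Finset.Icc m M, ∀ j ∈ Finset.Icc m M, i ≤ j → lamh i ≤ lamh j)
    (heig_h : ∀ i ∈ Finset.Icc m M, ∀ v ∈ Vh,
      (∑' k, lam k * (⟪uh i, b k⟫ * ⟪v, b k⟫)) = lamh i * ⟪uh i, v⟫)
    (g0 gh : H → H)
    (hg0 : ∀ w, g0 w = ∑ i ∈ Finset.Icc m M, ⟪w, b i⟫ • b i)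
    (hgh : ∀ w, gh w = ∑ i ∈ Finset.Icc m M, ⟪w, uh i⟫ • uh i)
    (hnonorth : ∀ v ∈ Submodule.span ℝ ((fun i => (b i : H)) '' Set.Icc m M),
      v ≠ 0 → gh v ≠ 0)
    (lamBar lamUnd : ℝ)
    (hbar : 0 < m → lam (m - 1) ≤ lamBar ∧ lamBar < lamh m)
    (hund : lamh M < lamUnd ∧ lamUnd ≤ lam (M + 1))
    (hconf : ∀ i ∈ Finset.Icc m M, lam i ≤ lamh i)
    (ch : ℝ)
    (hch : ch = if 0 < m then
        max ((lamh m / lamBar - 1)⁻¹) ((1 - lamh M / lamUnd)⁻¹)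
      else (1 - lamh M / lamUnd)⁻¹)
    (cth : ℝ)
    (hcth : cth = if 0 < m then
        max ((Real.sqrt lamBar)⁻¹ * (lamh m / lamBar - 1)⁻¹)
            ((Real.sqrt lamUnd)⁻¹ * (1 - lamh M / lamUnd)⁻¹)
      else (Real.sqrt lamUnd)⁻¹ * (1 - lamh M / lamUnd)⁻¹)
    (ESq : ℝ)
    (hESq : ESq = ∑' k, ∑' j, lam j * ⟪g0 (b k) - gh (b k), b j⟫ ^ 2)
    (N0sq : ℝ)
    (hN0sq : N0sq = ∑' k, ∑ i ∈ Finset.Icc m M,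
      (lam k)⁻¹ * ((lam k - lamh i) ^ 2 * ⟪uh i, b k⟫ ^ 2))
    (eta2 : ℝ) (heta2 : eta2 = (2 * ch ^ 2 + 2 * lamh M * cth ^ 4 * N0sq) * N0sq) :
    (0 ≤ ∑ i ∈ Finset.Icc m M, (lamh i - lam i)) ∧
    (∑ i ∈ Finset.Icc m M, (lamh i - lam i)) ≤ eta2 ∧
    ESq ≤ eta2 := by
  classical
  set I : Finset ℕ := Finset.Icc m M with hI
  set c : ℕ → ℕ → ℝ := fun i k => ⟪uh i, b k⟫ with hcdef
  have hlam_nonneg : ∀ k, 0 ≤ lam k := fun k => (hlam_pos k).le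
  have hMI : M ∈ I := Finset.mem_Icc.mpr ⟨hmM, le_rfl⟩
  -- summability of energy coefficients
  have hsum1 : ∀ i ∈ I, Summable fun k => lam k * (c i k * c i k) := by
    intro i hi
    have := hVh_dom (uh i) (huh_mem i hi)
    simpa only [pow_two] using this
  have hsum_cc : ∀ i i' : ℕ, Summable fun k => c i k * c i' k := by
    intro i i'
    have h := HilbertBasis.summable_inner_mul_inner b (uh i) (uh i')
    refine h.congr fun k => ?_
    simp [hcdef, real_inner_comm]
  have htsum_cc : ∀ i i', (∑' k, c i k * c i' k) = ⟪uh i, uh i'⟫ := by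
    intro i i'
    have h := HilbertBasis.tsum_inner_mul_inner b (uh i) (uh i')
    rw [← h]
    refine tsum_congr fun k => ?_
    simp [hcdef, real_inner_comm]
  -- discrete eigenvalue identity
  have hlamh_eq : ∀ i ∈ I, lamh i = ∑' k, lam k * (c i k * c i k) := by
    intro i hi
    have h := heig_h i hi (uh i) (huh_mem i hi)
    have h1 : ⟪uh i, uh i⟫ = (1 : ℝ) := by simpa using huh_orth i hi i hi
    rw [h1, mul_one] at h
    exact h.symm
  have hlamh_nonneg : ∀ i ∈ I, 0 ≤ lamh i := by
    intro i hi
    rw [hlamh_eq i hi]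
    exact tsum_nonneg fun k => mul_nonneg (hlam_nonneg k) (mul_self_nonneg _)
  -- summability of weighted cross sums
  have hsumA : ∀ i ∈ I, ∀ i' ∈ I, Summable fun j => lam j * (c i j * c i' j) := by
    intro i hi i' hi'
    refine Summable.of_abs ?_
    refine Summable.of_nonneg_of_le (fun j => abs_nonneg _)
      (fun j => ?_)
      (((hsum1 i hi).add (hsum1 i' hi')).div_const 2)
    have h1 : |lam j * (c i j * c i' j)| = lam j * |c i j * c i' j| := by
      rw [abs_mul, abs_of_nonneg (hlam_nonneg j)]
    rw [h1]
    have h2 : |c i j * c i' j| ≤ (c i j * c i j + c i' j * c i' j) / 2 := by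
      rw [abs_mul]
      nlinarith [sq_nonneg (|c i j| - |c i' j|), sq_abs (c i j), sq_abs (c i' j)]
    calc lam j * |c i j * c i' j|
        ≤ lam j * ((c i j * c i j + c i' j * c i' j) / 2) :=
          mul_le_mul_of_nonneg_left h2 (hlam_nonneg j)
      _ = (lam j * (c i j * c i j) + lam j * (c i' j * c i' j)) / 2 := by ring
  -- the coordinate of the density-matrix difference
  have hcoord : ∀ k j : ℕ, ⟪g0 (b k) - gh (b k), b j⟫
      = (if k ∈ I then (if j = k then (1:ℝ) else 0) else 0) - ∑ i ∈ I, c i k * c i j := by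
    intro k j
    rw [inner_sub_left, hg0, hgh, sum_inner, sum_inner]
    have hbb : ∀ i j : ℕ, ⟪(b i : H), b j⟫ = if i = j then (1:ℝ) else 0 :=
      fun i j => orthonormal_iff_ite.mp b.orthonormal i j
    have e1 : ∑ i ∈ I, ⟪(⟪(b k : H), b i⟫ : ℝ) • (b i : H), b j⟫
        = (if k ∈ I then (if j = k then (1:ℝ) else 0) else 0) := by
      have : ∀ i ∈ I, ⟪(⟪(b k : H), b i⟫ : ℝ) • (b i : H), b j⟫
          = (if i = k then (if j = k then (1:ℝ) else 0) else 0) := by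
        intro i _
        rw [real_inner_smul_left, hbb k i, hbb i j]
        by_cases h1 : i = k
        · subst h1
          by_cases h2 : j = i <;> simp [h2, eq_comm]
        · simp [Ne.symm h1, h1]
      rw [Finset.sum_congr rfl this, Finset.sum_ite_eq' I k]
    have e2 : ∑ i ∈ I, ⟪(⟪(b k : H), uh i⟫ : ℝ) • uh i, b j⟫ = ∑ i ∈ I, c i k * c i j := by
      refine Finset.sum_congr rfl fun i _ => ?_
      rw [real_inner_smul_left]
      simp [hcdef, real_inner_comm]
    rw [e1, e2]
  -- inner tsum evaluation
  set A : ℕ → ℕ → ℝ := fun i i' => ∑' j, lam j * (c i j * c i' j) with hAdef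
  have hinner : ∀ k : ℕ, (∑' j, lam j * ⟪g0 (b k) - gh (b k), b j⟫ ^ 2)
      = (if k ∈ I then lam k - 2 * (lam k * ∑ i ∈ I, c i k * c i k) else 0)
        + ∑ i ∈ I, ∑ i' ∈ I, (c i k * c i' k) * A i i' := by
    intro k
    set S : ℕ → ℝ := fun j => ∑ i ∈ I, c i k * c i j with hSdef
    set p : ℕ → ℝ := fun j => if j = k then
        (if k ∈ I then lam k - 2 * (lam k * S k) else 0) else 0 with hpdef
    set q : ℕ → ℝ := fun j => ∑ i ∈ I, ∑ i' ∈ I, (c i k * c i' k) * (lam j * (c i j * c i' j))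
      with hqdef
    have hq_sum : Summable q := by
      refine summable_sum fun i hi => summable_sum fun i' hi' => ?_
      exact (hsumA i hi i' hi').mul_left _
    have hp_sum : Summable p := by
      refine summable_of_ne_finset_zero (s := {k}) fun j hj => ?_
      simp only [Finset.mem_singleton] at hj
      simp [hpdef, hj]
    have hsplit : ∀ j, lam j * ⟪g0 (b k) - gh (b k), b j⟫ ^ 2 = p j + q j := by
      intro j
      rw [hcoord k j]
      have hq : q j = lam j * (S j)^2 := by
        simp only [hqdef, hSdef]
        rw [pow_two, Finset.sum_mul_sum, Finset.mul_sum]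
        refine Finset.sum_congr rfl fun i _ => ?_
        rw [Finset.mul_sum]
        exact Finset.sum_congr rfl fun i' _ => by ring
      rw [hq]
      by_cases hkI : k ∈ I
      · by_cases hjk : j = k
        · subst hjk
          simp only [hpdef, hkI, if_true, hSdef]
          ring
        · simp only [hpdef, hjk, if_false, hkI, if_true]
          ring
      · simp only [hpdef, hkI, if_false, ite_self]
        ring
    calc (∑' j, lam j * ⟪g0 (b k) - gh (b k), b j⟫ ^ 2) = ∑' j, (p j + q j) :=
          tsum_congr hsplit
      _ = (∑' j, p j) + ∑' j, q j := Summable.tsum_add hp_sum hq_sum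
      _ = (if k ∈ I then lam k - 2 * (lam k * ∑ i ∈ I, c i k * c i k) else 0)
          + ∑ i ∈ I, ∑ i' ∈ I, (c i k * c i' k) * A i i' := by
          congr 1
          · rw [hpdef]
            rw [tsum_ite_eq k]
          · rw [hqdef]
            rw [Summable.tsum_finsetSum fun i hi => summable_sum fun i' hi' => (hsumA i hi i' hi').mul_left _]
            refine Finset.sum_congr rfl fun i hi => ?_
            rw [Summable.tsum_finsetSum fun i' hi' => (hsumA i hi i' hi').mul_left _]
            refine Finset.sum_congr rfl fun i' hi' => ?_
            rw [tsum_mul_left, hAdef]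

  -- outer tsum evaluation
  set wv : ℕ → ℝ := fun k => ∑ i ∈ I, ∑ i' ∈ I, (c i k * c i' k) * A i i' with hwdef
  set pv : ℕ → ℝ := fun k =>
    if k ∈ I then lam k - 2 * (lam k * ∑ i ∈ I, c i k * c i k) else 0 with hpvdef
  have hw_sum : Summable wv := by
    refine summable_sum fun i hi => summable_sum fun i' hi' => ?_
    exact (hsum_cc i i').mul_right _
  have hpv_sum : Summable pv := by
    refine summable_of_ne_finset_zero (s := I) fun k hk => ?_
    simp [hpvdef, hk]
  have htw : ∑' k, wv k = ∑ i ∈ I, lamh i := by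
    rw [hwdef]
    rw [Summable.tsum_finsetSum fun i hi => summable_sum fun i' hi' => (hsum_cc i i').mul_right _]
    refine Finset.sum_congr rfl fun i hi => ?_
    rw [Summable.tsum_finsetSum fun i' hi' => (hsum_cc i i').mul_right _]
    have h1 : ∀ i' ∈ I, (∑' k, (c i k * c i' k) * A i i')
        = (if i' = i then A i i' else 0) := by
      intro i' hi'
      rw [tsum_mul_right, htsum_cc, huh_orth i hi i' hi']
      by_cases h : i = i'
      · subst h; simp
      · simp [h, Ne.symm h]
    rw [Finset.sum_congr rfl h1, Finset.sum_ite_eq' I i, if_pos hi]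
    exact (hlamh_eq i hi).symm
  have hESq_eq : ESq = (∑ k ∈ I, (lam k - 2 * (lam k * ∑ i ∈ I, c i k * c i k)))
      + ∑ i ∈ I, lamh i := by
    rw [hESq]
    calc (∑' k, ∑' j, lam j * ⟪g0 (b k) - gh (b k), b j⟫ ^ 2)
        = ∑' k, (pv k + wv k) := tsum_congr fun k => hinner k
      _ = (∑' k, pv k) + ∑' k, wv k := Summable.tsum_add hpv_sum hw_sum
      _ = (∑ k ∈ I, (lam k - 2 * (lam k * ∑ i ∈ I, c i k * c i k))) + ∑ i ∈ I, lamh i := by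
          rw [htw]
          congr 1
          rw [tsum_eq_sum (s := I) (fun k hk => by simp [hpvdef, hk])]
          exact Finset.sum_congr rfl fun k hk => by simp [hpvdef, hk]
  -- outside-cluster energy
  set F : ℕ → ℝ := fun i => ∑ k ∈ I, lam k * (c i k * c i k) with hFdef
  have hswap : ∑ k ∈ I, (lam k * ∑ i ∈ I, c i k * c i k) = ∑ i ∈ I, F i := by
    rw [hFdef]
    calc ∑ k ∈ I, (lam k * ∑ i ∈ I, c i k * c i k)
        = ∑ k ∈ I, ∑ i ∈ I, lam k * (c i k * c i k) :=
          Finset.sum_congr rfl fun k _ => Finset.mul_sum _ _ _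
      _ = ∑ i ∈ I, ∑ k ∈ I, lam k * (c i k * c i k) := Finset.sum_comm
  have hg_sum : ∀ i ∈ I, Summable fun k => (if k ∈ I then 0 else lam k * (c i k * c i k)) := by
    intro i hi
    refine Summable.of_nonneg_of_le (fun k => ?_) (fun k => ?_) (hsum1 i hi)
    · by_cases h : k ∈ I
      · simp [h]
      · simp only [h, if_false]
        exact mul_nonneg (hlam_nonneg k) (mul_self_nonneg _)
    · by_cases h : k ∈ I
      · simp only [h, if_true]
        exact mul_nonneg (hlam_nonneg k) (mul_self_nonneg _)
      · simp [h]
  have hT_eq : ∀ i ∈ I, lamh i - F i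
      = ∑' k, (if k ∈ I then 0 else lam k * (c i k * c i k)) := by
    intro i hi
    have h1 : ∀ k, lam k * (c i k * c i k)
        = (if k ∈ I then 0 else lam k * (c i k * c i k))
          + (if k ∈ I then lam k * (c i k * c i k) else 0) := by
      intro k; by_cases h : k ∈ I <;> simp [h]
    have h2 : (∑' k, lam k * (c i k * c i k))
        = (∑' k, (if k ∈ I then 0 else lam k * (c i k * c i k))) + F i := by
      rw [tsum_congr h1,
        Summable.tsum_add (hg_sum i hi) (summable_of_ne_finset_zero (s := I) fun k hk => if_neg hk),
        tsum_eq_sum (s := I) (fun k hk => if_neg hk)]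
      congr 1
      rw [hFdef]
      exact Finset.sum_congr rfl fun k hk => if_pos hk
    rw [hlamh_eq i hi, h2]
    ring
  -- the gap-constant key inequality
  have hU0 : 0 < lamUnd := lt_of_le_of_lt (hlamh_nonneg M hMI) hund.1
  have hs0 : (0:ℝ) < 1 - lamh M / lamUnd := by
    have : lamh M / lamUnd < 1 := (div_lt_one hU0).mpr hund.1
    linarith
  have hchs : (1 - lamh M / lamUnd)⁻¹ ≤ ch := by
    rw [hch]
    by_cases hm0 : 0 < m
    · rw [if_pos hm0]; exact le_max_right _ _
    · rw [if_neg hm0]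

  have hch_nonneg : 0 ≤ ch := le_trans (inv_nonneg.mpr hs0.le) hchs
  have hkey : ∀ i ∈ I, ∀ k, k ∉ I → lam k ^ 2 ≤ ch ^ 2 * (lam k - lamh i) ^ 2 := by
    intro i hi k hk
    have hiI := Finset.mem_Icc.mp hi
    have hlamhi0 : 0 ≤ lamh i := hlamh_nonneg i hi
    have hiM : lamh i ≤ lamh M := hlamh_mono i hi M hMI hiI.2
    have hmi : lamh m ≤ lamh i := hlamh_mono m (Finset.mem_Icc.mpr ⟨le_rfl, hmM⟩) i hi hiI.1
    rw [hI, Finset.mem_Icc, not_and_or, not_le, not_le] at hk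
    rcases hk with hk | hk
    · -- k < m : below the cluster
      have hm0 : 0 < m := lt_of_le_of_lt (Nat.zero_le k) hk
      obtain ⟨hb1, hb2⟩ := hbar hm0
      have hB0 : 0 < lamBar := lt_of_lt_of_le (hlam_pos (m - 1)) hb1
      have hkB : lam k ≤ lamBar := le_trans (hlam_mono (Nat.le_sub_one_of_lt hk)) hb1
      have ht0 : (0:ℝ) < lamh m / lamBar - 1 := by
        have : (1:ℝ) < lamh m / lamBar := (one_lt_div hB0).mpr hb2
        linarith
      have hcht : (lamh m / lamBar - 1)⁻¹ ≤ ch := by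
        rw [hch, if_pos hm0]; exact le_max_left _ _
      have h2 : lamh m / lamBar * lam k ≤ lamh i := by
        rw [div_mul_eq_mul_div, div_le_iff₀ hB0]
        exact mul_le_mul hmi hkB (hlam_nonneg k) hlamhi0
      have h1 : (lamh m / lamBar - 1) * lam k ≤ lamh i - lam k := by
        rw [sub_mul, one_mul]; linarith
      have h3 : lam k ≤ (lamh m / lamBar - 1)⁻¹ * (lamh i - lam k) := by
        calc lam k = (lamh m / lamBar - 1)⁻¹ * ((lamh m / lamBar - 1) * lam k) :=
              (inv_mul_cancel_left₀ ht0.ne' _).symm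
          _ ≤ (lamh m / lamBar - 1)⁻¹ * (lamh i - lam k) :=
              mul_le_mul_of_nonneg_left h1 (inv_nonneg.mpr ht0.le)
      have h4 : lam k ^ 2 ≤ ((lamh m / lamBar - 1)⁻¹ * (lamh i - lam k)) ^ 2 :=
        pow_le_pow_left₀ (hlam_nonneg k) h3 2
      have h5 : ((lamh m / lamBar - 1)⁻¹) ^ 2 ≤ ch ^ 2 :=
        pow_le_pow_left₀ (inv_nonneg.mpr ht0.le) hcht 2
      calc lam k ^ 2 ≤ ((lamh m / lamBar - 1)⁻¹ * (lamh i - lam k)) ^ 2 := h4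
        _ = ((lamh m / lamBar - 1)⁻¹) ^ 2 * (lam k - lamh i) ^ 2 := by ring
        _ ≤ ch ^ 2 * (lam k - lamh i) ^ 2 :=
            mul_le_mul_of_nonneg_right h5 (sq_nonneg _)
    · -- k > M : above the cluster
      have hkU : lamUnd ≤ lam k := le_trans hund.2 (hlam_mono hk)
      have h2 : lamh i ≤ lamh M / lamUnd * lam k := by
        have h2a : lamh M / lamUnd * lamUnd ≤ lamh M / lamUnd * lam k :=
          mul_le_mul_of_nonneg_left hkU (div_nonneg (hlamh_nonneg M hMI) hU0.le)
        rw [div_mul_cancel₀ _ hU0.ne'] at h2a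
        linarith
      have h1 : (1 - lamh M / lamUnd) * lam k ≤ lam k - lamh i := by
        rw [sub_mul, one_mul]; linarith
      have h3 : lam k ≤ (1 - lamh M / lamUnd)⁻¹ * (lam k - lamh i) := by
        calc lam k = (1 - lamh M / lamUnd)⁻¹ * ((1 - lamh M / lamUnd) * lam k) :=
              (inv_mul_cancel_left₀ hs0.ne' _).symm
          _ ≤ (1 - lamh M / lamUnd)⁻¹ * (lam k - lamh i) :=
              mul_le_mul_of_nonneg_left h1 (inv_nonneg.mpr hs0.le)
      have h4 : lam k ^ 2 ≤ ((1 - lamh M / lamUnd)⁻¹ * (lam k - lamh i)) ^ 2 :=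
        pow_le_pow_left₀ (hlam_nonneg k) h3 2
      have h5 : ((1 - lamh M / lamUnd)⁻¹) ^ 2 ≤ ch ^ 2 :=
        pow_le_pow_left₀ (inv_nonneg.mpr hs0.le) hchs 2
      calc lam k ^ 2 ≤ ((1 - lamh M / lamUnd)⁻¹ * (lam k - lamh i)) ^ 2 := h4
        _ = ((1 - lamh M / lamUnd)⁻¹) ^ 2 * (lam k - lamh i) ^ 2 := by ring
        _ ≤ ch ^ 2 * (lam k - lamh i) ^ 2 :=
            mul_le_mul_of_nonneg_right h5 (sq_nonneg _)
  -- pointwise comparison with the residual terms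
  have hgh_le : ∀ i ∈ I, ∀ k, (if k ∈ I then 0 else lam k * (c i k * c i k))
      ≤ ch ^ 2 * ((lam k)⁻¹ * ((lam k - lamh i) ^ 2 * c i k ^ 2)) := by
    intro i hi k
    have hh0 : 0 ≤ (lam k)⁻¹ * ((lam k - lamh i) ^ 2 * c i k ^ 2) :=
      mul_nonneg (inv_nonneg.mpr (hlam_nonneg k))
        (mul_nonneg (sq_nonneg _) (sq_nonneg _))
    by_cases h : k ∈ I
    · simp only [h, if_true]
      exact mul_nonneg (sq_nonneg ch) hh0
    · simp only [h, if_false]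
      have hkne : lam k ≠ 0 := (hlam_pos k).ne'
      have h5 := mul_le_mul_of_nonneg_right (hkey i hi k h)
        (mul_nonneg (inv_nonneg.mpr (hlam_nonneg k)) (sq_nonneg (c i k)))
      calc lam k * (c i k * c i k)
          = lam k ^ 2 * ((lam k)⁻¹ * c i k ^ 2) := by field_simp
        _ ≤ (ch ^ 2 * (lam k - lamh i) ^ 2) * ((lam k)⁻¹ * c i k ^ 2) := h5
        _ = ch ^ 2 * ((lam k)⁻¹ * ((lam k - lamh i) ^ 2 * c i k ^ 2)) := by ring
  -- summability of the residual terms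
  have hh_sum : ∀ i ∈ I, Summable fun k => (lam k)⁻¹ * ((lam k - lamh i) ^ 2 * c i k ^ 2) := by
    intro i hi
    have hc2 : Summable fun k => c i k ^ 2 := by
      refine Summable.of_nonneg_of_le (fun k => sq_nonneg _) (fun k => ?_)
        ((hsum1 i hi).mul_left (lam 0)⁻¹)
      have h01 : (1:ℝ) ≤ (lam 0)⁻¹ * lam k := by
        calc (1:ℝ) = (lam 0)⁻¹ * lam 0 := (inv_mul_cancel₀ (hlam_pos 0).ne').symm
          _ ≤ (lam 0)⁻¹ * lam k :=
              mul_le_mul_of_nonneg_left (hlam_mono (Nat.zero_le k))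
                (inv_nonneg.mpr (hlam_nonneg 0))
      calc c i k ^ 2 = 1 * c i k ^ 2 := (one_mul _).symm
        _ ≤ ((lam 0)⁻¹ * lam k) * c i k ^ 2 :=
            mul_le_mul_of_nonneg_right h01 (sq_nonneg _)
        _ = (lam 0)⁻¹ * (lam k * (c i k * c i k)) := by ring
    have hinv : Summable fun k => (lam k)⁻¹ * c i k ^ 2 := by
      refine Summable.of_nonneg_of_le
        (fun k => mul_nonneg (inv_nonneg.mpr (hlam_nonneg k)) (sq_nonneg _))
        (fun k => ?_) (hc2.mul_left (lam 0)⁻¹)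
      refine mul_le_mul_of_nonneg_right ?_ (sq_nonneg _)
      exact inv_anti₀ (hlam_pos 0) (hlam_mono (Nat.zero_le k))
    have hcomb : Summable fun k =>
        (lam k * (c i k * c i k) - 2 * lamh i * c i k ^ 2)
          + lamh i ^ 2 * ((lam k)⁻¹ * c i k ^ 2) :=
      ((hsum1 i hi).sub (hc2.mul_left _)).add (hinv.mul_left _)
    refine hcomb.congr fun k => ?_
    have hkne : lam k ≠ 0 := (hlam_pos k).ne'
    field_simp
    ring
  have hTle : ∀ i ∈ I, lamh i - F i
      ≤ ch ^ 2 * ∑' k, (lam k)⁻¹ * ((lam k - lamh i) ^ 2 * c i k ^ 2) := by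
    intro i hi
    rw [hT_eq i hi, ← tsum_mul_left]
    exact Summable.tsum_le_tsum (hgh_le i hi) (hg_sum i hi) ((hh_sum i hi).mul_left _)
  have hN0 : N0sq = ∑ i ∈ I, ∑' k, (lam k)⁻¹ * ((lam k - lamh i) ^ 2 * c i k ^ 2) := by
    rw [hN0sq]
    exact Summable.tsum_finsetSum fun i hi => hh_sum i hi
  have hsumT : ∑ i ∈ I, (lamh i - F i) ≤ ch ^ 2 * N0sq := by
    rw [hN0, Finset.mul_sum]
    exact Finset.sum_le_sum fun i hi => hTle i hi
  -- nonnegativity facts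
  have hN0nn : 0 ≤ N0sq := by
    rw [hN0sq]
    refine tsum_nonneg fun k => Finset.sum_nonneg fun i _ => ?_
    exact mul_nonneg (inv_nonneg.mpr (hlam_nonneg k))
      (mul_nonneg (sq_nonneg _) (sq_nonneg _))
  have hESqnn : 0 ≤ ESq := by
    rw [hESq]
    exact tsum_nonneg fun k => tsum_nonneg fun j =>
      mul_nonneg (hlam_nonneg j) (sq_nonneg _)
  -- final identity and assembly
  have hfinal : ESq = 2 * (∑ i ∈ I, (lamh i - F i)) - ∑ i ∈ I, (lamh i - lam i) := by
    rw [hESq_eq, Finset.sum_sub_distrib, ← Finset.mul_sum, hswap,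
      Finset.sum_sub_distrib (f := lamh) (g := lam),
      Finset.sum_sub_distrib (f := lamh) (g := F)]
    ring
  have hD0 : 0 ≤ ∑ i ∈ I, (lamh i - lam i) :=
    Finset.sum_nonneg fun i hi => sub_nonneg.mpr (hconf i hi)
  have heta : 2 * (ch ^ 2 * N0sq) ≤ eta2 := by
    have h1 : 0 ≤ 2 * lamh M * cth ^ 4 * N0sq * N0sq :=
      mul_nonneg (mul_nonneg (mul_nonneg
        (mul_nonneg (by norm_num) (hlamh_nonneg M hMI)) (by positivity)) hN0nn) hN0nn
    rw [heta2]
    nlinarith [h1]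
  refine ⟨hD0, ?_, ?_⟩
  · linarith [hsumT, hESqnn, heta, hfinal]
  · linarith [hsumT, hD0, heta, hfinal]
end

section
/- Assume the continuous gap conditions: λ_{m−1} < λ_m if m > 1, and λ_M < λ_{M+1}; assume the continuous–discrete gap conditions and conformity λ_i ≤ λ_{ih} for i = m,…,M, and suppose there is a constant C ≥ 0 with N_{−1/2} ≤ C · N_0 (a smoothing property of the residual; e.g. C = C_I C_S h^δ under elliptic regularity for finite elements, or C = L/(2πN) for planewave discretizations of periodic Schrödinger operators). Set η² := (1 + 4 λ_{Mh} c_h² C²) N_0². Then the guaranteed bounds 0 ≤ Σ_{i=m}^{M} (λ_{ih} − λ_i) ≤ η², ‖A^{1/2}(γ⁰ − γ_h)‖_{S2}² ≤ η², and ‖γ⁰ − γ_h‖_{S2} ≤ √2 · c_h · C · N_0 hold (this is the abstract form of the paper's Case II guaranteed bounds and of the planewave theorems). -/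
open scoped RealInnerProductSpace

private lemma sum_sq_helper (s : Finset ℕ) (a p : ℕ → ℝ) (r : ℝ) :
    ∑ i ∈ s, ∑ i' ∈ s, a i * a i' * (r * (p i * p i')) = r * (∑ i ∈ s, a i * p i) ^ 2 := by
  rw [sq, Finset.sum_mul_sum, Finset.mul_sum]
  refine Finset.sum_congr rfl fun i _ => ?_
  rw [Finset.mul_sum]
  exact Finset.sum_congr rfl fun i' _ => by ring

private lemma abs_mul_le_half (a c : ℝ) : |a * c| ≤ (a ^ 2 + c ^ 2) / 2 := by
  rw [abs_le]
  constructor <;> nlinarith [sq_nonneg (a + c), sq_nonneg (a - c)]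

private lemma summable_ite_mem {f : ℕ → ℝ} (hf : Summable f) (s : Finset ℕ) :
    Summable (fun k => if k ∈ s then f k else 0) := by
  have h := hf.indicator (↑s : Set ℕ)
  refine h.congr fun k => ?_
  by_cases hk : k ∈ s <;> simp [Set.indicator_apply, hk]

private lemma summable_ite_notMem {f : ℕ → ℝ} (hf : Summable f) (s : Finset ℕ) :
    Summable (fun k => if k ∈ s then 0 else f k) := by
  have h := hf.indicator ((↑s : Set ℕ)ᶜ)
  refine h.congr fun k => ?_
  by_cases hk : k ∈ s <;> simp [Set.indicator_apply, hk]

private lemma tsum_split_mem {f : ℕ → ℝ} (hf : Summable f) (s : Finset ℕ) :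
    ∑' k, f k = (∑ k ∈ s, f k) + ∑' k, (if k ∈ s then 0 else f k) := by
  have h1 : ∑' k, f k =
      (∑' k, (if k ∈ s then f k else 0)) + ∑' k, (if k ∈ s then 0 else f k) := by
    rw [← Summable.tsum_add (summable_ite_mem hf s) (summable_ite_notMem hf s)]
    refine tsum_congr fun k => ?_
    by_cases hk : k ∈ s <;> simp [hk]
  rw [h1, tsum_eq_sum (s := s) (fun k hk => by simp [hk])]
  congr 1
  exact Finset.sum_congr rfl fun k hk => by simp [hk]

private lemma inv_bound_helper {a x y z : ℝ} (ha : 0 < a) (h : a * x ≤ y + a * z) :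
    x ≤ a⁻¹ * y + z := by
  have h3 : a⁻¹ * (a * x) ≤ a⁻¹ * (y + a * z) :=
    mul_le_mul_of_nonneg_left h (inv_nonneg.2 ha.le)
  have h4 : a⁻¹ * (a * x) = x := by field_simp
  have h5 : a⁻¹ * (y + a * z) = a⁻¹ * y + z := by
    rw [mul_add, ← mul_assoc, inv_mul_cancel₀ ha.ne', one_mul]
  linarith [h4 ▸ h5 ▸ h3]

set_option maxHeartbeats 1600000 in
/-- 0-based indexing: Case II / planewave guaranteed bounds. Under the
smoothing property `N_{−1/2} ≤ C·N₀`, with `η² = (1 + 4λ_{Mh} c_h² C²) N₀²`: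
`0 ≤ Σ_i (λ_{ih} − λ_i) ≤ η²`, `‖A^{1/2}(γ⁰ − γ_h)‖_{S2}² ≤ η²`, and
`‖γ⁰ − γ_h‖_{S2} ≤ √2 c_h C N₀`. -/
theorem stmt_19
    {H : Type*} [NormedAddCommGroup H] [InnerProductSpace ℝ H] [CompleteSpace H]
    (b : HilbertBasis ℕ ℝ H)
    (lam : ℕ → ℝ) (hlam_pos : ∀ k, 0 < lam k) (hlam_mono : Monotone lam)
    (hlam_tendsto : Filter.Tendsto lam Filter.atTop Filter.atTop)
    (m M : ℕ) (hmM : m ≤ M)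
    (hgap_low : 0 < m → lam (m - 1) < lam m)
    (hgap_up : lam M < lam (M + 1))
    (Vh : Submodule ℝ H) (hVh_fin : FiniteDimensional ℝ Vh)
    (hVh_dom : ∀ v ∈ Vh, Summable fun k => lam k * ⟪v, b k⟫ ^ 2)
    (uh : ℕ → H) (lamh : ℕ → ℝ)
    (huh_mem : ∀ i ∈ Finset.Icc m M, uh i ∈ Vh)
    (huh_orth : ∀ i ∈ Finset.Icc m M, ∀ j ∈ Finset.Icc m M,
      ⟪uh i, uh j⟫ = if i = j then 1 else 0)
    (hlamh_mono : ∀ i ∈ Finset.Icc m M, ∀ j ∈ Finset.Icc m M, i ≤ j → lamh i ≤ lamh j)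
    (heig_h : ∀ i ∈ Finset.Icc m M, ∀ v ∈ Vh,
      (∑' k, lam k * (⟪uh i, b k⟫ * ⟪v, b k⟫)) = lamh i * ⟪uh i, v⟫)
    (g0 gh : H → H)
    (hg0 : ∀ w, g0 w = ∑ i ∈ Finset.Icc m M, ⟪w, b i⟫ • b i)
    (hgh : ∀ w, gh w = ∑ i ∈ Finset.Icc m M, ⟪w, uh i⟫ • uh i)
    (lamBar lamUnd : ℝ)
    (hbar : 0 < m → lam (m - 1) ≤ lamBar ∧ lamBar < lamh m)
    (hund : lamh M < lamUnd ∧ lamUnd ≤ lam (M + 1))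
    (hconf : ∀ i ∈ Finset.Icc m M, lam i ≤ lamh i)
    (ch : ℝ)
    (hch : ch = if 0 < m then
        max ((lamh m / lamBar - 1)⁻¹) ((1 - lamh M / lamUnd)⁻¹)
      else (1 - lamh M / lamUnd)⁻¹)
    (ESq : ℝ)
    (hESq : ESq = ∑' k, ∑' j, lam j * ⟪g0 (b k) - gh (b k), b j⟫ ^ 2)
    (L2sq : ℝ) (hL2sq : L2sq = ∑' k, ‖g0 (b k) - gh (b k)‖ ^ 2)
    (N0sq : ℝ)
    (hN0sq : N0sq = ∑' k, ∑ i ∈ Finset.Icc m M,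
      (lam k)⁻¹ * ((lam k - lamh i) ^ 2 * ⟪uh i, b k⟫ ^ 2))
    (Nm12sq : ℝ)
    (hNm12sq : Nm12sq = ∑' k, ∑ i ∈ Finset.Icc m M,
      ((lam k) ^ 2)⁻¹ * ((lam k - lamh i) ^ 2 * ⟪uh i, b k⟫ ^ 2))
    (C : ℝ) (hC : 0 ≤ C) (hsmooth : Real.sqrt Nm12sq ≤ C * Real.sqrt N0sq)
    (eta2 : ℝ) (heta2 : eta2 = (1 + 4 * lamh M * ch ^ 2 * C ^ 2) * N0sq) :
    (0 ≤ ∑ i ∈ Finset.Icc m M, (lamh i - lam i)) ∧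
    (∑ i ∈ Finset.Icc m M, (lamh i - lam i)) ≤ eta2 ∧
    ESq ≤ eta2 ∧
    Real.sqrt L2sq ≤ Real.sqrt 2 * ch * C * Real.sqrt N0sq := by
  classical
  set I := Finset.Icc m M with hI
  have hM_mem : M ∈ I := Finset.mem_Icc.2 ⟨hmM, le_rfl⟩
  have hlamhM_pos : 0 < lamh M := lt_of_lt_of_le (hlam_pos M) (hconf M hM_mem)
  -- Parseval as HasSum
  have hPar : ∀ x y : H, HasSum (fun k => ⟪x, b k⟫ * ⟪y, b k⟫) ⟪x, y⟫ := by
    intro x y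
    have h := b.hasSum_inner_mul_inner x y
    refine h.congr_fun fun k => ?_
    rw [real_inner_comm (b k) y]
  -- orthonormality of the basis
  have horth : ∀ i j, ⟪b i, b j⟫ = if i = j then (1:ℝ) else 0 :=
    orthonormal_iff_ite.mp b.orthonormal
  have hbnorm : ∀ k, ‖b k‖ ^ 2 = 1 := by
    intro k
    rw [← real_inner_self_eq_norm_sq, horth, if_pos rfl]
  -- coefficient summabilities
  have hsum_cc : ∀ x y : H, Summable (fun k => ⟪x, b k⟫ * ⟪y, b k⟫) :=
    fun x y => (hPar x y).summable
  have hsum_lam_sq : ∀ i ∈ I, Summable (fun k => lam k * ⟪uh i, b k⟫ ^ 2) := by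
    intro i hi
    exact hVh_dom (uh i) (huh_mem i hi)
  have hsum_lam_prod : ∀ i ∈ I, ∀ j ∈ I,
      Summable (fun k => lam k * (⟪uh i, b k⟫ * ⟪uh j, b k⟫)) := by
    intro i hi j hj
    apply Summable.of_abs
    refine Summable.of_nonneg_of_le (fun k => abs_nonneg _) (fun k => ?_)
      (((hsum_lam_sq i hi).add (hsum_lam_sq j hj)).div_const 2)
    rw [abs_mul, abs_of_pos (hlam_pos k)]
    calc lam k * |⟪uh i, b k⟫ * ⟪uh j, b k⟫|
        ≤ lam k * ((⟪uh i, b k⟫ ^ 2 + ⟪uh j, b k⟫ ^ 2) / 2) :=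
          mul_le_mul_of_nonneg_left (abs_mul_le_half _ _) (hlam_pos k).le
      _ = (lam k * ⟪uh i, b k⟫ ^ 2 + lam k * ⟪uh j, b k⟫ ^ 2) / 2 := by ring
  have hsum_sq : ∀ i, Summable (fun k => ⟪uh i, b k⟫ ^ 2) := by
    intro i
    refine (hsum_cc (uh i) (uh i)).congr fun k => ?_
    rw [sq]
  -- eigen relations in coordinates
  have heig : ∀ i ∈ I, ∀ j ∈ I,
      (∑' k, lam k * (⟪uh i, b k⟫ * ⟪uh j, b k⟫)) = lamh i * (if i = j then 1 else 0) := by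
    intro i hi j hj
    rw [heig_h i hi (uh j) (huh_mem j hj), huh_orth i hi j hj]
  have heig_diag : ∀ i ∈ I, (∑' k, lam k * ⟪uh i, b k⟫ ^ 2) = lamh i := by
    intro i hi
    have h := heig i hi i hi
    rw [if_pos rfl, mul_one] at h
    rw [← h]
    exact tsum_congr fun k => by rw [sq]
  have hpar_diag : ∀ i ∈ I, (∑' k, ⟪uh i, b k⟫ ^ 2) = 1 := by
    intro i hi
    have h := (hPar (uh i) (uh i)).tsum_eq
    rw [huh_orth i hi i hi, if_pos rfl] at h
    have h2 : (∑' k, ⟪uh i, b k⟫ ^ 2) = ∑' k, ⟪uh i, b k⟫ * ⟪uh i, b k⟫ :=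
      tsum_congr fun k => by rw [sq]
    rw [h2, h]
  -- inner products with gh
  have hgh_inner : ∀ (w v : H), ⟪gh w, v⟫ = ∑ i ∈ I, ⟪w, uh i⟫ * ⟪uh i, v⟫ := by
    intro w v
    rw [hgh w, sum_inner]
    exact Finset.sum_congr rfl fun i _ => real_inner_smul_left _ _ _
  -- g0 on basis vectors
  have hg0k : ∀ k, g0 (b k) = if k ∈ I then b k else 0 := by
    intro k
    rw [hg0 (b k)]
    have h : ∀ i ∈ I, ⟪b k, b i⟫ • b i = if k = i then b k else 0 := by
      intro i _
      rw [horth]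
      by_cases h : k = i
      · subst h; simp
      · simp [h]
    rw [Finset.sum_congr rfl h, Finset.sum_ite_eq]
  -- the overlap function t
  set t : ℕ → ℝ := fun k => ∑ i ∈ I, ⟪uh i, b k⟫ ^ 2 with ht
  have ht_nonneg : ∀ k, 0 ≤ t k := by
    intro k
    exact Finset.sum_nonneg fun i _ => sq_nonneg _
  have hgh_bk : ∀ k v, ⟪gh (b k), v⟫ = ∑ i ∈ I, ⟪uh i, b k⟫ * ⟪uh i, v⟫ := by
    intro k v
    rw [hgh_inner]
    exact Finset.sum_congr rfl fun i _ => by rw [real_inner_comm (b k) (uh i)]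
  have hgh_bk_bk : ∀ k, ⟪gh (b k), b k⟫ = t k := by
    intro k
    rw [hgh_bk]
    exact Finset.sum_congr rfl fun i _ => by rw [sq, real_inner_comm (b k) (uh i)]
  have hgh_norm : ∀ k, ‖gh (b k)‖ ^ 2 = t k := by
    intro k
    rw [← real_inner_self_eq_norm_sq, hgh_bk]
    refine Finset.sum_congr rfl fun i hi => ?_
    have h1 : ⟪uh i, gh (b k)⟫ = ⟪gh (b k), uh i⟫ := real_inner_comm _ _
    rw [h1, hgh_bk]
    have h2 : ∀ i' ∈ I, ⟪uh i', b k⟫ * ⟪uh i', uh i⟫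
        = if i' = i then ⟪uh i, b k⟫ else 0 := by
      intro i' hi'
      rw [huh_orth i' hi' i hi]
      by_cases h : i' = i
      · subst h; simp
      · simp [h]
    rw [Finset.sum_congr rfl h2, Finset.sum_ite_eq' I i, if_pos hi, sq]
  have ht_le_one : ∀ k, t k ≤ 1 := by
    intro k
    have h0 : (0:ℝ) ≤ ‖b k - gh (b k)‖ ^ 2 := sq_nonneg _
    rw [norm_sub_sq_real, hbnorm, hgh_norm] at h0
    have h1 : ⟪b k, gh (b k)⟫ = t k := by
      rw [real_inner_comm, hgh_bk_bk]
    rw [h1] at h0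
    linarith
  -- norm of the error on basis vectors
  have hwnorm : ∀ k, ‖g0 (b k) - gh (b k)‖ ^ 2 = if k ∈ I then 1 - t k else t k := by
    intro k
    rw [norm_sub_sq_real, hgh_norm, hg0k]
    by_cases hk : k ∈ I
    · rw [if_pos hk, if_pos hk, hbnorm]
      have h1 : ⟪b k, gh (b k)⟫ = t k := by rw [real_inner_comm, hgh_bk_bk]
      rw [h1]; ring
    · rw [if_neg hk, if_neg hk]
      simp
  -- coefficients of the error
  have hd : ∀ k j, ⟪g0 (b k) - gh (b k), b j⟫
      = (if k ∈ I then (if j = k then (1:ℝ) else 0) else 0)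
        - ∑ i ∈ I, ⟪uh i, b k⟫ * ⟪uh i, b j⟫ := by
    intro k j
    rw [inner_sub_left, hgh_bk, hg0k]
    congr 1
    by_cases hk : k ∈ I
    · rw [if_pos hk, if_pos hk, horth]
      by_cases h : j = k
      · subst h; simp
      · rw [if_neg h, if_neg (fun hh => h hh.symm)]
    · rw [if_neg hk, if_neg hk, inner_zero_left]
  -- pointwise expansion of the energy summand
  have hpt : ∀ k j, lam j * ⟪g0 (b k) - gh (b k), b j⟫ ^ 2
      = (if j = k then (if k ∈ I then lam k * (1 - 2 * t k) else 0) else 0)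
        + ∑ i ∈ I, ∑ i' ∈ I, ⟪uh i, b k⟫ * ⟪uh i', b k⟫
            * (lam j * (⟪uh i, b j⟫ * ⟪uh i', b j⟫)) := by
    intro k j
    rw [hd]
    rw [sum_sq_helper I (fun i => ⟪uh i, b k⟫) (fun i => ⟪uh i, b j⟫) (lam j)]
    by_cases hjk : j = k
    · subst hjk
      rw [if_pos rfl]
      by_cases hk : j ∈ I
      · rw [if_pos hk, if_pos rfl, if_pos hk]
        have hts : ∑ i ∈ I, ⟪uh i, b j⟫ * ⟪uh i, b j⟫ = t j :=
          Finset.sum_congr rfl fun i _ => (sq _).symm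
        rw [hts]
        have ht2 : t j = ∑ i ∈ I, ⟪uh i, b j⟫ * ⟪uh i, b j⟫ := hts.symm
        ring
      · rw [if_neg hk, if_neg hk]
        have hts : (∑ x ∈ I, ⟪uh x, b j⟫ ^ 2) = ∑ x ∈ I, ⟪uh x, b j⟫ * ⟪uh x, b j⟫ :=
          Finset.sum_congr rfl fun i _ => sq _
        simp only [ite_self, hts]
        ring
    · rw [if_neg hjk]
      by_cases hk : k ∈ I
      · rw [if_pos hk, if_neg hjk]
        ring
      · rw [if_neg hk, if_neg hjk]
        ring
  -- inner tsum of the energy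
  have hF : ∀ k, (∑' j, lam j * ⟪g0 (b k) - gh (b k), b j⟫ ^ 2)
      = (if k ∈ I then lam k * (1 - 2 * t k) else 0)
        + ∑ i ∈ I, lamh i * ⟪uh i, b k⟫ ^ 2 := by
    intro k
    have sB : ∀ i ∈ I, ∀ i' ∈ I, Summable (fun j =>
        ⟪uh i, b k⟫ * ⟪uh i', b k⟫ * (lam j * (⟪uh i, b j⟫ * ⟪uh i', b j⟫))) :=
      fun i hi i' hi' => (hsum_lam_prod i hi i' hi').mul_left _
    have sB2 : ∀ i ∈ I, Summable (fun j => ∑ i' ∈ I, ⟪uh i, b k⟫ * ⟪uh i', b k⟫ *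
        (lam j * (⟪uh i, b j⟫ * ⟪uh i', b j⟫))) :=
      fun i hi => summable_sum (fun i' hi' => sB i hi i' hi')
    have sB3 : Summable (fun j => ∑ i ∈ I, ∑ i' ∈ I, ⟪uh i, b k⟫ * ⟪uh i', b k⟫ *
        (lam j * (⟪uh i, b j⟫ * ⟪uh i', b j⟫))) := summable_sum (fun i hi => sB2 i hi)
    have sA : Summable (fun j =>
        if j = k then (if k ∈ I then lam k * (1 - 2 * t k) else 0) else (0:ℝ)) := by
      apply summable_of_ne_finset_zero (s := {k})
      intro j hj
      rw [if_neg (by simpa using hj)]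
    rw [tsum_congr (hpt k), Summable.tsum_add sA sB3, tsum_ite_eq,
      Summable.tsum_finsetSum (fun i hi => sB2 i hi)]
    congr 1
    refine Finset.sum_congr rfl fun i hi => ?_
    rw [Summable.tsum_finsetSum (fun i' hi' => sB i hi i' hi')]
    have hterm : ∀ i' ∈ I, (∑' j, ⟪uh i, b k⟫ * ⟪uh i', b k⟫ *
        (lam j * (⟪uh i, b j⟫ * ⟪uh i', b j⟫)))
        = if i' = i then lamh i * ⟪uh i, b k⟫ ^ 2 else 0 := by
      intro i' hi'
      rw [tsum_mul_left, heig i hi i' hi']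
      by_cases h : i' = i
      · subst h; rw [if_pos rfl, if_pos rfl]; ring
      · rw [if_neg (fun hh => h hh.symm), if_neg h]; ring
    rw [Finset.sum_congr rfl hterm, Finset.sum_ite_eq' I i, if_pos hi]
  -- the energy identity
  have hE : ESq = (∑ k ∈ I, lam k * (1 - 2 * t k)) + ∑ i ∈ I, lamh i := by
    rw [hESq, tsum_congr (fun k => hF k)]
    have sA' : Summable (fun k => if k ∈ I then lam k * (1 - 2 * t k) else (0:ℝ)) :=
      summable_of_ne_finset_zero (s := I) (fun k hk => if_neg hk)
    have sB' : Summable (fun k => ∑ i ∈ I, lamh i * ⟪uh i, b k⟫ ^ 2) :=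
      summable_sum fun i hi => (hsum_sq i).mul_left _
    rw [Summable.tsum_add sA' sB', tsum_eq_sum (s := I) (fun k hk => if_neg hk)]
    congr 1
    · exact Finset.sum_congr rfl fun k hk => if_pos hk
    · rw [Summable.tsum_finsetSum (fun i hi => (hsum_sq i).mul_left _)]
      refine Finset.sum_congr rfl fun i hi => ?_
      rw [tsum_mul_left, hpar_diag i hi, mul_one]
  -- remainder quantities
  set R : ℕ → ℝ := fun i => ∑' k, (if k ∈ I then 0 else ⟪uh i, b k⟫ ^ 2) with hRdef
  set R' : ℕ → ℝ := fun i => ∑' k, (if k ∈ I then 0 else lam k * ⟪uh i, b k⟫ ^ 2) with hR'def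
  set P : ℕ → ℝ :=
    fun i => ∑' k, (lam k)⁻¹ * ((lam k - lamh i) ^ 2 * ⟪uh i, b k⟫ ^ 2) with hPdef
  set Q : ℕ → ℝ :=
    fun i => ∑' k, ((lam k) ^ 2)⁻¹ * ((lam k - lamh i) ^ 2 * ⟪uh i, b k⟫ ^ 2) with hQdef
  have hsum_P : ∀ i ∈ I,
      Summable (fun k => (lam k)⁻¹ * ((lam k - lamh i) ^ 2 * ⟪uh i, b k⟫ ^ 2)) := by
    intro i hi
    refine Summable.of_nonneg_of_le
      (fun k => mul_nonneg (inv_nonneg.2 (hlam_pos k).le) (by positivity)) (fun k => ?_)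
      (((hsum_lam_sq i hi).mul_left 2).add
        ((hsum_sq i).mul_left (2 * lamh i ^ 2 / lam 0)))
    have h0 : 0 < lam k := hlam_pos k
    have h00 : 0 < lam 0 := hlam_pos 0
    have h1 : lam 0 ≤ lam k := hlam_mono (Nat.zero_le k)
    have hrL : 2 * lamh i ^ 2 ≤ 2 * lamh i ^ 2 / lam 0 * lam k := by
      rw [div_mul_eq_mul_div, le_div_iff₀ h00]
      nlinarith [sq_nonneg (lamh i)]
    have key : (lam k - lamh i) ^ 2 * ⟪uh i, b k⟫ ^ 2
        ≤ lam k * (2 * (lam k * ⟪uh i, b k⟫ ^ 2)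
            + 2 * lamh i ^ 2 / lam 0 * ⟪uh i, b k⟫ ^ 2) := by
      nlinarith [mul_nonneg (sq_nonneg (lam k + lamh i)) (sq_nonneg ⟪uh i, b k⟫),
        mul_nonneg (sub_nonneg.2 hrL) (sq_nonneg ⟪uh i, b k⟫)]
    have h2 := mul_le_mul_of_nonneg_left key (inv_nonneg.2 h0.le)
    rwa [inv_mul_cancel_left₀ h0.ne'] at h2
  have hsum_Q : ∀ i ∈ I,
      Summable (fun k => ((lam k) ^ 2)⁻¹ * ((lam k - lamh i) ^ 2 * ⟪uh i, b k⟫ ^ 2)) := by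
    intro i hi
    refine Summable.of_nonneg_of_le (fun k => by positivity) (fun k => ?_)
      ((hsum_P i hi).mul_left (lam 0)⁻¹)
    have h0 : 0 < lam k := hlam_pos k
    have h00 : 0 < lam 0 := hlam_pos 0
    have h1 : lam 0 ≤ lam k := hlam_mono (Nat.zero_le k)
    have h2 : ((lam k) ^ 2)⁻¹ = (lam k)⁻¹ * (lam k)⁻¹ := by rw [sq, mul_inv]
    rw [h2, mul_assoc]
    refine mul_le_mul_of_nonneg_right ?_ (by positivity)
    exact inv_anti₀ h00 h1
  have hN0split : N0sq = ∑ i ∈ I, P i := by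
    rw [hN0sq, Summable.tsum_finsetSum (fun i hi => hsum_P i hi)]
  have hNmsplit : Nm12sq = ∑ i ∈ I, Q i := by
    rw [hNm12sq, Summable.tsum_finsetSum (fun i hi => hsum_Q i hi)]
  have hR_eq : ∀ i ∈ I, (∑ k ∈ I, ⟪uh i, b k⟫ ^ 2) + R i = 1 := by
    intro i hi
    have h := tsum_split_mem (hsum_sq i) I
    rw [hpar_diag i hi] at h
    simp only [hRdef]
    exact h.symm
  have hR'_eq : ∀ i ∈ I, (∑ k ∈ I, lam k * ⟪uh i, b k⟫ ^ 2) + R' i = lamh i := by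
    intro i hi
    have h := tsum_split_mem (hsum_lam_sq i hi) I
    rw [heig_diag i hi] at h
    simp only [hR'def]
    exact h.symm
  have hR_nonneg : ∀ i, 0 ≤ R i := by
    intro i
    simp only [hRdef]
    exact tsum_nonneg fun k => by positivity
  have hR'_nonneg : ∀ i, 0 ≤ R' i := by
    intro i
    simp only [hR'def]
    refine tsum_nonneg fun k => ?_
    by_cases hk : k ∈ I
    · simp [hk]
    · simp only [if_neg hk]
      exact mul_nonneg (hlam_pos k).le (sq_nonneg _)
  have hP_nonneg : ∀ i, 0 ≤ P i := by
    intro i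
    simp only [hPdef]
    exact tsum_nonneg fun k => mul_nonneg (inv_nonneg.2 (hlam_pos k).le) (by positivity)
  have hN0_nonneg : 0 ≤ N0sq := by
    rw [hN0sq]
    exact tsum_nonneg fun k => Finset.sum_nonneg fun i _ =>
      mul_nonneg (inv_nonneg.2 (hlam_pos k).le) (by positivity)
  have hNm_nonneg : 0 ≤ Nm12sq := by
    rw [hNm12sq]
    exact tsum_nonneg fun k => Finset.sum_nonneg fun i _ => by positivity
  -- L² identity
  have hL2_eq : L2sq = (∑ k ∈ I, (1 - t k)) + ∑ i ∈ I, R i := by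
    rw [hL2sq, tsum_congr (fun k => hwnorm k)]
    have hptw : ∀ k, (if k ∈ I then 1 - t k else t k)
        = (if k ∈ I then 1 - t k else 0)
          + ∑ i ∈ I, (if k ∈ I then 0 else ⟪uh i, b k⟫ ^ 2) := by
      intro k
      by_cases hk : k ∈ I <;> simp [hk, ht]
    rw [tsum_congr hptw]
    have s1 : Summable (fun k => if k ∈ I then 1 - t k else (0:ℝ)) :=
      summable_of_ne_finset_zero (s := I) (fun k hk => if_neg hk)
    have s2 : ∀ i ∈ I, Summable (fun k => if k ∈ I then 0 else ⟪uh i, b k⟫ ^ 2) :=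
      fun i _ => summable_ite_notMem (hsum_sq i) I
    rw [Summable.tsum_add s1 (summable_sum s2), tsum_eq_sum (s := I) (fun k hk => if_neg hk),
      Summable.tsum_finsetSum s2]
    congr 1
    exact Finset.sum_congr rfl fun k hk => if_pos hk
  have hcount : (∑ k ∈ I, (1 - t k)) = ∑ i ∈ I, R i := by
    have h1 : ∑ k ∈ I, (1 - t k) = ∑ i ∈ I, (1 - ∑ k ∈ I, ⟪uh i, b k⟫ ^ 2) := by
      rw [Finset.sum_sub_distrib, Finset.sum_sub_distrib]
      congr 1
      simp only [ht]
      exact Finset.sum_comm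
    rw [h1]
    exact Finset.sum_congr rfl fun i hi => by linarith [hR_eq i hi]
  have hL2_2R : L2sq = 2 * ∑ i ∈ I, R i := by rw [hL2_eq, hcount]; ring
  -- energy rearrangement
  have hE' : ESq = (∑ k ∈ I, lam k * (1 - t k)) + ∑ i ∈ I, R' i := by
    rw [hE]
    have h1 : ∑ i ∈ I, lamh i = (∑ k ∈ I, lam k * t k) + ∑ i ∈ I, R' i := by
      have h2 : ∑ i ∈ I, lamh i
          = ∑ i ∈ I, ((∑ k ∈ I, lam k * ⟪uh i, b k⟫ ^ 2) + R' i) :=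
        Finset.sum_congr rfl fun i hi => (hR'_eq i hi).symm
      rw [h2, Finset.sum_add_distrib]
      congr 1
      rw [Finset.sum_comm]
      refine Finset.sum_congr rfl fun k _ => ?_
      simp only [ht]
      rw [Finset.mul_sum]
    have h3 : (∑ k ∈ I, lam k * (1 - 2 * t k)) + ∑ k ∈ I, lam k * t k
        = ∑ k ∈ I, lam k * (1 - t k) := by
      rw [← Finset.sum_add_distrib]
      exact Finset.sum_congr rfl fun k _ => by ring
    rw [h1]
    linarith [h3]
  -- gap constants
  have hlamUnd_pos : 0 < lamUnd := lt_trans hlamhM_pos hund.1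
  have hg2_pos : 0 < 1 - lamh M / lamUnd := by
    rw [sub_pos, div_lt_one hlamUnd_pos]; exact hund.1
  have hch_ge2 : (1 - lamh M / lamUnd)⁻¹ ≤ ch := by
    rw [hch]
    by_cases hm : 0 < m
    · rw [if_pos hm]; exact le_max_right _ _
    · rw [if_neg hm]
  have hch_pos : 0 < ch := lt_of_lt_of_le (inv_pos.2 hg2_pos) hch_ge2
  -- gap estimate
  have hgap : ∀ i ∈ I, ∀ k, k ∉ I → (lam k) ^ 2 ≤ ch ^ 2 * (lam k - lamh i) ^ 2 := by
    intro i hi k hk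
    obtain ⟨him, hiM⟩ := Finset.mem_Icc.1 hi
    by_cases hkM : M < k
    · have hlamk : lamUnd ≤ lam k := le_trans hund.2 (hlam_mono hkM)
      have hlami : lamh i ≤ lamh M := hlamh_mono i hi M hM_mem hiM
      have h1 : lamh i * lamUnd ≤ lamh M * lam k :=
        mul_le_mul hlami hlamk hlamUnd_pos.le hlamhM_pos.le
      have h2 : (1 - lamh M / lamUnd) * lam k ≤ lam k - lamh i := by
        have h3 : lamh i ≤ lamh M / lamUnd * lam k := by
          rw [div_mul_eq_mul_div, le_div_iff₀ hlamUnd_pos]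
          exact h1
        rw [sub_mul, one_mul]
        linarith
      have h4 : 0 ≤ lam k - lamh i :=
        le_trans (mul_nonneg hg2_pos.le (hlam_pos k).le) h2
      have h5 : lam k ≤ ch * (lam k - lamh i) := by
        calc lam k
            = (1 - lamh M / lamUnd)⁻¹ * ((1 - lamh M / lamUnd) * lam k) :=
              (inv_mul_cancel_left₀ hg2_pos.ne' (lam k)).symm
          _ ≤ ch * ((1 - lamh M / lamUnd) * lam k) :=
              mul_le_mul_of_nonneg_right hch_ge2 (mul_nonneg hg2_pos.le (hlam_pos k).le)
          _ ≤ ch * (lam k - lamh i) := mul_le_mul_of_nonneg_left h2 hch_pos.le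
      nlinarith [mul_self_le_mul_self (hlam_pos k).le h5]
    · have hkM' : k ≤ M := le_of_not_gt hkM
      have hkm : k < m := by
        by_contra h
        exact hk (Finset.mem_Icc.2 ⟨le_of_not_gt h, hkM'⟩)
      have hm_pos : 0 < m := lt_of_le_of_lt (Nat.zero_le k) hkm
      obtain ⟨hb1, hb2⟩ := hbar hm_pos
      have hlamBar_pos : 0 < lamBar := lt_of_lt_of_le (hlam_pos (m - 1)) hb1
      have hmh_pos : 0 < lamh m := lt_trans hlamBar_pos hb2
      have hk_le : lam k ≤ lamBar :=
        le_trans (hlam_mono (Nat.le_pred_of_lt hkm)) hb1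
      have hch_ge1 : (lamh m / lamBar - 1)⁻¹ ≤ ch := by
        rw [hch, if_pos hm_pos]; exact le_max_left _ _
      have hg1_pos : 0 < lamh m / lamBar - 1 := by
        rw [sub_pos, lt_div_iff₀ hlamBar_pos, one_mul]; exact hb2
      have hlami : lamh m ≤ lamh i :=
        hlamh_mono m (Finset.mem_Icc.2 ⟨le_rfl, hmM⟩) i hi him
      have h6 : lamh m / lamBar * lam k ≤ lamh i := by
        have h7 : lamh m / lamBar ≤ lamh m / lam k :=
          div_le_div_of_nonneg_left hmh_pos.le (hlam_pos k) hk_le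
        have h8 : lamh m / lam k * lam k = lamh m := div_mul_cancel₀ _ (hlam_pos k).ne'
        have h9 := mul_le_mul_of_nonneg_right h7 (hlam_pos k).le
        rw [h8] at h9
        exact le_trans h9 hlami
      have h2 : (lamh m / lamBar - 1) * lam k ≤ lamh i - lam k := by
        rw [sub_mul, one_mul]
        linarith
      have h4 : 0 ≤ lamh i - lam k :=
        le_trans (mul_nonneg hg1_pos.le (hlam_pos k).le) h2
      have h5 : lam k ≤ ch * (lamh i - lam k) := by
        calc lam k
            = (lamh m / lamBar - 1)⁻¹ * ((lamh m / lamBar - 1) * lam k) :=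
              (inv_mul_cancel_left₀ hg1_pos.ne' (lam k)).symm
          _ ≤ ch * ((lamh m / lamBar - 1) * lam k) :=
              mul_le_mul_of_nonneg_right hch_ge1 (mul_nonneg hg1_pos.le (hlam_pos k).le)
          _ ≤ ch * (lamh i - lam k) := mul_le_mul_of_nonneg_left h2 hch_pos.le
      nlinarith [mul_self_le_mul_self (hlam_pos k).le h5]
  -- R i ≤ ch² Q i
  have hRQ : ∀ i ∈ I, R i ≤ ch ^ 2 * Q i := by
    intro i hi
    simp only [hRdef, hQdef]
    rw [← tsum_mul_left]
    refine Summable.tsum_le_tsum (fun k => ?_) (summable_ite_notMem (hsum_sq i) I)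
      ((hsum_Q i hi).mul_left _)
    by_cases hk : k ∈ I
    · simp only [if_pos hk]
      positivity
    · simp only [if_neg hk]
      have hg := hgap i hi k hk
      have h0 : (0:ℝ) < (lam k) ^ 2 := pow_pos (hlam_pos k) 2
      have key := mul_le_mul_of_nonneg_right hg (sq_nonneg ⟪uh i, b k⟫)
      have h2 := mul_le_mul_of_nonneg_left key (inv_nonneg.2 h0.le)
      rw [inv_mul_cancel_left₀ h0.ne'] at h2
      calc ⟪uh i, b k⟫ ^ 2
          ≤ ((lam k) ^ 2)⁻¹ * (ch ^ 2 * (lam k - lamh i) ^ 2 * ⟪uh i, b k⟫ ^ 2) := h2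
        _ = ch ^ 2 * (((lam k) ^ 2)⁻¹ * ((lam k - lamh i) ^ 2 * ⟪uh i, b k⟫ ^ 2)) := by
            ring
  -- R' i ≤ P i + 2 lamh M R i
  have hR'P : ∀ i ∈ I, R' i ≤ P i + 2 * lamh M * R i := by
    intro i hi
    have hmaj : ∀ k, (if k ∈ I then 0 else lam k * ⟪uh i, b k⟫ ^ 2)
        ≤ (lam k)⁻¹ * ((lam k - lamh i) ^ 2 * ⟪uh i, b k⟫ ^ 2)
          + 2 * lamh M * (if k ∈ I then 0 else ⟪uh i, b k⟫ ^ 2) := by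
      intro k
      by_cases hk : k ∈ I
      · simp only [if_pos hk, mul_zero, add_zero]
        exact mul_nonneg (inv_nonneg.2 (hlam_pos k).le) (by positivity)
      · simp only [if_neg hk]
        have h0 := hlam_pos k
        have hiM2 : lamh i ≤ lamh M := hlamh_mono i hi M hM_mem (Finset.mem_Icc.1 hi).2
        have key : lam k * (lam k * ⟪uh i, b k⟫ ^ 2)
            ≤ (lam k - lamh i) ^ 2 * ⟪uh i, b k⟫ ^ 2
              + lam k * (2 * lamh M * ⟪uh i, b k⟫ ^ 2) := by
          nlinarith [mul_nonneg (mul_nonneg (sub_nonneg.2 hiM2) h0.le)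
              (sq_nonneg ⟪uh i, b k⟫),
            mul_nonneg (sq_nonneg (lamh i)) (sq_nonneg ⟪uh i, b k⟫)]
        exact inv_bound_helper h0 key
    calc R' i
        ≤ ∑' k, ((lam k)⁻¹ * ((lam k - lamh i) ^ 2 * ⟪uh i, b k⟫ ^ 2)
            + 2 * lamh M * (if k ∈ I then 0 else ⟪uh i, b k⟫ ^ 2)) := by
          simp only [hR'def]
          exact Summable.tsum_le_tsum hmaj (summable_ite_notMem (hsum_lam_sq i hi) I)
            ((hsum_P i hi).add ((summable_ite_notMem (hsum_sq i) I).mul_left _))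
      _ = P i + 2 * lamh M * R i := by
          rw [Summable.tsum_add (hsum_P i hi) ((summable_ite_notMem (hsum_sq i) I).mul_left _),
            tsum_mul_left]
  have hsumR_le : ∑ i ∈ I, R i ≤ ch ^ 2 * C ^ 2 * N0sq := by
    have h1 : ∑ i ∈ I, R i ≤ ∑ i ∈ I, ch ^ 2 * Q i := Finset.sum_le_sum hRQ
    rw [← Finset.mul_sum, ← hNmsplit] at h1
    have h2 : Nm12sq ≤ C ^ 2 * N0sq := by
      have h3 := pow_le_pow_left₀ (Real.sqrt_nonneg Nm12sq) hsmooth 2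
      rw [Real.sq_sqrt hNm_nonneg, mul_pow, Real.sq_sqrt hN0_nonneg] at h3
      exact h3
    calc ∑ i ∈ I, R i ≤ ch ^ 2 * Nm12sq := h1
      _ ≤ ch ^ 2 * (C ^ 2 * N0sq) := mul_le_mul_of_nonneg_left h2 (sq_nonneg ch)
      _ = ch ^ 2 * C ^ 2 * N0sq := by ring
  have hsumR_nonneg : 0 ≤ ∑ i ∈ I, R i := Finset.sum_nonneg fun i _ => hR_nonneg i
  have hlam_le_lamhM : ∀ k ∈ I, lam k ≤ lamh M := fun k hk =>
    le_trans (hlam_mono (Finset.mem_Icc.1 hk).2) (hconf M hM_mem)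
  have hA_bound : ∑ k ∈ I, lam k * (1 - t k) ≤ lamh M * ∑ i ∈ I, R i := by
    rw [← hcount, Finset.mul_sum]
    exact Finset.sum_le_sum fun k hk =>
      mul_le_mul_of_nonneg_right (hlam_le_lamhM k hk) (by linarith [ht_le_one k])
  have hA_nonneg : 0 ≤ ∑ k ∈ I, lam k * (1 - t k) :=
    Finset.sum_nonneg fun k hk =>
      mul_nonneg (hlam_pos k).le (by linarith [ht_le_one k])
  have hR'_bound : ∑ i ∈ I, R' i ≤ N0sq + 2 * lamh M * ∑ i ∈ I, R i := by
    have h1 : ∑ i ∈ I, R' i ≤ ∑ i ∈ I, (P i + 2 * lamh M * R i) := Finset.sum_le_sum hR'P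
    rw [Finset.sum_add_distrib, ← Finset.mul_sum, ← hN0split] at h1
    exact h1
  have hE_bound : ESq ≤ eta2 := by
    rw [hE', heta2]
    nlinarith [hA_bound, hR'_bound, hsumR_le, hsumR_nonneg, hN0_nonneg, hlamhM_pos,
      mul_le_mul_of_nonneg_left hsumR_le hlamhM_pos.le,
      mul_nonneg hlamhM_pos.le
        (mul_nonneg (mul_nonneg (sq_nonneg ch) (sq_nonneg C)) hN0_nonneg)]
  have hEig2 : ∑ i ∈ I, (lamh i - lam i) = ESq - 2 * ∑ k ∈ I, lam k * (1 - t k) := by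
    rw [hE, Finset.sum_sub_distrib]
    have h1 : (∑ k ∈ I, lam k * (1 - 2 * t k)) - 2 * ∑ k ∈ I, lam k * (1 - t k)
        = - ∑ k ∈ I, lam k := by
      rw [Finset.mul_sum, ← Finset.sum_sub_distrib, ← Finset.sum_neg_distrib]
      exact Finset.sum_congr rfl fun k _ => by ring
    linarith [h1]
  refine ⟨?_, ?_, hE_bound, ?_⟩
  · exact Finset.sum_nonneg fun i hi => sub_nonneg.2 (hconf i hi)
  · linarith [hEig2, hA_nonneg, hE_bound]
  · have hL2b : L2sq ≤ 2 * ch ^ 2 * C ^ 2 * N0sq := by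
      rw [hL2_2R]
      nlinarith [hsumR_le]
    have hrhs_nonneg : 0 ≤ Real.sqrt 2 * ch * C * Real.sqrt N0sq :=
      mul_nonneg (mul_nonneg (mul_nonneg (Real.sqrt_nonneg 2) hch_pos.le) hC)
        (Real.sqrt_nonneg N0sq)
    have hsq : (Real.sqrt 2 * ch * C * Real.sqrt N0sq) ^ 2
        = 2 * ch ^ 2 * C ^ 2 * N0sq := by
      rw [mul_pow, mul_pow, mul_pow, Real.sq_sqrt (by norm_num : (0:ℝ) ≤ 2),
        Real.sq_sqrt hN0_nonneg]
    calc Real.sqrt L2sq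
        ≤ Real.sqrt (2 * ch ^ 2 * C ^ 2 * N0sq) := Real.sqrt_le_sqrt hL2b
      _ = Real.sqrt ((Real.sqrt 2 * ch * C * Real.sqrt N0sq) ^ 2) := by rw [hsq]
      _ = Real.sqrt 2 * ch * C * Real.sqrt N0sq := Real.sqrt_sq hrhs_nonneg
end
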